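/- arXiv:2501.03522 — 9 statements merged into one kernel-verified Lean document; each statement's English description precedes it below -/
import Mathlib

section
/- Let G be a finite group, A an abelian subgroup of G of index 2, and b an element of G not in A. For every a ∈ A, the conjugacy class of a·b in G equals the set {x·a·b : x ∈ B}, where B = {(b·c·b⁻¹)·c⁻¹ : c ∈ A}. -/
/-- Let `G` be a finite group, `A` an abelian subgroup of `G` of index 2, and `b ∈ G \ A`.
For every `a ∈ A`, the conjugacy class of `a * b` in `G` equals `{x * (a * b) : x ∈ B}`,
where `B = {(b * c * b⁻¹) * c⁻¹ : c ∈ A}`. -/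
theorem stmt_2 {G : Type*} [Group G] [Finite G] (A : Subgroup G)
    (hcomm : ∀ x ∈ A, ∀ y ∈ A, x * y = y * x) (hidx : A.index = 2)
    (b : G) (hb : b ∉ A)
    (B : Set G) (hB : B = {x : G | ∃ c ∈ A, b * c * b⁻¹ * c⁻¹ = x})
    (a : G) (ha : a ∈ A) :
    conjugatesOf (a * b) = {y : G | ∃ x ∈ B, x * (a * b) = y} := by
  subst hB
  have hbinv : b⁻¹ ∉ A := fun h => hb (by simpa using A.inv_mem h)
  -- conjugating an element of A by b stays in A
  have hconjA : ∀ c ∈ A, b * c * b⁻¹ ∈ A := by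
    intro c hc
    have h1 : b * c ∉ A := by
      rw [Subgroup.mul_mem_iff_of_index_two hidx]
      simp [hb, hc]
    rw [Subgroup.mul_mem_iff_of_index_two hidx]
    simp [h1, hbinv]
  ext y
  simp only [conjugatesOf, Set.mem_setOf_eq, isConj_iff]
  constructor
  · rintro ⟨c, rfl⟩
    by_cases hc : c ∈ A
    · refine ⟨b * c⁻¹ * b⁻¹ * (c⁻¹)⁻¹, ⟨c⁻¹, A.inv_mem hc, rfl⟩, ?_⟩
      have hu : b * c⁻¹ * b⁻¹ ∈ A := hconjA _ (A.inv_mem hc)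
      have hu' := hcomm _ hu _ (A.mul_mem hc ha)
      calc b * c⁻¹ * b⁻¹ * (c⁻¹)⁻¹ * (a * b)
          = (b * c⁻¹ * b⁻¹) * (c * a) * b := by group
        _ = (c * a) * (b * c⁻¹ * b⁻¹) * b := by rw [hu']
        _ = c * (a * b) * c⁻¹ := by group
    · -- c = d * b with d = c * b⁻¹ ∈ A
      have hd : c * b⁻¹ ∈ A := by
        rw [Subgroup.mul_mem_iff_of_index_two hidx]
        simp [hc, hbinv]
      set d := c * b⁻¹ with hdef
      have hc' : c = d * b := by rw [hdef]; group
      have had : a * d⁻¹ ∈ A := A.mul_mem ha (A.inv_mem hd)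
      refine ⟨b * (a * d⁻¹) * b⁻¹ * (a * d⁻¹)⁻¹, ⟨a * d⁻¹, had, rfl⟩, ?_⟩
      have hk : b * (a * d⁻¹) * b⁻¹ ∈ A := hconjA _ had
      have hk' := hcomm _ hk _ hd
      rw [hc']
      calc b * (a * d⁻¹) * b⁻¹ * (a * d⁻¹)⁻¹ * (a * b)
          = (b * (a * d⁻¹) * b⁻¹) * d * b := by group
        _ = d * (b * (a * d⁻¹) * b⁻¹) * b := by rw [hk']
        _ = d * b * (a * b) * (d * b)⁻¹ := by group
  · rintro ⟨x, ⟨c, hc, rfl⟩, rfl⟩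
    refine ⟨c⁻¹, ?_⟩
    have hm : b * c * b⁻¹ ∈ A := hconjA _ hc
    have h1 := hcomm _ (A.mul_mem (A.inv_mem hc) ha) _ hm
    calc c⁻¹ * (a * b) * (c⁻¹)⁻¹
        = (c⁻¹ * a) * (b * c * b⁻¹) * b := by group
      _ = (b * c * b⁻¹) * (c⁻¹ * a) * b := by rw [h1]
      _ = b * c * b⁻¹ * c⁻¹ * (a * b) := by group
end

section
/- Let G be a finite group, A an abelian subgroup of G of index 2, and b an element of G not in A. Then the complement G \ A is a disjoint union of exactly [A : B] conjugacy classes of G, and each conjugacy class of G contained in G \ A has cardinality |B|, where B = {(b·a·b⁻¹)·a⁻¹ : a ∈ A}. -/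
/-- Let `G` be a finite group, `A` an abelian subgroup of `G` of index 2, and `b ∈ G \ A`.
Then `G \ A` is a disjoint union of exactly `[A : B]` conjugacy classes of `G`, and each
conjugacy class of `G` contained in `G \ A` has cardinality `|B|`, where
`B = {(b * a * b⁻¹) * a⁻¹ : a ∈ A}`. -/
theorem stmt_5 {G : Type*} [Group G] [Finite G] (A : Subgroup G)
    (hcomm : ∀ x ∈ A, ∀ y ∈ A, x * y = y * x) (hidx : A.index = 2)
    (b : G) (hb : b ∉ A)
    (B : Subgroup G) (hB : (B : Set G) = {x : G | ∃ a ∈ A, b * a * b⁻¹ * a⁻¹ = x})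
    (hBA : B ≤ A) :
    (∀ g : G, g ∉ A → (ConjClasses.mk g).carrier ⊆ (A : Set G)ᶜ) ∧
    Nat.card {C : ConjClasses G // C.carrier ⊆ (A : Set G)ᶜ} = B.relIndex A ∧
    ∀ C : ConjClasses G, C.carrier ⊆ (A : Set G)ᶜ → Nat.card C.carrier = Nat.card B := by
  classical
  -- basic consequences of index 2
  have hb2 : b * b ∈ A := Subgroup.mul_self_mem_of_index_two hidx b
  have hconj : ∀ (g : G), ∀ a ∈ A, g * a * g⁻¹ ∈ A := by
    intro g a ha
    rw [Subgroup.mul_mem_iff_of_index_two hidx,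
      Subgroup.mul_mem_iff_of_index_two hidx, inv_mem_iff]
    tauto
  have hcoset : ∀ (g : G), g ∉ A → b⁻¹ * g ∈ A := by
    intro g hg
    rw [Subgroup.mul_mem_iff_of_index_two hidx, inv_mem_iff]
    tauto
  have hBgen : ∀ a ∈ A, b * a * b⁻¹ * a⁻¹ ∈ B := by
    intro a ha
    have : b * a * b⁻¹ * a⁻¹ ∈ (B : Set G) := by rw [hB]; exact ⟨a, ha, rfl⟩
    exact this
  have hmemB : ∀ x ∈ B, ∃ a ∈ A, b * a * b⁻¹ * a⁻¹ = x := by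
    intro x hx
    have : x ∈ {x : G | ∃ a ∈ A, b * a * b⁻¹ * a⁻¹ = x} := by rw [← hB]; exact hx
    exact this
  -- conjugation by b inverts B
  have L1 : ∀ x ∈ B, b * x * b⁻¹ = x⁻¹ := by
    intro x hx
    obtain ⟨a, ha, rfl⟩ := hmemB x hx
    have h : b * b * a = a * (b * b) := hcomm _ hb2 a ha
    calc b * (b * a * b⁻¹ * a⁻¹) * b⁻¹ = (b * b * a) * (b⁻¹ * a⁻¹ * b⁻¹) := by group
      _ = (a * (b * b)) * (b⁻¹ * a⁻¹ * b⁻¹) := by rw [h]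
      _ = (b * a * b⁻¹ * a⁻¹)⁻¹ := by group
  have L1' : ∀ x ∈ B, b⁻¹ * x * b = x⁻¹ := by
    intro x hx
    have h := L1 x⁻¹ (B.inv_mem hx)
    rw [inv_inv] at h
    calc b⁻¹ * x * b = b⁻¹ * (b * x⁻¹ * b⁻¹) * b := by rw [h]
      _ = x⁻¹ := by group
  -- key commutator computation
  have key1 : ∀ (g : G), g ∉ A → ∀ h ∈ A, g⁻¹ * h * g * h⁻¹ = b⁻¹ * h * b * h⁻¹ := by
    intro g hg h hh
    have hc : b⁻¹ * g ∈ A := hcoset g hg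
    set c := b⁻¹ * g with hcdef
    have hgc : g = b * c := by rw [hcdef]; group
    have hu : b⁻¹ * h * b ∈ A := by
      have := hconj b⁻¹ h hh
      simpa using this
    have hcom : (b⁻¹ * h * b) * c = c * (b⁻¹ * h * b) := hcomm _ hu c hc
    calc g⁻¹ * h * g * h⁻¹ = c⁻¹ * ((b⁻¹ * h * b) * c) * h⁻¹ := by rw [hgc]; group
      _ = c⁻¹ * (c * (b⁻¹ * h * b)) * h⁻¹ := by rw [hcom]
      _ = b⁻¹ * h * b * h⁻¹ := by group
  have key1B : ∀ (g : G), g ∉ A → ∀ h ∈ A, g⁻¹ * h * g * h⁻¹ ∈ B := by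
    intro g hg h hh
    rw [key1 g hg h hh]
    have hy : b * h * b⁻¹ * h⁻¹ ∈ B := hBgen h hh
    have hy' : (b * h * b⁻¹ * h⁻¹)⁻¹ ∈ B := B.inv_mem hy
    have e : b⁻¹ * h * b * h⁻¹ = b⁻¹ * (b * h * b⁻¹ * h⁻¹)⁻¹ * b := by group
    rw [e, L1' _ hy', inv_inv]
    exact hy
  have keyb : ∀ (g : G), g ∉ A → g⁻¹ * b * g * b⁻¹ ∈ B := by
    intro g hg
    have hc : b⁻¹ * g ∈ A := hcoset g hg
    set c := b⁻¹ * g with hcdef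
    have hgc : g = b * c := by rw [hcdef]; group
    have hu : b * c * b⁻¹ ∈ A := hconj b c hc
    have hcom : c⁻¹ * (b * c * b⁻¹) = (b * c * b⁻¹) * c⁻¹ :=
      hcomm _ (A.inv_mem hc) _ hu
    have e : g⁻¹ * b * g * b⁻¹ = c⁻¹ * (b * c * b⁻¹) := by rw [hgc]; group
    rw [e, hcom]
    have e2 : b * c * b⁻¹ * c⁻¹ ∈ B := hBgen c hc
    exact e2
  -- the conjugacy class of g ∉ A is exactly the coset g • B
  have hcarrier : ∀ (g : G), g ∉ A →
      (ConjClasses.mk g).carrier = (fun x => g * x) '' (B : Set G) := by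
    intro g hg
    ext x
    rw [ConjClasses.mem_carrier_iff_mk_eq, ConjClasses.mk_eq_mk_iff_isConj]
    constructor
    · intro hx
      obtain ⟨h, rfl⟩ := isConj_iff.mp hx.symm
      by_cases hh : h ∈ A
      · refine ⟨g⁻¹ * (h * g * h⁻¹), ?_, ?_⟩
        · have := key1B g hg h hh
          simpa [mul_assoc] using this
        · show g * (g⁻¹ * (h * g * h⁻¹)) = h * g * h⁻¹
          group
      · have hd : b⁻¹ * h ∈ A := hcoset h hh
        set d := b⁻¹ * h with hddef
        have hhd : h = b * d := by rw [hddef]; group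
        have hβ : g⁻¹ * d * g * d⁻¹ ∈ B := key1B g hg d hd
        set β := g⁻¹ * d * g * d⁻¹ with hβdef
        have hγ : g⁻¹ * b * g * b⁻¹ ∈ B := keyb g hg
        refine ⟨(g⁻¹ * b * g * b⁻¹) * β⁻¹, B.mul_mem hγ (B.inv_mem hβ), ?_⟩
        show g * ((g⁻¹ * b * g * b⁻¹) * β⁻¹) = h * g * h⁻¹
        have hL : b * β * b⁻¹ = β⁻¹ := L1 β hβ
        calc g * ((g⁻¹ * b * g * b⁻¹) * β⁻¹)
            = g * ((g⁻¹ * b * g * b⁻¹) * (b * β * b⁻¹)) := by rw [hL]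
          _ = (b * d) * g * (b * d)⁻¹ := by rw [hβdef]; group
          _ = h * g * h⁻¹ := by rw [← hhd]
    · rintro ⟨x, hx, rfl⟩
      have hx' : x⁻¹ ∈ B := B.inv_mem hx
      obtain ⟨a, ha, hae⟩ := hmemB x⁻¹ hx'
      have hc : b⁻¹ * g ∈ A := hcoset g hg
      set c := b⁻¹ * g with hcdef
      have hgc : g = b * c := by rw [hcdef]; group
      have hac : a * c = c * a := hcomm a ha c hc
      have hxe : x = (b * a * b⁻¹ * a⁻¹)⁻¹ := by rw [hae]; group
      have he : (b * a * b⁻¹) * g * (b * a * b⁻¹)⁻¹ = g * x := by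
        calc (b * a * b⁻¹) * g * (b * a * b⁻¹)⁻¹
            = b * (a * c) * (b * a⁻¹ * b⁻¹) := by rw [hgc]; group
          _ = b * (c * a) * (b * a⁻¹ * b⁻¹) := by rw [hac]
          _ = (b * c) * (b * a * b⁻¹ * a⁻¹)⁻¹ := by group
          _ = g * x := by rw [← hgc, ← hxe]
      exact (isConj_iff.mpr ⟨b * a * b⁻¹, he⟩).symm
  -- Part 1
  have part1 : ∀ g : G, g ∉ A → (ConjClasses.mk g).carrier ⊆ (A : Set G)ᶜ := by
    intro g hg x hx hxA
    rw [ConjClasses.mem_carrier_iff_mk_eq, ConjClasses.mk_eq_mk_iff_isConj] at hx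
    obtain ⟨h, rfl⟩ := isConj_iff.mp hx
    exact hg (hconj h x hxA)
  -- Part 3
  have part3 : ∀ C : ConjClasses G, C.carrier ⊆ (A : Set G)ᶜ →
      Nat.card C.carrier = Nat.card B := by
    intro C hC
    obtain ⟨g, rfl⟩ := C.exists_rep
    have hgmem : g ∈ (ConjClasses.mk g).carrier := ConjClasses.mem_carrier_mk
    have hg : g ∉ A := hC hgmem
    rw [hcarrier g hg]
    exact Nat.card_image_of_injective (mul_right_injective g) _
  refine ⟨part1, ?_, part3⟩
  -- Part 2: counting
  have hBpos : 0 < Nat.card B := Nat.card_pos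
  have hrel : B.relIndex A * Nat.card B = Nat.card A := by
    have h1 : Nat.card (B.subgroupOf A) * (B.subgroupOf A).index = Nat.card A :=
      Subgroup.card_mul_index _
    have h2 : Nat.card (B.subgroupOf A) = Nat.card B :=
      Nat.card_congr (Subgroup.subgroupOfEquivOfLe hBA).toEquiv
    rw [Subgroup.relIndex, mul_comm, ← h2, h1]
  have hAc : Nat.card ((A : Set G)ᶜ : Set G) = Nat.card A := by
    have himg : ((A : Set G)ᶜ : Set G) = (fun x => b * x) '' (A : Set G) := by
      ext x
      simp only [Set.mem_compl_iff, SetLike.mem_coe, Set.mem_image]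
      constructor
      · intro hx
        exact ⟨b⁻¹ * x, hcoset x hx, by group⟩
      · rintro ⟨a, ha, rfl⟩ hmem
        exact hb (by simpa using A.mul_mem hmem (A.inv_mem ha))
    rw [himg, Nat.card_image_of_injective (mul_right_injective b)]
    rfl
  set S := {C : ConjClasses G // C.carrier ⊆ (A : Set G)ᶜ} with hSdef
  have e3 : ((A : Set G)ᶜ : Set G) ≃ Σ C : S, C.1.carrier := by
    refine ⟨fun x => ⟨⟨ConjClasses.mk x.1, part1 x.1 x.2⟩,
      ⟨x.1, ConjClasses.mem_carrier_mk⟩⟩,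
      fun p => ⟨p.2.1, p.1.2 p.2.2⟩, fun x => rfl, ?_⟩
    rintro ⟨⟨C, hC⟩, ⟨y, hy⟩⟩
    have h1 : ConjClasses.mk y = C := ConjClasses.mem_carrier_iff_mk_eq.mp hy
    subst h1
    rfl
  have hcard : Nat.card ((A : Set G)ᶜ : Set G) = Nat.card S * Nat.card B := by
    letI : Fintype S := Fintype.ofFinite S
    letI : ∀ C : S, Fintype C.1.carrier := fun C => Fintype.ofFinite _
    rw [Nat.card_congr e3, Nat.card_eq_fintype_card, Fintype.card_sigma]
    calc ∑ C : S, Fintype.card C.1.carrier = ∑ _C : S, Nat.card B := by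
          refine Finset.sum_congr rfl fun C _ => ?_
          rw [← Nat.card_eq_fintype_card]
          exact part3 C.1 C.2
      _ = Fintype.card S * Nat.card B := by
          rw [Finset.sum_const, Finset.card_univ, smul_eq_mul]
      _ = Nat.card S * Nat.card B := by rw [← Nat.card_eq_fintype_card]
  have hfin : Nat.card S * Nat.card B = B.relIndex A * Nat.card B := by
    rw [← hcard, hAc, hrel]
  exact Nat.eq_of_mul_eq_mul_right hBpos hfin
end

section
/- Let G be a non-abelian finite group, A an abelian subgroup of G of index 2, and b an element of G not in A. Set n = |A|, B = {(b·a·b⁻¹)·a⁻¹ : a ∈ A}, and d = [A : B]. Then the number of conjugacy classes of G equals (n + 3d)/2. -/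
/-- Let `G` be a non-abelian finite group, `A` an abelian subgroup of `G` of index 2,
and `b ∈ G \ A`.  Set `n = |A|`, `B = {(b * a * b⁻¹) * a⁻¹ : a ∈ A}` and `d = [A : B]`.
Then the number of conjugacy classes of `G` equals `(n + 3d) / 2`. -/
theorem stmt_6 {G : Type*} [Group G] [Finite G]
    (hG : ¬ ∀ x y : G, x * y = y * x) (A : Subgroup G)
    (hcomm : ∀ x ∈ A, ∀ y ∈ A, x * y = y * x) (hidx : A.index = 2)
    (b : G) (hb : b ∉ A)
    (B : Subgroup G) (hB : (B : Set G) = {x : G | ∃ a ∈ A, b * a * b⁻¹ * a⁻¹ = x})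
    (hBA : B ≤ A)
    (n d : ℕ) (hn : n = Nat.card A) (hd : d = B.relIndex A) :
    2 * Nat.card (ConjClasses G) = n + 3 * d := by
  classical
  have : Fintype G := Fintype.ofFinite G
  -- index-2 membership calculus
  have hmem : ∀ x y : G, x * y ∈ A ↔ (x ∈ A ↔ y ∈ A) :=
    fun x y => Subgroup.mul_mem_iff_of_index_two hidx
  have hconjA : ∀ a ∈ A, b * a * b⁻¹ ∈ A := by
    intro a ha
    rw [hmem, hmem]
    simp [hb, ha]
  -- conjugation by any element outside A agrees with conjugation by b on A
  have hconj : ∀ y : G, y ∉ A → ∀ a ∈ A, y * a * y⁻¹ = b * a * b⁻¹ := by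
    intro y hy a ha
    have hby : b⁻¹ * y ∈ A := by rw [hmem]; simp [hb, hy]
    have h1 : b⁻¹ * y * a = a * (b⁻¹ * y) := hcomm _ hby a ha
    have h2 : b⁻¹ * y * a * (b⁻¹ * y)⁻¹ = a := by rw [h1]; group
    calc y * a * y⁻¹ = b * (b⁻¹ * y * a * (b⁻¹ * y)⁻¹) * b⁻¹ := by group
      _ = b * a * b⁻¹ := by rw [h2]
  -- commuting criterion for x ∉ A, a ∈ A
  have hcomm_out : ∀ x : G, x ∉ A → ∀ a ∈ A, (Commute x a ↔ b * a * b⁻¹ = a) := by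
    intro x hx a ha
    rw [← hconj x hx a ha]
    constructor
    · intro h; exact mul_inv_eq_iff_eq_mul.mpr h.eq
    · intro h; exact mul_inv_eq_iff_eq_mul.mp h
  -- the homomorphism ψ : A →* G, ψ a = b a b⁻¹ a⁻¹
  have psi_hom : ∀ a₁ a₂ : A, b * (↑(a₁ * a₂) : G) * b⁻¹ * (↑(a₁ * a₂) : G)⁻¹
      = (b * ↑a₁ * b⁻¹ * (↑a₁ : G)⁻¹) * (b * ↑a₂ * b⁻¹ * (↑a₂ : G)⁻¹) := by
    intro a₁ a₂
    have hmem2 : b * ↑a₂ * b⁻¹ * (↑a₂ : G)⁻¹ ∈ A :=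
      A.mul_mem (hconjA _ a₂.2) (A.inv_mem a₂.2)
    have key : (b * ↑a₂ * b⁻¹ * (↑a₂ : G)⁻¹) * (↑a₁ : G)⁻¹
        = (↑a₁ : G)⁻¹ * (b * ↑a₂ * b⁻¹ * (↑a₂ : G)⁻¹) :=
      hcomm _ hmem2 _ (A.inv_mem a₁.2)
    calc b * (↑(a₁ * a₂) : G) * b⁻¹ * (↑(a₁ * a₂) : G)⁻¹
        = (b * ↑a₁ * b⁻¹) * ((b * ↑a₂ * b⁻¹ * (↑a₂ : G)⁻¹) * (↑a₁ : G)⁻¹) := by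
          push_cast; group
      _ = (b * ↑a₁ * b⁻¹) * ((↑a₁ : G)⁻¹ * (b * ↑a₂ * b⁻¹ * (↑a₂ : G)⁻¹)) := by rw [key]
      _ = (b * ↑a₁ * b⁻¹ * (↑a₁ : G)⁻¹) * (b * ↑a₂ * b⁻¹ * (↑a₂ : G)⁻¹) := by group
  set ψ : A →* G := MonoidHom.mk' (fun a => b * (a : G) * b⁻¹ * (a : G)⁻¹) psi_hom with hψ
  -- range of ψ is B
  have hrange : ψ.range = B := by
    ext x
    simp only [MonoidHom.mem_range, hψ, MonoidHom.mk'_apply]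
    rw [← SetLike.mem_coe, hB]
    constructor
    · rintro ⟨a, rfl⟩; exact ⟨a, a.2, rfl⟩
    · rintro ⟨a, ha, rfl⟩; exact ⟨⟨a, ha⟩, rfl⟩
  -- counting: card B * d = n and card B * card ker ψ = n
  have hBpos : 0 < Nat.card B := Nat.card_pos
  have hnpos : 0 < Nat.card A := Nat.card_pos
  have hBd : Nat.card B * d = n := by
    rw [hd, hn, Subgroup.relIndex, ← Subgroup.card_mul_index (B.subgroupOf A)]
    congr 1
    exact (Nat.card_congr (Subgroup.subgroupOfEquivOfLe hBA).toEquiv).symm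
  have hker : Nat.card B * Nat.card ψ.ker = n := by
    rw [hn, Subgroup.card_eq_card_quotient_mul_card_subgroup ψ.ker]
    congr 1
    rw [← hrange]
    exact (Nat.card_congr (QuotientGroup.quotientKerEquivRange ψ).toEquiv).symm
  have hkerd : Nat.card ψ.ker = d :=
    Nat.eq_of_mul_eq_mul_left hBpos (hker.trans hBd.symm)
  -- Finsets
  set SA : Finset G := Finset.univ.filter (fun x => x ∈ A) with hSA
  set SK : Finset G := Finset.univ.filter (fun x => x ∈ A ∧ b * x * b⁻¹ = x) with hSK
  have hSAcard : SA.card = n := by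
    rw [hSA, ← Fintype.card_subtype, hn, Nat.card_eq_fintype_card]
  have hG2n : Fintype.card G = 2 * n := by
    rw [← Nat.card_eq_fintype_card, ← Subgroup.card_mul_index A, hidx, ← hn, mul_comm]
  have hSKcard : SK.card = d := by
    rw [← hkerd, hSK, ← Fintype.card_subtype]
    rw [Nat.card_eq_fintype_card]
    apply Fintype.card_congr
    exact {
      toFun := fun x => ⟨⟨x.1, x.2.1⟩, by
        have he : ψ ⟨x.1, x.2.1⟩ = b * x.1 * b⁻¹ * x.1⁻¹ := rfl
        rw [MonoidHom.mem_ker, he, mul_inv_eq_one]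
        exact x.2.2⟩
      invFun := fun a => ⟨(a.1 : G), (a.1 : A).2, by
        have h := a.2
        have he : ψ a.1 = b * (a.1 : G) * b⁻¹ * (a.1 : G)⁻¹ := rfl
        rw [MonoidHom.mem_ker, he, mul_inv_eq_one] at h
        exact h⟩
      left_inv := fun x => rfl
      right_inv := fun a => rfl }
  -- commuting criterion within A
  have hcommA : ∀ x ∈ A, ∀ y : G, Commute x y ↔ (y ∈ A ∨ b * x * b⁻¹ = x) := by
    intro x hx y
    by_cases hy : y ∈ A
    · simp only [hy, true_or, iff_true]
      exact hcomm x hx y hy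
    · simp only [hy, false_or]
      rw [show Commute x y ↔ Commute y x from ⟨Commute.symm, Commute.symm⟩]
      exact hcomm_out y hy x hx
  -- the total count of commuting pairs
  have hpairs : Nat.card { p : G × G // Commute p.1 p.2 } = n * n + 3 * (n * d) := by
    rw [Nat.card_eq_fintype_card,
      Fintype.card_congr (Equiv.subtypeProdEquivSigmaSubtype Commute),
      Fintype.card_sigma]
    have hterm : ∀ x : G, Fintype.card { y // Commute x y }
        = (Finset.univ.filter (fun y => Commute x y)).card := fun x =>
      Fintype.card_subtype _
    rw [Finset.sum_congr rfl (fun x _ => hterm x)]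
    rw [← Finset.sum_filter_add_sum_filter_not Finset.univ (fun x => x ∈ A)]
    have h1 : ∑ x ∈ Finset.univ.filter (fun x => x ∈ A),
        (Finset.univ.filter (fun y => Commute x y)).card = d * (2 * n) + (n - d) * n := by
      rw [← Finset.sum_filter_add_sum_filter_not (Finset.univ.filter (fun x => x ∈ A))
        (fun x => b * x * b⁻¹ = x)]
      have e1 : (Finset.univ.filter (fun x => x ∈ A)).filter (fun x => b * x * b⁻¹ = x) = SK := by
        rw [hSK, Finset.filter_filter]
      have e2 : ∀ x ∈ SK, (Finset.univ.filter (fun y => Commute x y)).card = 2 * n := by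
        intro x hx
        rw [hSK, Finset.mem_filter] at hx
        have : (Finset.univ.filter (fun y => Commute x y)) = Finset.univ := by
          apply Finset.filter_true_of_mem
          intro y _
          rw [hcommA x hx.2.1 y]
          exact Or.inr hx.2.2
        rw [this, Finset.card_univ, hG2n]
      have e3 : ∀ x ∈ (Finset.univ.filter (fun x => x ∈ A)).filter
          (fun x => ¬(b * x * b⁻¹ = x)),
          (Finset.univ.filter (fun y => Commute x y)).card = n := by
        intro x hx
        rw [Finset.mem_filter, Finset.mem_filter] at hx
        have : (Finset.univ.filter (fun y => Commute x y)) = SA := by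
          rw [hSA]
          apply Finset.filter_congr
          intro y _
          rw [hcommA x hx.1.2 y]
          simp [hx.2]
        rw [this, hSAcard]
      have e4 : ((Finset.univ.filter (fun x => x ∈ A)).filter
          (fun x => ¬(b * x * b⁻¹ = x))).card = n - d := by
        have := Finset.card_filter_add_card_filter_not
          (s := Finset.univ.filter (fun x => x ∈ A)) (p := fun x => b * x * b⁻¹ = x)
        rw [e1] at this
        rw [hSA] at hSAcard
        omega
      rw [e1, Finset.sum_congr rfl e2, Finset.sum_congr rfl e3,
        Finset.sum_const, Finset.sum_const, hSKcard, e4, smul_eq_mul, smul_eq_mul]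
    have h2 : ∑ x ∈ Finset.univ.filter (fun x => ¬ x ∈ A),
        (Finset.univ.filter (fun y => Commute x y)).card = n * (2 * d) := by
      have e5 : ∀ x ∈ Finset.univ.filter (fun x => ¬ x ∈ A),
          (Finset.univ.filter (fun y => Commute x y)).card = 2 * d := by
        intro x hx
        rw [Finset.mem_filter] at hx
        have hx' : x ∉ A := hx.2
        have hsplit : Finset.univ.filter (fun y => Commute x y)
            = SK ∪ SK.image (fun z => x * z) := by
          ext y
          simp only [Finset.mem_filter, Finset.mem_univ, true_and, Finset.mem_union,
            Finset.mem_image, hSK]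
          constructor
          · intro hcxy
            by_cases hy : y ∈ A
            · exact Or.inl ⟨hy, ((hcomm_out x hx' y hy).mp hcxy)⟩
            · refine Or.inr ⟨x⁻¹ * y, ⟨?_, ?_⟩, by group⟩
              · rw [hmem]; simp [hx', hy]
              · have hz : x⁻¹ * y ∈ A := by rw [hmem]; simp [hx', hy]
                apply (hcomm_out x hx' _ hz).mp
                have : x * (x⁻¹ * y) = (x⁻¹ * y) * x := by
                  rw [mul_inv_cancel_left, mul_assoc]
                  exact eq_inv_mul_iff_mul_eq.mpr hcxy
                exact this
          · rintro (⟨hy, hfix⟩ | ⟨z, ⟨hz, hfix⟩, rfl⟩)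
            · exact (hcomm_out x hx' y hy).mpr hfix
            · exact (Commute.refl x).mul_right ((hcomm_out x hx' z hz).mpr hfix)
        rw [hsplit, Finset.card_union_of_disjoint, Finset.card_image_of_injective _
          (mul_right_injective x), hSKcard, two_mul]
        · rw [Finset.disjoint_left]
          rintro y hy hy'
          rw [hSK, Finset.mem_filter] at hy
          simp only [Finset.mem_image, hSK, Finset.mem_filter] at hy'
          obtain ⟨z, ⟨-, hzA, -⟩, rfl⟩ := hy'
          have : x * z ∈ A := hy.2.1
          rw [hmem] at this
          simp [hx', hzA] at this
      rw [Finset.sum_congr rfl e5, Finset.sum_const, smul_eq_mul]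
      congr 1
      rw [Finset.filter_not, Finset.card_sdiff_of_subset (Finset.filter_subset _ _),
        Finset.card_univ, hG2n]
      rw [hSA] at hSAcard
      rw [hSAcard]
      omega
    rw [h1, h2]
    have hdn : d ≤ n := by nlinarith [hBd, hBpos]
    have hsub : (n - d) * n = n * n - d * n := by rw [Nat.sub_mul]
    rw [hsub]
    have hdn2 : d * n ≤ n * n := Nat.mul_le_mul_right n hdn
    rw [show d * (2 * n) = 2 * (d * n) by ring, show n * (2 * d) = 2 * (d * n) by ring,
      show 3 * (n * d) = 3 * (d * n) by ring]
    omega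
  -- conclude via the Burnside-type identity
  have hmain := card_comm_eq_card_conjClasses_mul_card G
  rw [hpairs] at hmain
  have hGcard : Nat.card G = 2 * n := by rw [← hG2n, Nat.card_eq_fintype_card]
  rw [hGcard] at hmain
  have hfin : (2 * Nat.card (ConjClasses G)) * n = (n + 3 * d) * n := by
    calc (2 * Nat.card (ConjClasses G)) * n = Nat.card (ConjClasses G) * (2 * n) := by ring
      _ = n * n + 3 * (n * d) := hmain.symm
      _ = (n + 3 * d) * n := by ring
  exact Nat.eq_of_mul_eq_mul_right (by rw [hn]; exact hnpos) hfin
end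

section
/- Let G be a non-abelian finite group, A an abelian subgroup of G of index 2, and b an element of G not in A. Set n = |A|, B = {(b·a·b⁻¹)·a⁻¹ : a ∈ A}, and d = [A : B]. Then the sum over all g ∈ G of |C_G(g)|², where C_G(g) is the centralizer of g in G, equals n·(3nd + n² + 4d²). -/
/-- Let `G` be a non-abelian finite group, `A` an abelian subgroup of `G` of index 2,
and `b ∈ G \ A`.  Set `n = |A|`, `B = {(b * a * b⁻¹) * a⁻¹ : a ∈ A}` and `d = [A : B]`.
Then `∑ g ∈ G, |C_G(g)|² = n * (3nd + n² + 4d²)`, where `C_G(g)` is the centralizer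
of `g` in `G`. -/
theorem stmt_7 {G : Type*} [Group G] [Fintype G]
    (hG : ¬ ∀ x y : G, x * y = y * x) (A : Subgroup G)
    (hcomm : ∀ x ∈ A, ∀ y ∈ A, x * y = y * x) (hidx : A.index = 2)
    (b : G) (hb : b ∉ A)
    (B : Subgroup G) (hB : (B : Set G) = {x : G | ∃ a ∈ A, b * a * b⁻¹ * a⁻¹ = x})
    (hBA : B ≤ A)
    (n d : ℕ) (hn : n = Nat.card A) (hd : d = B.relIndex A) :
    ∑ g : G, (Nat.card {x : G // x * g = g * x}) ^ 2
      = n * (3 * n * d + n ^ 2 + 4 * d ^ 2) := by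
  classical
  have hmul : ∀ x y : G, x * y ∈ A ↔ (x ∈ A ↔ y ∈ A) :=
    fun x y => Subgroup.mul_mem_iff_of_index_two hidx
  have hAn : A.Normal := by
    constructor
    intro x hx g
    rw [hmul, hmul]
    simp [hx, A.inv_mem_iff]
  haveI := hAn
  have hnpos : 0 < n := by rw [hn]; exact Nat.card_pos
  have hcardG : Nat.card G = 2 * n := by
    rw [← A.index_mul_card, hidx, hn]
  set Cb := Subgroup.centralizer ({b} : Set G) with hCb
  have hmemCb : ∀ x : G, x ∈ Cb ↔ b * x = x * b := by
    intro x
    rw [hCb, Subgroup.mem_centralizer_iff]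
    simp
  have hconj : ∀ a : G, a ∈ A → b * a * b⁻¹ ∈ A := fun a ha => hAn.conj_mem a ha b
  -- the commutator homomorphism
  let φ : ↥A →* ↥A :=
    { toFun := fun a => ⟨b * a * b⁻¹ * (a : G)⁻¹, A.mul_mem (hconj a a.2) (A.inv_mem a.2)⟩
      map_one' := by ext; simp
      map_mul' := by
        rintro ⟨x, hx⟩ ⟨y, hy⟩
        ext
        have hw : b * y * b⁻¹ * y⁻¹ ∈ A := A.mul_mem (hconj y hy) (A.inv_mem hy)
        have key : x⁻¹ * (b * y * b⁻¹ * y⁻¹) = (b * y * b⁻¹ * y⁻¹) * x⁻¹ :=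
          hcomm _ (A.inv_mem hx) _ hw
        show b * (x * y) * b⁻¹ * (x * y)⁻¹
            = (b * x * b⁻¹ * x⁻¹) * (b * y * b⁻¹ * y⁻¹)
        have h1 : b * (x * y) * b⁻¹ * (x * y)⁻¹
            = (b * x * b⁻¹) * ((b * y * b⁻¹ * y⁻¹) * x⁻¹) := by group
        rw [h1, ← key]
        group }
  have hker : ∀ a : ↥A, a ∈ φ.ker ↔ (a : G) ∈ Cb := by
    intro a
    rw [MonoidHom.mem_ker]
    simp only [φ, MonoidHom.coe_mk, OneHom.coe_mk, Subtype.ext_iff, hmemCb]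
    show b * a * b⁻¹ * (a : G)⁻¹ = (1 : G) ↔ b * a = a * b
    rw [mul_inv_eq_one, mul_inv_eq_iff_eq_mul]
  -- card of the kernel = card (A ⊓ Cb)
  have eker : Nat.card φ.ker = Nat.card ↥(A ⊓ Cb) := by
    refine Nat.card_congr ⟨fun x => ⟨x.1.1, Subgroup.mem_inf.mpr ⟨x.1.2, (hker x.1).1 x.2⟩⟩,
      fun y => ⟨⟨y.1, (Subgroup.mem_inf.mp y.2).1⟩, (hker _).2 (Subgroup.mem_inf.mp y.2).2⟩,
      fun x => ?_, fun y => rfl⟩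
    ext
    rfl
  -- card of the range = card B
  have hrange : Subgroup.map A.subtype φ.range = B := by
    ext x
    have hxB : x ∈ B ↔ ∃ a ∈ A, b * a * b⁻¹ * a⁻¹ = x := by
      rw [← SetLike.mem_coe, hB]
      exact Iff.rfl
    rw [hxB]
    simp only [Subgroup.mem_map, MonoidHom.mem_range]
    constructor
    · rintro ⟨y, ⟨a, rfl⟩, rfl⟩
      exact ⟨a, a.2, rfl⟩
    · rintro ⟨a, ha, rfl⟩
      exact ⟨φ ⟨a, ha⟩, ⟨⟨a, ha⟩, rfl⟩, rfl⟩
  have erange : Nat.card φ.range = Nat.card ↥B := by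
    rw [← hrange]
    exact Nat.card_congr (Subgroup.equivMapOfInjective _ _ A.subtype_injective).toEquiv
  have hBpos : 0 < Nat.card ↥B := Nat.card_pos
  -- n = |B| * |A ⊓ Cb|
  have hfirst : n = Nat.card ↥B * Nat.card ↥(A ⊓ Cb) := by
    rw [hn, Subgroup.card_eq_card_quotient_mul_card_subgroup φ.ker,
      Nat.card_congr (QuotientGroup.quotientKerEquivRange φ).toEquiv, erange, eker]
  -- d * |B| = n
  have hdB : d * Nat.card ↥B = n := by
    have h3 := Subgroup.index_mul_card (B.subgroupOf A)
    have h4 : Nat.card (B.subgroupOf A) = Nat.card ↥B :=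
      Nat.card_congr (Subgroup.subgroupOfEquivOfLe hBA).toEquiv
    rw [h4] at h3
    rw [hd, hn]
    exact h3
  have hZcard : Nat.card ↥(A ⊓ Cb) = d := by
    have : Nat.card ↥(A ⊓ Cb) * Nat.card ↥B = d * Nat.card ↥B := by
      rw [hdB, hfirst, mul_comm]
    exact Nat.eq_of_mul_eq_mul_right hBpos this
  have hd_le : d ≤ n := by
    calc d = d * 1 := (mul_one d).symm
    _ ≤ d * Nat.card ↥B := Nat.mul_le_mul_left d hBpos
    _ = n := hdB
  -- the three centralizer computations
  have key1 : ∀ g : G, g ∈ A → g ∈ Cb → Nat.card {x : G // x * g = g * x} = 2 * n := by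
    intro g hgA hgb
    have hbg : b * g = g * b := (hmemCb g).1 hgb
    have hall : ∀ x : G, x * g = g * x := by
      intro x
      by_cases hx : x ∈ A
      · exact hcomm x hx g hgA
      · have hxb : x * b⁻¹ ∈ A := by
          rw [hmul]
          simp [hx, A.inv_mem_iff, hb]
        obtain ⟨a, haA, haeq⟩ : ∃ a, a ∈ A ∧ a * b = x := ⟨x * b⁻¹, hxb, by group⟩
        have hc : a * g = g * a := hcomm a haA g hgA
        rw [← haeq]
        calc a * b * g = a * (g * b) := by rw [mul_assoc, hbg]
        _ = (a * g) * b := by rw [mul_assoc]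
        _ = (g * a) * b := by rw [hc]
        _ = g * (a * b) := by rw [mul_assoc]
    rw [← hcardG]
    exact Nat.card_congr (Equiv.subtypeUnivEquiv hall)
  have key2 : ∀ g : G, g ∈ A → g ∉ Cb → Nat.card {x : G // x * g = g * x} = n := by
    intro g hgA hgb
    have hiff : ∀ x : G, x * g = g * x ↔ x ∈ A := by
      intro x
      constructor
      · intro hxg
        by_contra hx
        have hxb : x * b⁻¹ ∈ A := by
          rw [hmul]
          simp [hx, A.inv_mem_iff, hb]
        apply hgb
        rw [hmemCb]
        obtain ⟨a, haA, haeq⟩ : ∃ a, a ∈ A ∧ a * b = x := ⟨x * b⁻¹, hxb, by group⟩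
        rw [← haeq] at hxg
        have hc : a * g = g * a := hcomm a haA g hgA
        have h5 : a * (b * g) = a * (g * b) := by
          calc a * (b * g) = (a * b) * g := by rw [mul_assoc]
          _ = g * (a * b) := hxg
          _ = (g * a) * b := by rw [mul_assoc]
          _ = (a * g) * b := by rw [hc]
          _ = a * (g * b) := by rw [mul_assoc]
        exact mul_left_cancel h5
      · intro hx
        exact hcomm x hx g hgA
    rw [hn]
    exact Nat.card_congr (Equiv.subtypeEquivRight hiff)
  have key3 : ∀ g : G, g ∉ A → Nat.card {x : G // x * g = g * x} = 2 * d := by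
    intro g hg
    set C := Subgroup.centralizer ({g} : Set G) with hC
    have hmemC : ∀ x : G, x ∈ C ↔ x * g = g * x := by
      intro x
      rw [hC, Subgroup.mem_centralizer_iff]
      simp [eq_comm]
    have h0 : Nat.card {x : G // x * g = g * x} = Nat.card ↥C :=
      Nat.card_congr (Equiv.subtypeEquivRight fun x => (hmemC x).symm)
    have hgC : g ∈ C := by rw [hmemC]
    have hrel2 : A.relIndex C = 2 := by
      have hdvd : A.relIndex C ∣ 2 := hidx ▸ Subgroup.relIndex_dvd_index_of_normal A C
      have hne1 : A.relIndex C ≠ 1 := by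
        rw [Ne, Subgroup.relIndex_eq_one]
        intro hle
        exact hg (hle hgC)
      rcases (Nat.dvd_prime Nat.prime_two).mp hdvd with h | h
      · exact absurd h hne1
      · exact h
    have hinf : A ⊓ C = A ⊓ Cb := by
      have ha0 : g * b⁻¹ ∈ A := by
        rw [hmul]
        simp [hg, A.inv_mem_iff, hb]
      obtain ⟨a₀, ha0A, ha0eq⟩ : ∃ a₀, a₀ ∈ A ∧ a₀ * b = g := ⟨g * b⁻¹, ha0, by group⟩
      ext x
      simp only [Subgroup.mem_inf, hmemC, hmemCb]
      refine and_congr_right fun hxA => ?_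
      have hc : x * a₀ = a₀ * x := hcomm x hxA a₀ ha0A
      rw [← ha0eq]
      constructor
      · intro hxg
        have h5 : a₀ * (x * b) = a₀ * (b * x) := by
          calc a₀ * (x * b) = (x * a₀) * b := by rw [hc, mul_assoc]
          _ = x * (a₀ * b) := by rw [mul_assoc]
          _ = (a₀ * b) * x := hxg
          _ = a₀ * (b * x) := by rw [mul_assoc]
        exact (mul_left_cancel h5).symm
      · intro hbx
        calc x * (a₀ * b) = (x * a₀) * b := by rw [mul_assoc]
        _ = a₀ * (x * b) := by rw [hc, mul_assoc]
        _ = a₀ * (b * x) := by rw [hbx]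
        _ = (a₀ * b) * x := by rw [mul_assoc]
    have h7 : Nat.card (A.subgroupOf C) = d := by
      rw [← Subgroup.inf_subgroupOf_right A C,
        Nat.card_congr (Subgroup.subgroupOfEquivOfLe (inf_le_right : A ⊓ C ≤ C)).toEquiv,
        hinf, hZcard]
    have h6 := Subgroup.index_mul_card (A.subgroupOf C)
    rw [h7] at h6
    have h8 : (A.subgroupOf C).index = 2 := hrel2
    rw [h8] at h6
    rw [h0, ← h6]
  -- now split the sum
  have cardGA : (Finset.univ.filter (fun g : G => g ∈ A)).card = n := by
    rw [hn, Nat.card_eq_fintype_card, Fintype.card_subtype]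
  have cardZ : (Finset.univ.filter (fun g : G => g ∈ A ∧ g ∈ Cb)).card = d := by
    rw [← hZcard, ← Fintype.card_subtype, Nat.card_eq_fintype_card]
    exact Fintype.card_congr (Equiv.subtypeEquivRight fun x => (Subgroup.mem_inf).symm)
  have cardSplit := Finset.card_filter_add_card_filter_not
    (s := (Finset.univ : Finset G)) (p := fun g : G => g ∈ A)
  have cardU : (Finset.univ : Finset G).card = 2 * n := by
    rw [Finset.card_univ, ← Nat.card_eq_fintype_card, hcardG]
  have cardASplit := Finset.card_filter_add_card_filter_not
    (s := Finset.univ.filter (fun g : G => g ∈ A)) (p := fun g : G => g ∈ Cb)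
  rw [Finset.filter_filter, Finset.filter_filter] at cardASplit
  rw [← Finset.sum_filter_add_sum_filter_not Finset.univ (fun g : G => g ∈ A),
    ← Finset.sum_filter_add_sum_filter_not (Finset.univ.filter (fun g : G => g ∈ A))
      (fun g : G => g ∈ Cb), Finset.filter_filter, Finset.filter_filter]
  have e1 : ∑ g ∈ Finset.univ.filter (fun g : G => g ∈ A ∧ g ∈ Cb),
      (Nat.card {x : G // x * g = g * x}) ^ 2 = d * (2 * n) ^ 2 := by
    have hco : ∀ g ∈ Finset.univ.filter (fun g : G => g ∈ A ∧ g ∈ Cb),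
        (Nat.card {x : G // x * g = g * x}) ^ 2 = (2 * n) ^ 2 := by
      intro g hg
      rw [Finset.mem_filter] at hg
      rw [key1 g hg.2.1 hg.2.2]
    rw [Finset.sum_congr rfl hco, Finset.sum_const, cardZ, smul_eq_mul]
  have e2 : ∑ g ∈ Finset.univ.filter (fun g : G => g ∈ A ∧ ¬ g ∈ Cb),
      (Nat.card {x : G // x * g = g * x}) ^ 2 = (n - d) * n ^ 2 := by
    have hco : ∀ g ∈ Finset.univ.filter (fun g : G => g ∈ A ∧ ¬ g ∈ Cb),
        (Nat.card {x : G // x * g = g * x}) ^ 2 = n ^ 2 := by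
      intro g hg
      rw [Finset.mem_filter] at hg
      rw [key2 g hg.2.1 hg.2.2]
    rw [Finset.sum_congr rfl hco, Finset.sum_const, smul_eq_mul]
    congr 1
    omega
  have e3 : ∑ g ∈ Finset.univ.filter (fun g : G => ¬ g ∈ A),
      (Nat.card {x : G // x * g = g * x}) ^ 2 = n * (2 * d) ^ 2 := by
    have hco : ∀ g ∈ Finset.univ.filter (fun g : G => ¬ g ∈ A),
        (Nat.card {x : G // x * g = g * x}) ^ 2 = (2 * d) ^ 2 := by
      intro g hg
      rw [Finset.mem_filter] at hg
      rw [key3 g hg.2]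
    rw [Finset.sum_congr rfl hco, Finset.sum_const, smul_eq_mul]
    congr 1
    omega
  rw [e1, e2, e3]
  obtain ⟨e, rfl⟩ : ∃ e, n = d + e := ⟨n - d, by omega⟩
  simp only [Nat.add_sub_cancel_left]
  ring
end

section
/- Let G be a non-abelian finite group, A an abelian subgroup of G of index 2, and b an element of G not in A. Set n = |A|, B = {(b·a·b⁻¹)·a⁻¹ : a ∈ A}, and d = [A : B]. Then twice the number of ordered triples (C₁, C₂, C₃) of conjugacy classes of G such that C₃ ⊆ C₁·C₂ (where C₁·C₂ = {x·y : x ∈ C₁, y ∈ C₂} is the setwise product) equals 3nd + n² + 4d². -/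
open scoped Pointwise

namespace Stmt8

open ConjClasses

noncomputable def rep {G : Type*} [Group G] (c : ConjClasses G) : G := c.exists_rep.choose

lemma mk_rep {G : Type*} [Group G] (c : ConjClasses G) : ConjClasses.mk (rep c) = c :=
  c.exists_rep.choose_spec

lemma rep_mem_carrier {G : Type*} [Group G] (c : ConjClasses G) : rep c ∈ c.carrier :=
  mem_carrier_iff_mk_eq.mpr (mk_rep c)

lemma mk_conj {G : Type*} [Group G] (b x : G) :
    ConjClasses.mk (b * x * b⁻¹) = ConjClasses.mk x :=
  ConjClasses.mk_eq_mk_iff_isConj.2 (isConj_iff.2 ⟨b, rfl⟩).symm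

section Main

variable {G : Type*} [Group G] {A : Subgroup G} {b : G} {B : Subgroup G}
  (hidx : A.index = 2) (hb : b ∉ A)
  (hcomm : ∀ x ∈ A, ∀ y ∈ A, x * y = y * x)
  (hB : (B : Set G) = {x : G | ∃ a ∈ A, b * a * b⁻¹ * a⁻¹ = x})
  (hBA : B ≤ A)

omit hidx hb hcomm hB hBA

set_option linter.unusedSectionVars false

include hidx in
lemma mulA {x y : G} (hx : x ∉ A) (hy : y ∉ A) : x * y ∈ A := by
  rw [Subgroup.mul_mem_iff_of_index_two hidx]; simp [hx, hy]

lemma inv_nonmem {x : G} (hx : x ∉ A) : x⁻¹ ∉ A := fun h => hx (by simpa using A.inv_mem h)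

lemma notmemA_mul {a g : G} (ha : a ∈ A) (hg : g ∉ A) : a * g ∉ A :=
  fun h => hg (by simpa using A.mul_mem (A.inv_mem ha) h)

lemma notmemA_mul' {g a : G} (hg : g ∉ A) (ha : a ∈ A) : g * a ∉ A :=
  fun h => hg (by simpa using A.mul_mem h (A.inv_mem ha))

include hidx hb hcomm in
lemma conj_nonmem {g a : G} (hg : g ∉ A) (ha : a ∈ A) : g * a * g⁻¹ = b * a * b⁻¹ := by
  have hbi : b⁻¹ ∉ A := inv_nonmem hb
  have hc : b⁻¹ * g ∈ A := mulA hidx hbi hg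
  have h1 : (b⁻¹ * g) * a = a * (b⁻¹ * g) := hcomm _ hc _ ha
  have h2 : g * a * g⁻¹ = b * ((b⁻¹ * g) * a * (b⁻¹ * g)⁻¹) * b⁻¹ := by group
  rw [h2, h1]; group

include hidx hb in
lemma sigmaA {a : G} (ha : a ∈ A) : b * a * b⁻¹ ∈ A := by
  have h1 : b * a ∉ A := fun h => hb (by simpa using A.mul_mem h (A.inv_mem ha))
  exact mulA hidx h1 (inv_nonmem hb)

include hB in
lemma sigmaB {a : G} (ha : a ∈ A) : b * a * b⁻¹ * a⁻¹ ∈ B := by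
  rw [← SetLike.mem_coe, hB]; exact ⟨a, ha, rfl⟩

include hidx hb hcomm in
lemma sigma_sigma {a : G} (ha : a ∈ A) : b * (b * a * b⁻¹) * b⁻¹ = a := by
  have hb2 : b * b ∈ A := mulA hidx hb hb
  have h1 : (b * b) * a = a * (b * b) := hcomm _ hb2 _ ha
  have h2 : b * (b * a * b⁻¹) * b⁻¹ = (b * b) * a * (b * b)⁻¹ := by group
  rw [h2, h1]; group

include hB hBA in
lemma sigma_memB {t : G} (ht : t ∈ B) : b * t * b⁻¹ ∈ B := by
  have h : b * t * b⁻¹ = (b * t * b⁻¹ * t⁻¹) * t := by group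
  rw [h]; exact B.mul_mem (sigmaB hB (hBA ht)) ht

include hidx hb hcomm in
lemma mem_A_congr {x y : G} (h : IsConj x y) : x ∈ A ↔ y ∈ A := by
  obtain ⟨c, hc⟩ := isConj_iff.mp h
  constructor
  · intro hx
    by_cases hcA : (c : G) ∈ A
    · rw [← hc]; exact A.mul_mem (A.mul_mem hcA hx) (A.inv_mem hcA)
    · rw [← hc, conj_nonmem hidx hb hcomm hcA hx]; exact sigmaA hidx hb hx
  · intro hy
    have hx : x = c⁻¹ * y * c := by rw [← hc]; group
    by_cases hcA : (c : G) ∈ A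
    · rw [hx]; exact A.mul_mem (A.mul_mem (A.inv_mem hcA) hy) hcA
    · have h2 : c⁻¹ * y * c = c⁻¹ * y * (c⁻¹)⁻¹ := by group
      rw [hx, h2, conj_nonmem hidx hb hcomm (inv_nonmem hcA) hy]
      exact sigmaA hidx hb hy

include hidx hb hcomm in
lemma rep_mem_iff (x : G) : rep (ConjClasses.mk x) ∈ A ↔ x ∈ A :=
  mem_A_congr hidx hb hcomm (mk_eq_mk_iff_isConj.mp (mk_rep (ConjClasses.mk x)))

include hidx hb hcomm in
lemma carrier_inner {a : G} (ha : a ∈ A) :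
    (ConjClasses.mk a).carrier = {a, b * a * b⁻¹} := by
  ext x
  rw [ConjClasses.mem_carrier_iff_mk_eq]
  constructor
  · intro h
    obtain ⟨c, hc⟩ := isConj_iff.mp (ConjClasses.mk_eq_mk_iff_isConj.mp h).symm
    by_cases hcA : (c : G) ∈ A
    · left; rw [← hc, hcomm _ hcA _ ha]; group
    · right; rw [← hc]; exact conj_nonmem hidx hb hcomm hcA ha
  · rintro (rfl | rfl)
    · rfl
    · exact mk_conj b a

include hidx hb hcomm hB in
lemma carrier_outer {g : G} (hg : g ∉ A) :
    (ConjClasses.mk g).carrier = {x : G | ∃ t ∈ (B : Set G), x = g * t} := by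
  have sigmaB' : ∀ a ∈ A, b * a * b⁻¹ * a⁻¹ ∈ B := fun a ha => sigmaB hB ha
  ext x
  rw [ConjClasses.mem_carrier_iff_mk_eq]
  constructor
  · intro h
    obtain ⟨c, hc⟩ := isConj_iff.mp (ConjClasses.mk_eq_mk_iff_isConj.mp h).symm
    by_cases hcA : (c : G) ∈ A
    · refine ⟨b * c * b⁻¹ * c⁻¹, sigmaB' c hcA, ?_⟩
      have h1 : g⁻¹ * c * (g⁻¹)⁻¹ = b * c * b⁻¹ :=
        conj_nonmem hidx hb hcomm (inv_nonmem hg) hcA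
      rw [← hc]
      have h3 : c * g * c⁻¹ = g * (g⁻¹ * c * (g⁻¹)⁻¹ * c⁻¹) := by group
      rw [h3, h1]
    · have hgi : g⁻¹ ∉ A := inv_nonmem hg
      have he : g⁻¹ * c ∈ A := mulA hidx hgi hcA
      set e := g⁻¹ * c with hedef
      have hce : c = g * e := by rw [hedef]; group
      refine ⟨e * (b * e⁻¹ * b⁻¹), ?_, ?_⟩
      · have h2 : e * (b * e⁻¹ * b⁻¹) = (b * e * b⁻¹ * e⁻¹)⁻¹ := by group
        rw [← SetLike.mem_coe] at *
        rw [h2]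
        exact B.inv_mem (sigmaB' e he)
      · have h1 : g * e⁻¹ * g⁻¹ = b * e⁻¹ * b⁻¹ :=
          conj_nonmem hidx hb hcomm hg (A.inv_mem he)
        rw [← hc, hce, ← h1]
        group
  · rintro ⟨t, ht, rfl⟩
    rw [hB] at ht
    obtain ⟨a, ha, rfl⟩ := ht
    have h1 : g⁻¹ * a * (g⁻¹)⁻¹ = b * a * b⁻¹ :=
      conj_nonmem hidx hb hcomm (inv_nonmem hg) ha
    rw [ConjClasses.mk_eq_mk_iff_isConj]
    refine (isConj_iff.2 ⟨a, ?_⟩).symm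
    calc a * g * a⁻¹ = g * (g⁻¹ * a * (g⁻¹)⁻¹ * a⁻¹) := by group
    _ = g * (b * a * b⁻¹ * a⁻¹) := by rw [h1]

include hidx hb hcomm hB hBA in
/-- inner * outer product. -/
lemma prod_io {a g : G} (ha : a ∈ A) (hg : g ∉ A) :
    (ConjClasses.mk a).carrier * (ConjClasses.mk g).carrier
      = (ConjClasses.mk (a * g)).carrier := by
  have hag : a * g ∉ A := notmemA_mul ha hg
  rw [carrier_inner hidx hb hcomm ha, carrier_outer hidx hb hcomm hB hg,
    carrier_outer hidx hb hcomm hB hag]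
  ext x
  constructor
  · rw [Set.mem_mul]
    rintro ⟨y, hy, z, ⟨t, ht, rfl⟩, rfl⟩
    rcases hy with rfl | rfl
    · exact ⟨t, ht, by group⟩
    · set u := a⁻¹ * (b * a * b⁻¹) with hu
      have huB : u ∈ B := by
        have h1 : u = b * a * b⁻¹ * a⁻¹ := by
          rw [hu, hcomm _ (A.inv_mem ha) _ (sigmaA hidx hb ha)]
        rw [h1]; exact sigmaB hB ha
      have hy : b * a * b⁻¹ = a * u := by rw [hu]; group
      refine ⟨(b * u * b⁻¹) * t, B.mul_mem (sigma_memB hB hBA huB) ht, ?_⟩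
      have h2 : g⁻¹ * u * (g⁻¹)⁻¹ = b * u * b⁻¹ :=
        conj_nonmem hidx hb hcomm (inv_nonmem hg) (hBA huB)
      rw [hy, ← h2]; group
  · rintro ⟨t, ht, rfl⟩
    rw [Set.mem_mul]
    exact ⟨a, Or.inl rfl, g * t, ⟨t, ht, rfl⟩, by group⟩

include hidx hb hcomm hB hBA in
/-- outer * inner product. -/
lemma prod_oi {g a : G} (hg : g ∉ A) (ha : a ∈ A) :
    (ConjClasses.mk g).carrier * (ConjClasses.mk a).carrier
      = (ConjClasses.mk (g * a)).carrier := by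
  have hga : g * a ∉ A := notmemA_mul' hg ha
  rw [carrier_inner hidx hb hcomm ha, carrier_outer hidx hb hcomm hB hg,
    carrier_outer hidx hb hcomm hB hga]
  ext x
  constructor
  · rw [Set.mem_mul]
    rintro ⟨y, ⟨t, ht, rfl⟩, z, hz, rfl⟩
    have htA : t ∈ A := hBA ht
    rcases hz with rfl | rfl
    · refine ⟨t, ht, ?_⟩
      have h := hcomm _ htA _ ha
      calc g * t * z = g * (t * z) := by group
      _ = g * (z * t) := by rw [h]
      _ = g * z * t := by group
    · set u := a⁻¹ * (b * a * b⁻¹) with hu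
      have huB : u ∈ B := by
        have h1 : u = b * a * b⁻¹ * a⁻¹ := by
          rw [hu, hcomm _ (A.inv_mem ha) _ (sigmaA hidx hb ha)]
        rw [h1]; exact sigmaB hB ha
      have hy : b * a * b⁻¹ = a * u := by rw [hu]; group
      refine ⟨t * u, B.mul_mem ht huB, ?_⟩
      have h := hcomm _ htA _ ha
      calc g * t * (b * a * b⁻¹) = g * (t * a) * u := by rw [hy]; group
      _ = g * (a * t) * u := by rw [h]
      _ = g * a * (t * u) := by group
  · rintro ⟨t, ht, rfl⟩
    rw [Set.mem_mul]
    have htA : t ∈ A := hBA ht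
    have h := hcomm _ htA _ ha
    refine ⟨g * t, ⟨t, ht, rfl⟩, a, Or.inl rfl, ?_⟩
    calc g * t * a = g * (t * a) := by group
    _ = g * (a * t) := by rw [h]
    _ = g * a * t := by group

include hidx hb hcomm hB hBA in
/-- outer * outer product. -/
lemma prod_oo {g h : G} (hg : g ∉ A) (hh : h ∉ A) :
    (ConjClasses.mk g).carrier * (ConjClasses.mk h).carrier
      = {x : G | ∃ t ∈ (B : Set G), x = g * h * t} := by
  rw [carrier_outer hidx hb hcomm hB hg, carrier_outer hidx hb hcomm hB hh]
  ext x
  constructor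
  · rw [Set.mem_mul]
    rintro ⟨y, ⟨t, ht, rfl⟩, z, ⟨s, hs, rfl⟩, rfl⟩
    have h1 : h⁻¹ * t * (h⁻¹)⁻¹ = b * t * b⁻¹ :=
      conj_nonmem hidx hb hcomm (inv_nonmem hh) (hBA ht)
    refine ⟨(b * t * b⁻¹) * s, B.mul_mem (sigma_memB hB hBA ht) hs, ?_⟩
    rw [← h1]; group
  · rintro ⟨t, ht, rfl⟩
    rw [Set.mem_mul]
    exact ⟨g * 1, ⟨1, B.one_mem, rfl⟩, h * t, ⟨t, ht, rfl⟩, by group⟩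

include hidx hb hcomm hB hBA in
/-- solutions for inner * outer. -/
lemma S_io {a g : G} (ha : a ∈ A) (hg : g ∉ A) (w : ConjClasses G) :
    w.carrier ⊆ (ConjClasses.mk a).carrier * (ConjClasses.mk g).carrier
      ↔ w = ConjClasses.mk (a * g) := by
  rw [prod_io hidx hb hcomm hB hBA ha hg]
  constructor
  · intro hsub
    have := hsub (rep_mem_carrier w)
    rw [ConjClasses.mem_carrier_iff_mk_eq] at this
    rw [← mk_rep w, this]
  · rintro rfl; exact subset_rfl

include hidx hb hcomm hB hBA in
/-- solutions for outer * inner. -/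
lemma S_oi {g a : G} (hg : g ∉ A) (ha : a ∈ A) (w : ConjClasses G) :
    w.carrier ⊆ (ConjClasses.mk g).carrier * (ConjClasses.mk a).carrier
      ↔ w = ConjClasses.mk (g * a) := by
  rw [prod_oi hidx hb hcomm hB hBA hg ha]
  constructor
  · intro hsub
    have := hsub (rep_mem_carrier w)
    rw [ConjClasses.mem_carrier_iff_mk_eq] at this
    rw [← mk_rep w, this]
  · rintro rfl; exact subset_rfl

include hidx hb hcomm hB hBA in
/-- no solutions with outer * outer and outer target. -/
lemma S_oo_nosol {g h : G} (hg : g ∉ A) (hh : h ∉ A) (w : ConjClasses G)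
    (hw : rep w ∉ A) :
    ¬ w.carrier ⊆ (ConjClasses.mk g).carrier * (ConjClasses.mk h).carrier := by
  rw [prod_oo hidx hb hcomm hB hBA hg hh]
  intro hsub
  obtain ⟨t, ht, hrep⟩ := hsub (rep_mem_carrier w)
  apply hw
  rw [hrep]
  exact A.mul_mem (mulA hidx hg hh) (hBA ht)

include hidx hb hcomm hB hBA in
/-- unique second class for outer * outer with inner target. -/
lemma S_oo {g : G} (hg : g ∉ A) (w : ConjClasses G) (hw : rep w ∈ A)
    (v : ConjClasses G) (hv : rep v ∉ A) :
    w.carrier ⊆ (ConjClasses.mk g).carrier * v.carrier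
      ↔ v = ConjClasses.mk (g⁻¹ * rep w) := by
  constructor
  · intro hsub
    rw [← mk_rep v] at hsub
    rw [prod_oo hidx hb hcomm hB hBA hg hv] at hsub
    obtain ⟨t, ht, hrep⟩ := hsub (rep_mem_carrier w)
    have h1 : g⁻¹ * rep w = rep v * t := by rw [hrep]; group
    have h2 : g⁻¹ * rep w ∈ (ConjClasses.mk (rep v)).carrier := by
      rw [carrier_outer hidx hb hcomm hB hv]
      exact ⟨t, ht, h1⟩
    rw [ConjClasses.mem_carrier_iff_mk_eq] at h2
    rw [← mk_rep v, ← h2]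
  · rintro rfl
    have hgi : g⁻¹ ∉ A := inv_nonmem hg
    have hgc : g⁻¹ * rep w ∉ A := fun hmem => hgi (by
      have := A.mul_mem hmem (A.inv_mem hw); simpa [mul_assoc] using this)
    have hcar : w.carrier = {rep w, b * rep w * b⁻¹} := by
      conv_lhs => rw [← mk_rep w]
      rw [carrier_inner hidx hb hcomm hw]
    rw [prod_oo hidx hb hcomm hB hBA hg hgc, hcar]
    rintro x (rfl | rfl)
    · exact ⟨1, B.one_mem, by group⟩
    · refine ⟨(rep w)⁻¹ * (b * rep w * b⁻¹), ?_, by group⟩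
      have h1 : (rep w)⁻¹ * (b * rep w * b⁻¹) = b * rep w * b⁻¹ * (rep w)⁻¹ :=
        hcomm _ (A.inv_mem hw) _ (sigmaA hidx hb hw)
      rw [h1]
      exact sigmaB hB hw

include hidx hb hcomm in
/-- identity for the two inner-inner solutions coinciding. -/
lemma S_ii_eq {a a' : G} (ha : a ∈ A) (ha' : a' ∈ A) :
    ConjClasses.mk (a * a') = ConjClasses.mk (a * (b * a' * b⁻¹))
      ↔ (b * a * b⁻¹ = a ∨ b * a' * b⁻¹ = a') := by
  constructor
  · intro h
    have hm : a * (b * a' * b⁻¹) ∈ (ConjClasses.mk (a * a')).carrier :=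
      ConjClasses.mem_carrier_iff_mk_eq.mpr h.symm
    rw [carrier_inner hidx hb hcomm (A.mul_mem ha ha')] at hm
    have hexp : b * (a * a') * b⁻¹ = (b * a * b⁻¹) * (b * a' * b⁻¹) := by group
    rcases hm with hm | hm
    · right; exact mul_left_cancel hm
    · left
      rw [hexp] at hm
      exact (mul_right_cancel hm).symm
  · rintro (hfix | hfix)
    · have h1 : a * a' = b * (a * (b * a' * b⁻¹)) * b⁻¹ := by
        have : b * (a * (b * a' * b⁻¹)) * b⁻¹
            = (b * a * b⁻¹) * (b * (b * a' * b⁻¹) * b⁻¹) := by group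
        rw [this, hfix, sigma_sigma hidx hb hcomm ha']
      rw [h1, mk_conj]
    · rw [hfix]

include hidx hb hcomm in
/-- solutions for inner * inner. -/
lemma S_ii {a a' : G} (ha : a ∈ A) (ha' : a' ∈ A) (w : ConjClasses G) :
    w.carrier ⊆ (ConjClasses.mk a).carrier * (ConjClasses.mk a').carrier
      ↔ (w = ConjClasses.mk (a * a') ∨ w = ConjClasses.mk (a * (b * a' * b⁻¹))) := by
  rw [carrier_inner hidx hb hcomm ha, carrier_inner hidx hb hcomm ha']
  constructor
  · intro hsub
    have hmem := hsub (rep_mem_carrier w)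
    rw [Set.mem_mul] at hmem
    obtain ⟨y, hy, z, hz, hyz⟩ := hmem
    have hw : w = ConjClasses.mk (y * z) := by rw [← mk_rep w, ← hyz]
    rcases hy with h1 | h1 <;> rcases hz with h2 | h2 <;> rw [h1, h2] at hw
    · left; exact hw
    · right; exact hw
    · right
      rw [hw]
      have h3 : (b * a * b⁻¹) * a' = b * (a * (b * a' * b⁻¹)) * b⁻¹ := by
        have h4 : b * (a * (b * a' * b⁻¹)) * b⁻¹
            = (b * a * b⁻¹) * (b * (b * a' * b⁻¹) * b⁻¹) := by group
        rw [h4, sigma_sigma hidx hb hcomm ha']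
      rw [h3, mk_conj]
    · left
      rw [hw]
      have h3 : (b * a * b⁻¹) * (b * a' * b⁻¹) = b * (a * a') * b⁻¹ := by group
      rw [h3, mk_conj]
  · have hsub2 : ∀ x y : G, x ∈ ({a, b * a * b⁻¹} : Set G) →
        y ∈ ({a', b * a' * b⁻¹} : Set G) → x * y ∈
        ({a, b * a * b⁻¹} : Set G) * ({a', b * a' * b⁻¹} : Set G) :=
      fun x y hx hy => Set.mul_mem_mul hx hy
    rintro (rfl | rfl)
    · rw [carrier_inner hidx hb hcomm (A.mul_mem ha ha')]
      rintro x (rfl | rfl)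
      · exact hsub2 _ _ (Or.inl rfl) (Or.inl rfl)
      · have h1 : b * (a * a') * b⁻¹ = (b * a * b⁻¹) * (b * a' * b⁻¹) := by group
        rw [h1]
        exact hsub2 _ _ (Or.inr rfl) (Or.inr rfl)
    · have hsa' : b * a' * b⁻¹ ∈ A := sigmaA hidx hb ha'
      rw [carrier_inner hidx hb hcomm (A.mul_mem ha hsa')]
      rintro x (rfl | rfl)
      · exact hsub2 _ _ (Or.inl rfl) (Or.inr rfl)
      · have h1 : b * (a * (b * a' * b⁻¹)) * b⁻¹ = (b * a * b⁻¹) * a' := by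
          have : b * (a * (b * a' * b⁻¹)) * b⁻¹
              = (b * a * b⁻¹) * (b * (b * a' * b⁻¹) * b⁻¹) := by group
          rw [this, sigma_sigma hidx hb hcomm ha']
        rw [h1]
        exact hsub2 _ _ (Or.inr rfl) (Or.inl rfl)


section Counting

variable [Finite G]

include hidx hb hcomm hB hBA in
lemma card_outer :
    Nat.card {c : ConjClasses G // rep c ∉ A} = B.relIndex A := by
  have hbi : b⁻¹ ∉ A := inv_nonmem hb
  have hba : ∀ a : ↥A, b * ↑a ∉ A :=
    fun a h => hb (by simpa using A.mul_mem h (A.inv_mem a.2))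
  let F : ↥A → {c : ConjClasses G // rep c ∉ A} := fun a =>
    ⟨ConjClasses.mk (b * ↑a), by
      rw [rep_mem_iff hidx hb hcomm]; exact hba a⟩
  have hresp : ∀ a a' : ↥A,
      @Setoid.r _ (QuotientGroup.leftRel (B.subgroupOf A)) a a' → F a = F a' := by
    intro a a' hr
    rw [QuotientGroup.leftRel_apply, Subgroup.mem_subgroupOf] at hr
    apply Subtype.ext
    show ConjClasses.mk (b * ↑a) = ConjClasses.mk (b * ↑a')
    have hmem : b * ↑a' ∈ (ConjClasses.mk (b * ↑a)).carrier := by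
      rw [carrier_outer hidx hb hcomm hB (hba a)]
      refine ⟨↑(a⁻¹ * a'), hr, ?_⟩
      push_cast
      group
    rw [ConjClasses.mem_carrier_iff_mk_eq] at hmem
    exact hmem.symm
  let Fq : ↥A ⧸ B.subgroupOf A → {c : ConjClasses G // rep c ∉ A} :=
    fun x => Quotient.liftOn' x F hresp
  have hbij : Function.Bijective Fq := by
    constructor
    · intro x y
      refine Quotient.inductionOn₂' x y ?_
      intro a a' h
      have h2 : ConjClasses.mk (b * ↑a) = ConjClasses.mk (b * ↑a') :=
        congrArg Subtype.val h
      have hmem : b * ↑a' ∈ (ConjClasses.mk (b * ↑a)).carrier :=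
        ConjClasses.mem_carrier_iff_mk_eq.mpr h2.symm
      rw [carrier_outer hidx hb hcomm hB (hba a)] at hmem
      obtain ⟨t, ht, heq⟩ := hmem
      apply Quotient.sound'
      rw [QuotientGroup.leftRel_apply, Subgroup.mem_subgroupOf]
      have h3 : (↑(a⁻¹ * a') : G) = t := by
        push_cast
        have : (↑a : G)⁻¹ * ↑a' = (b * ↑a)⁻¹ * (b * ↑a') := by group
        rw [this, heq]; group
      rw [h3]; exact ht
    · rintro ⟨c, hc⟩
      refine ⟨Quotient.mk'' ⟨b⁻¹ * rep c, mulA hidx hbi hc⟩, ?_⟩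
      apply Subtype.ext
      show ConjClasses.mk (b * (b⁻¹ * rep c)) = c
      rw [show b * (b⁻¹ * rep c) = rep c by group, mk_rep]
  have := Nat.card_congr (Equiv.ofBijective Fq hbij)
  rw [← this]
  rfl

include hidx hb hcomm hB hBA in
lemma card_fixed :
    Nat.card {c : ConjClasses G // rep c ∈ A ∧ b * rep c * b⁻¹ = rep c}
      = B.relIndex A := by
  -- the homomorphism a ↦ [b,a]
  have hmul : ∀ x y : ↥A,
      b * ↑(x * y) * b⁻¹ * (↑(x * y) : G)⁻¹
        = (b * ↑x * b⁻¹ * (↑x : G)⁻¹) * (b * ↑y * b⁻¹ * (↑y : G)⁻¹) := by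
    intro x y
    have hu : (b * ↑y * b⁻¹) * (↑y : G)⁻¹ ∈ A :=
      A.mul_mem (sigmaA hidx hb y.2) (A.inv_mem y.2)
    have comm : (↑x : G)⁻¹ * (b * ↑y * b⁻¹ * (↑y : G)⁻¹)
        = (b * ↑y * b⁻¹ * (↑y : G)⁻¹) * (↑x : G)⁻¹ :=
      hcomm _ (A.inv_mem x.2) _ hu
    calc b * ↑(x * y) * b⁻¹ * (↑(x * y) : G)⁻¹
        = b * ↑x * b⁻¹ * ((b * ↑y * b⁻¹ * (↑y : G)⁻¹) * (↑x : G)⁻¹) := by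
          push_cast; group
      _ = b * ↑x * b⁻¹ * ((↑x : G)⁻¹ * (b * ↑y * b⁻¹ * (↑y : G)⁻¹)) := by rw [← comm]
      _ = (b * ↑x * b⁻¹ * (↑x : G)⁻¹) * (b * ↑y * b⁻¹ * (↑y : G)⁻¹) := by group
  let ψ : ↥A →* G := MonoidHom.mk' (fun a => b * ↑a * b⁻¹ * (↑a : G)⁻¹) hmul
  have hrange : ψ.range = B := by
    ext x
    rw [MonoidHom.mem_range, ← SetLike.mem_coe, hB]
    constructor
    · rintro ⟨a, rfl⟩; exact ⟨↑a, a.2, rfl⟩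
    · rintro ⟨a, ha, rfl⟩; exact ⟨⟨a, ha⟩, rfl⟩
  have hker : ∀ x : ↥A, x ∈ ψ.ker ↔ b * ↑x * b⁻¹ = ↑x := by
    intro x
    rw [MonoidHom.mem_ker]
    show b * ↑x * b⁻¹ * (↑x : G)⁻¹ = 1 ↔ _
    rw [mul_inv_eq_one]
  have h1 : Nat.card ↥A = Nat.card (↥A ⧸ ψ.ker) * Nat.card ψ.ker :=
    Subgroup.card_eq_card_quotient_mul_card_subgroup _
  have h2 : Nat.card (↥A ⧸ ψ.ker) = Nat.card ψ.range :=
    Nat.card_congr (QuotientGroup.quotientKerEquivRange ψ).toEquiv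
  have h3 : Nat.card ψ.range = Nat.card B := by rw [hrange]
  have h4 : B.relIndex A * Nat.card (B.subgroupOf A) = Nat.card ↥A :=
    Subgroup.index_mul_card _
  have h5 : Nat.card (B.subgroupOf A) = Nat.card B :=
    Nat.card_congr (Subgroup.subgroupOfEquivOfLe hBA).toEquiv
  have hpos : 0 < Nat.card B := Nat.card_pos
  have hcards : Nat.card ψ.ker = B.relIndex A := by
    have hA1 : Nat.card ↥A = Nat.card ↥B * Nat.card ψ.ker := by rw [h1, h2, h3]
    have hA2 : B.relIndex A * Nat.card ↥B = Nat.card ↥A := by rw [← h5]; exact h4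
    have heq : B.relIndex A * Nat.card ↥B = Nat.card ψ.ker * Nat.card ↥B := by
      rw [hA2, hA1]; ring
    exact (Nat.eq_of_mul_eq_mul_right hpos heq).symm
  rw [← hcards]
  -- now a bijection from the kernel to the fixed classes
  have hsingle : ∀ x : G, x ∈ A → b * x * b⁻¹ = x →
      (ConjClasses.mk x).carrier = {x} := by
    intro x hx hfix
    rw [carrier_inner hidx hb hcomm hx, hfix, Set.pair_eq_singleton]
  let F : ψ.ker → {c : ConjClasses G // rep c ∈ A ∧ b * rep c * b⁻¹ = rep c} :=
    fun k =>
      ⟨ConjClasses.mk ↑↑k, by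
        have hfix : b * ↑↑k * b⁻¹ = (↑↑k : G) := (hker ↑k).mp k.2
        have hrep : rep (ConjClasses.mk (↑↑k : G)) = ↑↑k := by
          have := rep_mem_carrier (ConjClasses.mk (↑↑k : G))
          rwa [hsingle ↑↑k (↑k : ↥A).2 hfix, Set.mem_singleton_iff] at this
        rw [hrep]
        exact ⟨(↑k : ↥A).2, hfix⟩⟩
  have hbij : Function.Bijective F := by
    constructor
    · intro k k' h
      have h2 : ConjClasses.mk (↑↑k : G) = ConjClasses.mk (↑↑k' : G) :=
        congrArg Subtype.val h
      have hfix : b * ↑↑k * b⁻¹ = (↑↑k : G) := (hker ↑k).mp k.2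
      have hmem : (↑↑k' : G) ∈ (ConjClasses.mk (↑↑k : G)).carrier :=
        ConjClasses.mem_carrier_iff_mk_eq.mpr h2.symm
      rw [hsingle ↑↑k (↑k : ↥A).2 hfix, Set.mem_singleton_iff] at hmem
      exact Subtype.ext (Subtype.ext hmem.symm)
    · rintro ⟨c, hcA, hcfix⟩
      refine ⟨⟨⟨rep c, hcA⟩, ?_⟩, ?_⟩
      · rw [hker]; exact hcfix
      · exact Subtype.ext (mk_rep c)
  exact (Nat.card_congr (Equiv.ofBijective F hbij)).symm

end Counting

lemma sum_ite_or_eq {X : Type*} [Fintype X] [DecidableEq X] (c₁ c₂ : X) :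
    (∑ w : X, if (w = c₁ ∨ w = c₂) then (1:ℕ) else 0) = if c₁ = c₂ then 1 else 2 := by
  rw [← Finset.card_filter]
  have h : (Finset.univ.filter fun w => w = c₁ ∨ w = c₂) = {c₁, c₂} := by
    ext w; simp
  rw [h]
  by_cases hc : c₁ = c₂
  · simp [hc]
  · simp [Finset.card_pair hc, hc]

lemma ite_or_arith (P Q : Prop) [Decidable P] [Decidable Q] :
    (if (P ∨ Q) then (1:ℕ) else 2)
      = 1 + (if ¬P then 1 else 0) * (if ¬Q then 1 else 0) := by
  by_cases hP : P <;> by_cases hQ : Q <;> simp [hP, hQ]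

lemma ite_split12 (P : Prop) [Decidable P] :
    (if P then (1:ℕ) else 2) = (if P then 1 else 0) + 2 * (if ¬P then 1 else 0) := by
  by_cases hP : P <;> simp [hP]

end Main
end Stmt8

open Stmt8 in
/-- Let `G` be a non-abelian finite group, `A` an abelian subgroup of `G` of index 2,
and `b ∈ G \ A`.  Set `n = |A|`, `B = {(b * a * b⁻¹) * a⁻¹ : a ∈ A}` and `d = [A : B]`.
Then twice the number of ordered triples `(C₁, C₂, C₃)` of conjugacy classes of `G` with
`C₃ ⊆ C₁ * C₂` (setwise product) equals `3nd + n² + 4d²`. -/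
theorem stmt_8 {G : Type*} [Group G] [Finite G]
    (hG : ¬ ∀ x y : G, x * y = y * x) (A : Subgroup G)
    (hcomm : ∀ x ∈ A, ∀ y ∈ A, x * y = y * x) (hidx : A.index = 2)
    (b : G) (hb : b ∉ A)
    (B : Subgroup G) (hB : (B : Set G) = {x : G | ∃ a ∈ A, b * a * b⁻¹ * a⁻¹ = x})
    (hBA : B ≤ A)
    (n d : ℕ) (hn : n = Nat.card A) (hd : d = B.relIndex A) :
    2 * Nat.card {T : ConjClasses G × ConjClasses G × ConjClasses G //
        T.2.2.carrier ⊆ T.1.carrier * T.2.1.carrier}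
      = 3 * n * d + n ^ 2 + 4 * d ^ 2 := by
  classical
  letI : Fintype G := Fintype.ofFinite G
  letI : Fintype (ConjClasses G) := Fintype.ofFinite _
  set X := ConjClasses G with hX
  set s : Finset X := Finset.univ.filter (fun c => rep c ∈ A) with hs
  set t : Finset X := Finset.univ.filter (fun c => rep c ∉ A) with ht
  -- Step 1: the count as an iterated sum
  have hN : Nat.card {T : X × X × X // T.2.2.carrier ⊆ T.1.carrier * T.2.1.carrier}
      = ∑ u : X, ∑ v : X, ∑ w : X,
          (if w.carrier ⊆ u.carrier * v.carrier then (1:ℕ) else 0) := by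
    rw [Nat.card_eq_fintype_card, Fintype.card_subtype, Finset.card_filter,
      Fintype.sum_prod_type]
    refine Finset.sum_congr rfl fun u _ => ?_
    rw [Fintype.sum_prod_type]
  -- Step 2: block evaluations
  have hss : ∀ u ∈ s, ∀ v ∈ s,
      (∑ w : X, if w.carrier ⊆ u.carrier * v.carrier then (1:ℕ) else 0)
        = if (b * rep u * b⁻¹ = rep u ∨ b * rep v * b⁻¹ = rep v) then 1 else 2 := by
    intro u hu v hv
    rw [hs, Finset.mem_filter] at hu hv
    have hiff : ∀ w : X, (w.carrier ⊆ u.carrier * v.carrier)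
        ↔ (w = ConjClasses.mk (rep u * rep v)
            ∨ w = ConjClasses.mk (rep u * (b * rep v * b⁻¹))) := by
      intro w
      have h0 := S_ii hidx hb hcomm hu.2 hv.2 w
      rw [mk_rep, mk_rep] at h0
      exact h0
    simp only [hiff]
    rw [sum_ite_or_eq]
    exact if_congr (S_ii_eq hidx hb hcomm hu.2 hv.2) rfl rfl
  have hst : ∀ u ∈ s, ∀ v ∈ t,
      (∑ w : X, if w.carrier ⊆ u.carrier * v.carrier then (1:ℕ) else 0) = 1 := by
    intro u hu v hv
    rw [hs, Finset.mem_filter] at hu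
    rw [ht, Finset.mem_filter] at hv
    have hiff : ∀ w : X, (w.carrier ⊆ u.carrier * v.carrier)
        ↔ w = ConjClasses.mk (rep u * rep v) := by
      intro w
      have h0 := S_io hidx hb hcomm hB hBA hu.2 hv.2 w
      rw [mk_rep, mk_rep] at h0
      exact h0
    simp only [hiff]
    rw [Finset.sum_ite_eq']
    simp
  have hts : ∀ u ∈ t, ∀ v ∈ s,
      (∑ w : X, if w.carrier ⊆ u.carrier * v.carrier then (1:ℕ) else 0) = 1 := by
    intro u hu v hv
    rw [ht, Finset.mem_filter] at hu
    rw [hs, Finset.mem_filter] at hv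
    have hiff : ∀ w : X, (w.carrier ⊆ u.carrier * v.carrier)
        ↔ w = ConjClasses.mk (rep u * rep v) := by
      intro w
      have h0 := S_oi hidx hb hcomm hB hBA hu.2 hv.2 w
      rw [mk_rep, mk_rep] at h0
      exact h0
    simp only [hiff]
    rw [Finset.sum_ite_eq']
    simp
  have htt : ∀ u ∈ t,
      (∑ v ∈ t, ∑ w : X, if w.carrier ⊆ u.carrier * v.carrier then (1:ℕ) else 0)
        = s.card := by
    intro u hu
    rw [ht, Finset.mem_filter] at hu
    rw [Finset.sum_comm]
    have hw : ∀ w : X,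
        (∑ v ∈ t, if w.carrier ⊆ u.carrier * v.carrier then (1:ℕ) else 0)
          = if rep w ∈ A then 1 else 0 := by
      intro w
      by_cases hwA : rep w ∈ A
      · have hiff : ∀ v ∈ t, (w.carrier ⊆ u.carrier * v.carrier)
            ↔ v = ConjClasses.mk ((rep u)⁻¹ * rep w) := by
          intro v hv
          rw [ht, Finset.mem_filter] at hv
          have h0 := S_oo hidx hb hcomm hB hBA hu.2 w hwA v hv.2
          rw [mk_rep] at h0
          exact h0
        rw [if_pos hwA]
        have hcongr : (∑ v ∈ t, if w.carrier ⊆ u.carrier * v.carrier then (1:ℕ) else 0)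
            = ∑ v ∈ t, if v = ConjClasses.mk ((rep u)⁻¹ * rep w) then (1:ℕ) else 0 :=
          Finset.sum_congr rfl (fun v hv => if_congr (hiff v hv) rfl rfl)
        rw [hcongr, Finset.sum_ite_eq']
        have hc0 : ConjClasses.mk ((rep u)⁻¹ * rep w) ∈ t := by
          rw [ht, Finset.mem_filter]
          refine ⟨Finset.mem_univ _, ?_⟩
          rw [rep_mem_iff hidx hb hcomm]
          exact notmemA_mul' (inv_nonmem hu.2) hwA
        rw [if_pos hc0]
      · rw [if_neg hwA]
        apply Finset.sum_eq_zero
        intro v hv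
        rw [ht, Finset.mem_filter] at hv
        rw [if_neg]
        have h0 := S_oo_nosol hidx hb hcomm hB hBA hu.2 hv.2 w hwA
        rw [mk_rep, mk_rep] at h0
        exact h0
    have hcongr2 : (∑ w : X, ∑ v ∈ t,
        if w.carrier ⊆ u.carrier * v.carrier then (1:ℕ) else 0)
          = ∑ w : X, if rep w ∈ A then (1:ℕ) else 0 :=
      Finset.sum_congr rfl (fun w _ => hw w)
    rw [hcongr2, ← Finset.card_filter]
  -- Step 3: assemble
  set m := s.card with hm
  set p := (s.filter fun c => ¬ b * rep c * b⁻¹ = rep c).card with hp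
  set f := (s.filter fun c => b * rep c * b⁻¹ = rep c).card with hf
  have e1 : ∀ Fu : X → ℕ, (∑ u : X, Fu u) = (∑ u ∈ s, Fu u) + (∑ u ∈ t, Fu u) := by
    intro Fu
    rw [hs, ht]
    exact (Finset.sum_filter_add_sum_filter_not Finset.univ _ _).symm
  have hNval : (∑ u : X, ∑ v : X, ∑ w : X,
      (if w.carrier ⊆ u.carrier * v.carrier then (1:ℕ) else 0))
        = ((m * m + p * p) + m * t.card) + (t.card * m + t.card * m) := by
    rw [e1]
    congr 1
    · -- sum over u ∈ s
      have h2 : ∀ u ∈ s, (∑ v : X, ∑ w : X,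
          (if w.carrier ⊆ u.carrier * v.carrier then (1:ℕ) else 0))
            = (∑ v ∈ s, ∑ w : X,
                (if w.carrier ⊆ u.carrier * v.carrier then (1:ℕ) else 0))
              + (∑ v ∈ t, ∑ w : X,
                (if w.carrier ⊆ u.carrier * v.carrier then (1:ℕ) else 0)) :=
        fun u _ => e1 _
      rw [Finset.sum_congr rfl h2, Finset.sum_add_distrib]
      congr 1
      · -- inner-inner block
        have h3 : ∀ u ∈ s, (∑ v ∈ s, ∑ w : X,
            (if w.carrier ⊆ u.carrier * v.carrier then (1:ℕ) else 0))
              = ∑ v ∈ s, (1 + (if ¬ (b * rep u * b⁻¹ = rep u) then 1 else 0)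
                  * (if ¬ (b * rep v * b⁻¹ = rep v) then 1 else 0)) := by
          intro u hu
          refine Finset.sum_congr rfl fun v hv => ?_
          rw [hss u hu v hv, ite_or_arith]
        rw [Finset.sum_congr rfl h3]
        have h4 : ∀ u ∈ s, (∑ v ∈ s,
            (1 + (if ¬ (b * rep u * b⁻¹ = rep u) then 1 else 0)
              * (if ¬ (b * rep v * b⁻¹ = rep v) then (1:ℕ) else 0)))
            = m + (if ¬ (b * rep u * b⁻¹ = rep u) then 1 else 0) * p := by
          intro u hu
          rw [Finset.sum_add_distrib, Finset.sum_const, smul_eq_mul, mul_one,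
            ← Finset.mul_sum]
          congr 1
          rw [hp, Finset.card_filter]
        rw [Finset.sum_congr rfl h4, Finset.sum_add_distrib, Finset.sum_const,
          smul_eq_mul, mul_comm s.card m, ← Finset.sum_mul]
        congr 1
        rw [hp, Finset.card_filter]
      · -- inner-outer block
        have h3 : ∀ u ∈ s, (∑ v ∈ t, ∑ w : X,
            (if w.carrier ⊆ u.carrier * v.carrier then (1:ℕ) else 0)) = t.card := by
          intro u hu
          rw [Finset.sum_congr rfl (fun v hv => hst u hu v hv), Finset.sum_const,
            smul_eq_mul, mul_one]
        rw [Finset.sum_congr rfl h3, Finset.sum_const, smul_eq_mul]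
    · -- sum over u ∈ t
      have h2 : ∀ u ∈ t, (∑ v : X, ∑ w : X,
          (if w.carrier ⊆ u.carrier * v.carrier then (1:ℕ) else 0))
            = m + m := by
        intro u hu
        rw [e1]
        congr 1
        · rw [Finset.sum_congr rfl (fun v hv => hts u hu v hv), Finset.sum_const,
            smul_eq_mul, mul_one]
        · exact htt u hu
      rw [Finset.sum_congr rfl h2, Finset.sum_const, smul_eq_mul, Nat.mul_add]
  -- Step 4: cardinality identities
  have hdt : t.card = d := by
    rw [hd, ← card_outer hidx hb hcomm hB hBA, Nat.card_eq_fintype_card,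
      Fintype.card_subtype]
  have hfd : f = d := by
    rw [hd, ← card_fixed hidx hb hcomm hB hBA, Nat.card_eq_fintype_card,
      Fintype.card_subtype, hf, hs, Finset.filter_filter]
  have hfp : f + p = m := by
    rw [hf, hp, hm]
    exact Finset.card_filter_add_card_filter_not _
  have hn2 : n = f + 2 * p := by
    have hcA : Nat.card ↥A = (Finset.univ.filter (fun g : G => g ∈ A)).card := by
      rw [Nat.card_eq_fintype_card]
      exact Fintype.card_subtype _
    have hfib : ∀ g ∈ Finset.univ.filter (fun g : G => g ∈ A),
        ConjClasses.mk g ∈ s := by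
      intro g hg
      rw [Finset.mem_filter] at hg
      rw [hs, Finset.mem_filter]
      exact ⟨Finset.mem_univ _, (rep_mem_iff hidx hb hcomm g).mpr hg.2⟩
    have hfiber : ∀ c ∈ s, ((Finset.univ.filter (fun g : G => g ∈ A)).filter
        (fun g => ConjClasses.mk g = c)).card
          = if b * rep c * b⁻¹ = rep c then 1 else 2 := by
      intro c hc
      rw [hs, Finset.mem_filter] at hc
      have hcar : c.carrier = {rep c, b * rep c * b⁻¹} := by
        conv_lhs => rw [← mk_rep c]
        rw [carrier_inner hidx hb hcomm hc.2]
      have hset : ((Finset.univ.filter (fun g : G => g ∈ A)).filter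
          (fun g => ConjClasses.mk g = c))
            = ({rep c, b * rep c * b⁻¹} : Finset G) := by
        ext g
        simp only [Finset.mem_filter, Finset.mem_univ, true_and,
          Finset.mem_insert, Finset.mem_singleton]
        constructor
        · rintro ⟨hgA, hmk⟩
          have := ConjClasses.mem_carrier_iff_mk_eq.mpr hmk
          rwa [hcar] at this
        · rintro (rfl | rfl)
          · exact ⟨hc.2, mk_rep c⟩
          · exact ⟨sigmaA hidx hb hc.2, by rw [mk_conj, mk_rep]⟩
      rw [hset]
      by_cases hfx : b * rep c * b⁻¹ = rep c
      · rw [if_pos hfx, hfx]; simp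
      · rw [if_neg hfx]
        exact Finset.card_pair (fun h => hfx h.symm)
    have hsum : (Finset.univ.filter (fun g : G => g ∈ A)).card
        = ∑ c ∈ s, (if b * rep c * b⁻¹ = rep c then (1:ℕ) else 2) := by
      rw [Finset.card_eq_sum_card_fiberwise hfib]
      exact Finset.sum_congr rfl hfiber
    have hsplit : (∑ c ∈ s, (if b * rep c * b⁻¹ = rep c then (1:ℕ) else 2))
        = f + 2 * p := by
      have h5 : ∀ c ∈ s, (if b * rep c * b⁻¹ = rep c then (1:ℕ) else 2)
          = (if b * rep c * b⁻¹ = rep c then 1 else 0)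
            + 2 * (if ¬ (b * rep c * b⁻¹ = rep c) then 1 else 0) :=
        fun c _ => ite_split12 _
      rw [Finset.sum_congr rfl h5, Finset.sum_add_distrib, ← Finset.mul_sum]
      congr 1
      · rw [hf, Finset.card_filter]
      · congr 1
        rw [hp, Finset.card_filter]
    rw [hn, hcA, hsum, hsplit]
  rw [hN, hNval, hdt]
  have hmd : m = d + p := by omega
  have hnd : n = d + 2 * p := by omega
  rw [hmd, hnd]
  ring
end

section
/- Let G be a non-abelian finite group admitting an abelian subgroup A of index 2. Then |G| times the number of ordered triples (C₁, C₂, C₃) of conjugacy classes of G with C₃ ⊆ C₁·C₂ (setwise product) equals the sum over all g ∈ G of |C_G(g)|², where C_G(g) is the centralizer of g in G. (This expresses that G is triply transitive: the lower bound dim T₀(G) coincides with the upper bound dim 𝒯̃(G) for the dimension of the Terwilliger algebra of G.) -/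
open scoped Pointwise

private lemma key_aux {G : Type*} [Group G] (A : Subgroup G)
    (hcomm : ∀ x ∈ A, ∀ y ∈ A, x * y = y * x) (b : G) (hb : b ∉ A)
    (hprod : ∀ g h : G, g ∉ A → h ∉ A → g * h ∈ A)
    (x y y' : G) (hy : IsConj y y') (hxy : IsConj (x * y) (x * y')) :
    ∃ g : G, g * x * g⁻¹ = x ∧ g * y * g⁻¹ = y' := by
  have hinv : ∀ g : G, g ∉ A → g⁻¹ ∉ A := fun g hg h => hg (by simpa using A.inv_mem h)
  have hfix : ∀ u ∈ A, ∀ c ∈ A, c * u * c⁻¹ = u := by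
    intro u hu c hc
    rw [hcomm c hc u hu, mul_inv_cancel_right]
  have S1 : ∀ u ∈ A, ∀ g : G, g ∉ A → g * u * g⁻¹ = b * u * b⁻¹ := by
    intro u hu g hg
    have ha : b⁻¹ * g ∈ A := hprod _ _ (hinv b hb) hg
    calc g * u * g⁻¹ = b * ((b⁻¹ * g) * u * (b⁻¹ * g)⁻¹) * b⁻¹ := by group
      _ = b * u * b⁻¹ := by rw [hfix u hu _ ha]
  have S2 : ∀ u ∈ A, ∀ g : G, g ∉ A → g * u * g⁻¹ ∈ A := by
    intro u hu g hg
    have h1 : g * u ∉ A := by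
      intro h
      exact hg (by simpa [mul_assoc] using A.mul_mem h (A.inv_mem hu))
    simpa [mul_assoc] using hprod _ _ h1 (hinv g hg)
  have S3 : ∀ u ∈ A, b * (b * u * b⁻¹) * b⁻¹ = u := by
    intro u hu
    have hb2 : b * b ∈ A := hprod b b hb hb
    calc b * (b * u * b⁻¹) * b⁻¹ = (b * b) * u * (b * b)⁻¹ := by group
      _ = u := hfix u hu _ hb2
  have S4 : ∀ u ∈ A, ∀ g : G, g * u * g⁻¹ = u ∨ g * u * g⁻¹ = b * u * b⁻¹ := by
    intro u hu g
    by_cases hg : g ∈ A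
    · exact Or.inl (hfix u hu g hg)
    · exact Or.inr (S1 u hu g hg)
  have S5 : ∀ g : G, g ∉ A → y ∉ A → ∃ a ∈ A, a * y * a⁻¹ = g * y * g⁻¹ := by
    intro g hg hyA
    have htA : y⁻¹ * g ∈ A := hprod _ _ (hinv y hyA) hg
    set t := y⁻¹ * g with ht
    have haA : b * t * b⁻¹ ∈ A := S2 t htA b hb
    refine ⟨b * t * b⁻¹, haA, ?_⟩
    have h1 : y⁻¹ * (b * t * b⁻¹) * y = t := by
      have := S1 _ haA y⁻¹ (hinv y hyA)
      rw [inv_inv] at this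
      rw [this, S3 t htA]
    have h2 : (b * t * b⁻¹) * y = y * t := by
      calc (b * t * b⁻¹) * y = y * (y⁻¹ * (b * t * b⁻¹) * y) := by group
        _ = y * t := by rw [h1]
    have h3 : y * t⁻¹ * y⁻¹ = b * t⁻¹ * b⁻¹ := S1 t⁻¹ (A.inv_mem htA) y hyA
    calc (b * t * b⁻¹) * y * (b * t * b⁻¹)⁻¹ = (b * t * b⁻¹ * y) * (b * t⁻¹ * b⁻¹) := by group
      _ = y * t * (y * t⁻¹ * y⁻¹) := by rw [h2, h3]
      _ = (y * t) * y * (y * t)⁻¹ := by group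
      _ = g * y * g⁻¹ := by rw [ht, mul_inv_cancel_left]
  obtain ⟨d, hd⟩ := isConj_iff.mp hy
  by_cases hxA : x ∈ A
  · by_cases hbx : b * x * b⁻¹ = x
    · refine ⟨d, ?_, hd⟩
      rcases S4 x hxA d with h | h
      · exact h
      · exact h.trans hbx
    · by_cases hdA : d ∈ A
      · exact ⟨d, hfix x hxA d hdA, hd⟩
      · by_cases hyA : y ∈ A
        · have hy' : b * y * b⁻¹ = y' := by rw [← S1 y hyA d hdA, hd]
          by_cases hby : b * y * b⁻¹ = y
          · exact ⟨1, by group, by rw [one_mul, inv_one, mul_one, ← hy', hby]⟩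
          · exfalso
            obtain ⟨e, he⟩ := isConj_iff.mp hxy
            have hxyA : x * y ∈ A := A.mul_mem hxA hyA
            rcases S4 (x * y) hxyA e with h | h
            · have h1 : x * y = x * y' := by rw [← he, h]
              have h2 : y = y' := mul_left_cancel h1
              exact hby (hy'.trans h2.symm)
            · have h1 : b * (x * y) * b⁻¹ = x * (b * y * b⁻¹) := by rw [← h, he, hy']
              have h2 : (b * x * b⁻¹) * (b * y * b⁻¹) = x * (b * y * b⁻¹) := by
                rw [← h1]; group
              exact hbx (mul_right_cancel h2)
        · obtain ⟨a, haA, ha⟩ := S5 d hdA hyA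
          exact ⟨a, hfix x hxA a haA, ha.trans hd⟩
  · by_cases hyA : y ∈ A
    · rcases S4 y hyA d with h | h
      · refine ⟨1, by group, ?_⟩
        rw [one_mul, inv_one, mul_one, ← hd, h]
      · refine ⟨x, by group, ?_⟩
        rw [S1 y hyA x hxA, ← h, hd]
    · obtain ⟨e, he⟩ := isConj_iff.mp hxy
      have hxyA : x * y ∈ A := hprod x y hxA hyA
      rcases S4 (x * y) hxyA e with h | h
      · have h1 : x * y = x * y' := by rw [← he, h]
        refine ⟨1, by group, ?_⟩
        rw [one_mul, inv_one, mul_one, mul_left_cancel h1]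
      · have h1 : x * y' = x * (x * y) * x⁻¹ := by
          rw [← he, h, ← S1 (x * y) hxyA x hxA]
        have h2 : x * y' = x * (x * y * x⁻¹) := h1.trans (by group)
        exact ⟨x, by group, (mul_left_cancel h2).symm⟩

private lemma key_full {G : Type*} [Group G] (A : Subgroup G)
    (hcomm : ∀ x ∈ A, ∀ y ∈ A, x * y = y * x) (b : G) (hb : b ∉ A)
    (hprod : ∀ g h : G, g ∉ A → h ∉ A → g * h ∈ A)
    (x y x' y' : G) (hx : IsConj x x') (hy : IsConj y y')
    (hxy : IsConj (x * y) (x' * y')) :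
    ∃ g : G, g * x * g⁻¹ = x' ∧ g * y * g⁻¹ = y' := by
  obtain ⟨c, hc⟩ := isConj_iff.mp hx
  have hy2 : IsConj y (c⁻¹ * y' * c) := by
    refine hy.trans (isConj_iff.mpr ⟨c⁻¹, by group⟩)
  have hxy2 : IsConj (x * y) (x * (c⁻¹ * y' * c)) := by
    have h1 : x * (c⁻¹ * y' * c) = c⁻¹ * (x' * y') * c := by rw [← hc]; group
    rw [h1]
    exact hxy.trans (isConj_iff.mpr ⟨c⁻¹, by group⟩)
  obtain ⟨g, hg1, hg2⟩ := key_aux A hcomm b hb hprod x y (c⁻¹ * y' * c) hy2 hxy2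
  refine ⟨c * g, ?_, ?_⟩
  · calc (c * g) * x * (c * g)⁻¹ = c * (g * x * g⁻¹) * c⁻¹ := by group
      _ = x' := by rw [hg1, hc]
  · calc (c * g) * y * (c * g)⁻¹ = c * (g * y * g⁻¹) * c⁻¹ := by group
      _ = y' := by rw [hg2]; group


/-- Let `G` be a non-abelian finite group admitting an abelian subgroup `A` of index 2.
Then `|G|` times the number of ordered triples `(C₁, C₂, C₃)` of conjugacy classes of `G`
with `C₃ ⊆ C₁ * C₂` (setwise product) equals `∑ g ∈ G, |C_G(g)|²`, where `C_G(g)` is the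
centralizer of `g` in `G`.  (This expresses that `G` is triply transitive: the lower bound
`dim T₀(G)` coincides with the upper bound `dim 𝒯̃(G)` for the dimension of the
Terwilliger algebra of `G`.) -/
theorem stmt_9 {G : Type*} [Group G] [Fintype G]
    (hG : ¬ ∀ x y : G, x * y = y * x) (A : Subgroup G)
    (hcomm : ∀ x ∈ A, ∀ y ∈ A, x * y = y * x) (hidx : A.index = 2) :
    Fintype.card G * Nat.card {T : ConjClasses G × ConjClasses G × ConjClasses G //
        T.2.2.carrier ⊆ T.1.carrier * T.2.1.carrier}
      = ∑ g : G, (Nat.card {x : G // x * g = g * x}) ^ 2 := by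
  classical
  obtain ⟨b, hb⟩ : ∃ b : G, b ∉ A := by
    by_contra h
    push_neg at h
    have hA : A = ⊤ := by rw [Subgroup.eq_top_iff']; exact h
    rw [hA, Subgroup.index_top] at hidx
    omega
  have hprod : ∀ g h : G, g ∉ A → h ∉ A → g * h ∈ A := fun g h hg hh =>
    (Subgroup.mul_mem_iff_of_index_two hidx).mpr (iff_of_false hg hh)
  -- the conjugation action of `ConjAct G` on `G × G`
  haveI : Fintype (ConjAct G) := ‹Fintype G›
  haveI : ∀ a : ConjAct G, Fintype (MulAction.fixedBy (G × G) a) := fun _ => Fintype.ofFinite _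
  haveI : Fintype (Quotient (MulAction.orbitRel (ConjAct G) (G × G))) := Fintype.ofFinite _
  -- the map from pairs to triples of conjugacy classes
  have hsub : ∀ p : G × G, (ConjClasses.mk (p.1 * p.2)).carrier ⊆
      (ConjClasses.mk p.1).carrier * (ConjClasses.mk p.2).carrier := by
    rintro ⟨u, v⟩ z hz
    rw [ConjClasses.mem_carrier_iff_mk_eq, ConjClasses.mk_eq_mk_iff_isConj, isConj_comm,
      isConj_iff] at hz
    obtain ⟨c, hc⟩ := hz
    have h1 : c * u * c⁻¹ ∈ (ConjClasses.mk u).carrier := by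
      rw [ConjClasses.mem_carrier_iff_mk_eq, ConjClasses.mk_eq_mk_iff_isConj]
      exact (isConj_iff.mpr ⟨c, rfl⟩).symm
    have h2 : c * v * c⁻¹ ∈ (ConjClasses.mk v).carrier := by
      rw [ConjClasses.mem_carrier_iff_mk_eq, ConjClasses.mk_eq_mk_iff_isConj]
      exact (isConj_iff.mpr ⟨c, rfl⟩).symm
    have hz' : z = (c * u * c⁻¹) * (c * v * c⁻¹) := by rw [← hc]; group
    rw [hz']
    exact Set.mul_mem_mul h1 h2
  set f : G × G → {T : ConjClasses G × ConjClasses G × ConjClasses G //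
      T.2.2.carrier ⊆ T.1.carrier * T.2.1.carrier} :=
    fun p => ⟨(ConjClasses.mk p.1, ConjClasses.mk p.2, ConjClasses.mk (p.1 * p.2)), hsub p⟩
    with hf
  have hmk : ∀ (a : ConjAct G) (u : G), ConjClasses.mk (a • u) = ConjClasses.mk u := by
    intro a u
    rw [ConjAct.smul_def, ConjClasses.mk_eq_mk_iff_isConj]
    exact (isConj_iff.mpr ⟨ConjAct.ofConjAct a, rfl⟩).symm
  have hwd : ∀ p q : G × G, MulAction.orbitRel (ConjAct G) (G × G) p q → f p = f q := by
    intro p q hpq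
    rw [MulAction.orbitRel_apply, MulAction.mem_orbit_iff] at hpq
    obtain ⟨a, ha⟩ := hpq
    have h1 : p.1 = a • q.1 := by rw [← ha]; rfl
    have h2 : p.2 = a • q.2 := by rw [← ha]; rfl
    apply Subtype.ext
    show (_, _, _) = (_, _, _)
    rw [h1, h2]
    have h3 : a • q.1 * a • q.2 = a • (q.1 * q.2) := by
      rw [ConjAct.smul_def, ConjAct.smul_def, ConjAct.smul_def]; group
    rw [h3, hmk, hmk, hmk]
  set F : Quotient (MulAction.orbitRel (ConjAct G) (G × G)) →
      {T : ConjClasses G × ConjClasses G × ConjClasses G //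
        T.2.2.carrier ⊆ T.1.carrier * T.2.1.carrier} := Quotient.lift f hwd with hF
  have hinj : Function.Injective F := by
    rintro ⟨p⟩ ⟨q⟩ h
    have h' : f p = f q := h
    have h1 : ConjClasses.mk p.1 = ConjClasses.mk q.1 := congrArg (fun t => t.1.1) h'
    have h2 : ConjClasses.mk p.2 = ConjClasses.mk q.2 := congrArg (fun t => t.1.2.1) h'
    have h3 : ConjClasses.mk (p.1 * p.2) = ConjClasses.mk (q.1 * q.2) :=
      congrArg (fun t => t.1.2.2) h'
    rw [ConjClasses.mk_eq_mk_iff_isConj] at h1 h2 h3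
    obtain ⟨g, hg1, hg2⟩ := key_full A hcomm b hb hprod p.1 p.2 q.1 q.2 h1 h2 h3
    apply Quotient.sound
    refine MulAction.orbitRel_apply.mpr (MulAction.mem_orbit_iff.mpr ⟨(ConjAct.toConjAct g)⁻¹, ?_⟩)
    rw [inv_smul_eq_iff]
    have e1 : (ConjAct.toConjAct g • p).1 = q.1 := by
      show ConjAct.toConjAct g • p.1 = q.1
      rw [ConjAct.smul_def, ConjAct.ofConjAct_toConjAct, hg1]
    have e2 : (ConjAct.toConjAct g • p).2 = q.2 := by
      show ConjAct.toConjAct g • p.2 = q.2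
      rw [ConjAct.smul_def, ConjAct.ofConjAct_toConjAct, hg2]
    exact Prod.ext e1.symm e2.symm
  have hsurj : Function.Surjective F := by
    rintro ⟨⟨C₁, C₂, C₃⟩, hT⟩
    obtain ⟨z, hz⟩ := ConjClasses.exists_rep C₃
    have hzc : z ∈ C₃.carrier := ConjClasses.mem_carrier_iff_mk_eq.mpr hz
    obtain ⟨u, hu, v, hv, huv⟩ := Set.mem_mul.mp (hT hzc)
    refine ⟨Quotient.mk _ (u, v), ?_⟩
    apply Subtype.ext
    show (ConjClasses.mk u, ConjClasses.mk v, ConjClasses.mk (u * v)) = (C₁, C₂, C₃)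
    rw [ConjClasses.mem_carrier_iff_mk_eq.mp hu, ConjClasses.mem_carrier_iff_mk_eq.mp hv,
      huv, hz]
  have hcard : Nat.card {T : ConjClasses G × ConjClasses G × ConjClasses G //
      T.2.2.carrier ⊆ T.1.carrier * T.2.1.carrier}
      = Fintype.card (Quotient (MulAction.orbitRel (ConjAct G) (G × G))) := by
    rw [← Nat.card_eq_fintype_card]
    exact (Nat.card_congr (Equiv.ofBijective F ⟨hinj, hsurj⟩)).symm
  have hterm : ∀ a : ConjAct G,
      Fintype.card (MulAction.fixedBy (G × G) a) =
        Nat.card {x : G // x * ConjAct.ofConjAct a = ConjAct.ofConjAct a * x} ^ 2 := by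
    intro a
    rw [← Nat.card_eq_fintype_card]
    have e1 : MulAction.fixedBy (G × G) a ≃
        MulAction.fixedBy G a × MulAction.fixedBy G a :=
      { toFun := fun p => (⟨p.1.1, congrArg Prod.fst p.2⟩, ⟨p.1.2, congrArg Prod.snd p.2⟩)
        invFun := fun q => ⟨(q.1.1, q.2.1), Prod.ext q.1.2 q.2.2⟩
        left_inv := fun p => rfl
        right_inv := fun q => rfl }
    have e2 : MulAction.fixedBy G a ≃
        {x : G // x * ConjAct.ofConjAct a = ConjAct.ofConjAct a * x} := by
      apply Equiv.subtypeEquivRight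
      intro x
      rw [MulAction.mem_fixedBy, ConjAct.smul_def, mul_inv_eq_iff_eq_mul]
      exact eq_comm
    rw [Nat.card_congr (e1.trans (Equiv.prodCongr e2 e2)), Nat.card_prod, sq]
  have hburn := MulAction.sum_card_fixedBy_eq_card_orbits_mul_card_group (ConjAct G) (G × G)
  have hsum : ∑ a : ConjAct G, Fintype.card (MulAction.fixedBy (G × G) a)
      = ∑ g : G, (Nat.card {x : G // x * g = g * x}) ^ 2 := by
    calc ∑ a : ConjAct G, Fintype.card (MulAction.fixedBy (G × G) a)
        = ∑ g : G, Fintype.card (MulAction.fixedBy (G × G) (ConjAct.toConjAct g)) :=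
          (Equiv.sum_comp ConjAct.toConjAct.toEquiv _).symm
      _ = ∑ g : G, (Nat.card {x : G // x * g = g * x}) ^ 2 := by
          refine Finset.sum_congr rfl fun g _ => ?_
          rw [hterm, ConjAct.ofConjAct_toConjAct]
  have hcardG : Fintype.card (ConjAct G) = Fintype.card G :=
    Fintype.card_congr ConjAct.toConjAct.toEquiv.symm
  rw [hcard, ← hsum, hburn, hcardG, mul_comm]
end

section
/- Let A be a finite abelian group of order n ≥ 3 whose exponent is greater than 2, and let G be the generalized dihedral group of A, i.e., G contains A as a subgroup of index 2 and there is b ∈ G \ A with b² = 1 and b·a·b⁻¹ = a⁻¹ for all a ∈ A. Let d = [A : A²], where A² = {a² : a ∈ A}. Then twice the number of ordered triples (C₁, C₂, C₃) of conjugacy classes of G with C₃ ⊆ C₁·C₂ (setwise product) equals n² + 3nd + 4d². -/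
open scoped Pointwise
open ConjClasses

structure DihSetup (G : Type*) [Group G] where
  A : Subgroup G
  A2 : Subgroup G
  b : G
  hcomm : ∀ x ∈ A, ∀ y ∈ A, x * y = y * x
  hidx : A.index = 2
  hb : b ∉ A
  hb2 : b ^ 2 = 1
  hinv : ∀ a ∈ A, b * a * b⁻¹ = a⁻¹
  hA2 : (A2 : Set G) = {x : G | ∃ a ∈ A, a ^ 2 = x}
  hA2A : A2 ≤ A

namespace DihSetup
variable {G : Type*} [Group G] (S : DihSetup G)

lemma bb : S.b * S.b = 1 := by have := S.hb2; rwa [pow_two] at this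

lemma binv : S.b⁻¹ = S.b := by
  rw [inv_eq_iff_mul_eq_one, S.bb]

lemma b_mul (a : G) (ha : a ∈ S.A) : S.b * a = a⁻¹ * S.b := by
  have h := S.hinv a ha
  calc S.b * a = (S.b * a * S.b⁻¹) * S.b := by group
    _ = a⁻¹ * S.b := by rw [h]

lemma mul_b (a : G) (ha : a ∈ S.A) : a * S.b = S.b * a⁻¹ := by
  have := S.b_mul a⁻¹ (inv_mem ha); rw [inv_inv] at this; exact this.symm

lemma mem_A2_iff (x : G) : x ∈ S.A2 ↔ ∃ a ∈ S.A, a ^ 2 = x := by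
  have : x ∈ (S.A2 : Set G) ↔ x ∈ {x : G | ∃ a ∈ S.A, a ^ 2 = x} := by rw [S.hA2]
  simpa using this

lemma sq_mem_A2 (a : G) (ha : a ∈ S.A) : a ^ 2 ∈ S.A2 :=
  (S.mem_A2_iff _).2 ⟨a, ha, rfl⟩

lemma b_not_eq_mem (a : G) (ha : a ∈ S.A) : S.b * a ∉ S.A := fun h => by
  have : S.b * a * a⁻¹ ∈ S.A := mul_mem h (inv_mem ha)
  simp only [mul_inv_cancel_right] at this
  exact S.hb this

lemma mem_b_mul (g : G) (hg : g ∉ S.A) : S.b * g ∈ S.A := by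
  rw [Subgroup.mul_mem_iff_of_index_two S.hidx]
  exact iff_of_false S.hb hg

lemma decomp (g : G) : g ∈ S.A ∨ ∃ a ∈ S.A, g = S.b * a := by
  by_cases h : g ∈ S.A
  · exact Or.inl h
  · exact Or.inr ⟨S.b * g, S.mem_b_mul g h, by rw [← mul_assoc, S.bb, one_mul]⟩

lemma conj_mem (a : G) (ha : a ∈ S.A) (g : G) :
    g * a * g⁻¹ = a ∨ g * a * g⁻¹ = a⁻¹ := by
  rcases S.decomp g with hg | ⟨c, hc, rfl⟩
  · left; rw [S.hcomm g hg a ha]; group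
  · right
    have hinvc : (S.b * c)⁻¹ = c⁻¹ * S.b⁻¹ := by rw [mul_inv_rev]
    rw [hinvc]
    have h1 : c * a * c⁻¹ = a := by rw [S.hcomm c hc a ha]; group
    calc S.b * c * a * (c⁻¹ * S.b⁻¹) = S.b * (c * a * c⁻¹) * S.b⁻¹ := by group
      _ = S.b * a * S.b⁻¹ := by rw [h1]
      _ = a⁻¹ := S.hinv a ha

lemma isConj_inv (a : G) (ha : a ∈ S.A) : IsConj a a⁻¹ :=
  isConj_iff.2 ⟨S.b, S.hinv a ha⟩

lemma mkA_eq_iff (a a' : G) (ha : a ∈ S.A) :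
    ConjClasses.mk a = ConjClasses.mk a' ↔ a' = a ∨ a' = a⁻¹ := by
  constructor
  · intro h
    obtain ⟨c, hc⟩ := isConj_iff.1 (ConjClasses.mk_eq_mk_iff_isConj.1 h)
    rcases S.conj_mem a ha c with h1 | h1
    · exact Or.inl (by rw [← hc, h1])
    · exact Or.inr (by rw [← hc, h1])
  · rintro (rfl | rfl)
    · rfl
    · exact ConjClasses.mk_eq_mk_iff_isConj.2 (S.isConj_inv a ha)

lemma conj_by_mem (a c : G) (ha : a ∈ S.A) (hc : c ∈ S.A) :
    c⁻¹ * (S.b * a) * (c⁻¹)⁻¹ = S.b * (a * c ^ 2) := by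
  have h1 : c⁻¹ * S.b = S.b * c := by
    have := S.mul_b c⁻¹ (inv_mem hc); rwa [inv_inv] at this
  have h2 : c * a = a * c := S.hcomm c hc a ha
  calc c⁻¹ * (S.b * a) * (c⁻¹)⁻¹ = (c⁻¹ * S.b) * (a * c) := by group
    _ = S.b * (c * a * c) := by rw [h1]; group
    _ = S.b * (a * c ^ 2) := by rw [h2, pow_two]; group

lemma conj_refl (a : G) (ha : a ∈ S.A) (g : G) :
    ∃ z ∈ S.A2, g * (S.b * a) * g⁻¹ = S.b * (a * z) := by
  rcases S.decomp g with hg | ⟨c, hc, rfl⟩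
  · refine ⟨(g⁻¹) ^ 2, S.sq_mem_A2 _ (inv_mem hg), ?_⟩
    have h1 : g * S.b = S.b * g⁻¹ := S.mul_b g hg
    have h2 : g⁻¹ * a = a * g⁻¹ := S.hcomm _ (inv_mem hg) a ha
    calc g * (S.b * a) * g⁻¹ = (g * S.b) * (a * g⁻¹) := by group
      _ = S.b * (g⁻¹ * a * g⁻¹) := by rw [h1]; group
      _ = S.b * (a * g⁻¹ ^ 2) := by rw [h2]; group
  · refine ⟨(a⁻¹ * c) ^ 2, S.sq_mem_A2 _ (mul_mem (inv_mem ha) hc), ?_⟩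
    have h1 : c * S.b = S.b * c⁻¹ := S.mul_b c hc
    have hx : (c⁻¹ * a * c⁻¹) ∈ S.A := mul_mem (mul_mem (inv_mem hc) ha) (inv_mem hc)
    have h2 : (c⁻¹ * a * c⁻¹) * S.b = S.b * (c⁻¹ * a * c⁻¹)⁻¹ := S.mul_b _ hx
    calc (S.b * c) * (S.b * a) * (S.b * c)⁻¹
        = S.b * (c * S.b) * a * c⁻¹ * S.b⁻¹ := by group
      _ = (S.b * S.b) * (c⁻¹ * a * c⁻¹) * S.b⁻¹ := by rw [h1]; group
      _ = (c⁻¹ * a * c⁻¹) * S.b := by rw [S.bb, S.binv]; group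
      _ = S.b * (c⁻¹ * a * c⁻¹)⁻¹ := by rw [h2]
      _ = S.b * (a * (a⁻¹ * c) ^ 2) := by rw [pow_two]; group

lemma mkB_eq_iff (a a' : G) (ha : a ∈ S.A) (ha' : a' ∈ S.A) :
    ConjClasses.mk (S.b * a) = ConjClasses.mk (S.b * a') ↔ a⁻¹ * a' ∈ S.A2 := by
  constructor
  · intro h
    obtain ⟨c, hc⟩ := isConj_iff.1 (ConjClasses.mk_eq_mk_iff_isConj.1 h)
    obtain ⟨z, hz, hzeq⟩ := S.conj_refl a ha c
    rw [hzeq] at hc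
    have : a' = a * z := by
      have := mul_left_cancel hc
      exact this.symm
    rw [this]
    simpa using hz
  · intro h
    obtain ⟨c, hc, hc2⟩ := (S.mem_A2_iff _).1 h
    have := S.conj_by_mem a c ha hc
    rw [hc2] at this
    rw [mul_inv_cancel_left] at this
    exact ConjClasses.mk_eq_mk_iff_isConj.2 (isConj_iff.2 ⟨c⁻¹, this⟩)

lemma carrier_mkA (a : G) (ha : a ∈ S.A) :
    (ConjClasses.mk a).carrier = {a, a⁻¹} := by
  ext x
  rw [ConjClasses.mem_carrier_iff_mk_eq]
  constructor
  · intro h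
    have := (S.mkA_eq_iff a x ha).1 h.symm
    simpa [Set.mem_insert_iff] using this
  · rintro (rfl | rfl)
    · rfl
    · exact (ConjClasses.mk_eq_mk_iff_isConj.2 (S.isConj_inv a ha)).symm

lemma carrier_mkB (a : G) (ha : a ∈ S.A) :
    (ConjClasses.mk (S.b * a)).carrier = {x | ∃ z ∈ S.A2, x = S.b * (a * z)} := by
  ext x
  rw [ConjClasses.mem_carrier_iff_mk_eq]
  constructor
  · intro h
    obtain ⟨c, hc⟩ := isConj_iff.1 (ConjClasses.mk_eq_mk_iff_isConj.1 h.symm)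
    obtain ⟨z, hz, hzeq⟩ := S.conj_refl a ha c
    exact ⟨z, hz, by rw [← hc, hzeq]⟩
  · rintro ⟨z, hz, rfl⟩
    have hmem : a * z ∈ S.A := mul_mem ha (S.hA2A hz)
    have := (S.mkB_eq_iff a (a * z) ha hmem).2 (by simpa using hz)
    exact this.symm

lemma subset_prod_congr {C₁ C₁' C₂ C₂' C₃ : ConjClasses G} (h1 : C₁ = C₁') (h2 : C₂ = C₂')
    (h : C₃.carrier ⊆ C₁.carrier * C₂.carrier) : C₃.carrier ⊆ C₁'.carrier * C₂'.carrier := by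
  subst h1; subst h2; exact h

lemma carrier_subset_iff (C D : ConjClasses G) : C.carrier ⊆ D.carrier ↔ C = D := by
  constructor
  · intro h
    obtain ⟨x, hx⟩ := C.exists_rep
    have hx1 : x ∈ C.carrier := ConjClasses.mem_carrier_iff_mk_eq.2 hx
    have := ConjClasses.mem_carrier_iff_mk_eq.1 (h hx1)
    rw [← hx, this]
  · rintro rfl; exact subset_rfl

/-- `C` is a class of an element of `A`. -/
def pA (C : ConjClasses G) : Prop := ∃ a, a ∈ S.A ∧ C = ConjClasses.mk a

/-- `C` is a reflection class. -/
def pB (C : ConjClasses G) : Prop := ∃ a, a ∈ S.A ∧ C = ConjClasses.mk (S.b * a)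

/-- `C` is a singleton class of an involution in `A`. -/
def pS (C : ConjClasses G) : Prop := ∃ a, a ∈ S.A ∧ C = ConjClasses.mk a ∧ a ^ 2 = 1

/-- `C` is a two-element class of an `A`-element. -/
def pNS (C : ConjClasses G) : Prop := ∃ a, a ∈ S.A ∧ C = ConjClasses.mk a ∧ a ^ 2 ≠ 1

lemma pA_or_pB (C : ConjClasses G) : S.pA C ∨ S.pB C := by
  obtain ⟨g, hg⟩ := C.exists_rep
  rcases S.decomp g with h | ⟨a, haA, rfl⟩
  · exact Or.inl ⟨g, h, hg.symm⟩
  · exact Or.inr ⟨a, haA, hg.symm⟩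

lemma not_pA_pB (C : ConjClasses G) (h1 : S.pA C) (h2 : S.pB C) : False := by
  obtain ⟨a, ha, rfl⟩ := h1
  obtain ⟨a', ha', he⟩ := h2
  rcases (S.mkA_eq_iff a (S.b * a') ha).1 he with h | h
  · exact S.b_not_eq_mem a' ha' (h ▸ ha)
  · exact S.b_not_eq_mem a' ha' (h ▸ inv_mem ha)

lemma sq_eq_one_congr (a a₁ : G) (ha : a ∈ S.A)
    (h : ConjClasses.mk a = ConjClasses.mk a₁) : a ^ 2 = 1 ↔ a₁ ^ 2 = 1 := by
  rcases (S.mkA_eq_iff a a₁ ha).1 h with rfl | rfl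
  · rfl
  · rw [inv_pow, inv_eq_one]

lemma inv_eq_of_sq (a : G) (h : a ^ 2 = 1) : a⁻¹ = a := by
  rw [pow_two] at h
  rw [inv_eq_iff_mul_eq_one, h]

lemma mk_eq_of_sq (a a' : G) (ha : a ∈ S.A) (ha' : a' ∈ S.A)
    (h : a ^ 2 = 1 ∨ a' ^ 2 = 1) :
    ConjClasses.mk (a * a') = ConjClasses.mk (a * a'⁻¹) := by
  rcases h with h | h
  · have e : a * a'⁻¹ = (a * a')⁻¹ := by
      rw [mul_inv_rev, S.hcomm a'⁻¹ (inv_mem ha') a⁻¹ (inv_mem ha), inv_eq_of_sq a h]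
    rw [e]
    exact ConjClasses.mk_eq_mk_iff_isConj.2 (S.isConj_inv _ (mul_mem ha ha'))
  · rw [inv_eq_of_sq a' h]

lemma mk_ne_of_sq (a a' : G) (ha : a ∈ S.A) (ha' : a' ∈ S.A)
    (h : a ^ 2 ≠ 1) (h' : a' ^ 2 ≠ 1) :
    ConjClasses.mk (a * a') ≠ ConjClasses.mk (a * a'⁻¹) := by
  intro he
  rcases (S.mkA_eq_iff _ _ (mul_mem ha ha')).1 he with h1 | h1
  · apply h'
    have : a'⁻¹ = a' := by
      have := mul_left_cancel h1
      exact this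
    rw [pow_two]
    nth_rewrite 1 [← this]
    rw [inv_mul_cancel]
  · apply h
    have e : (a * a')⁻¹ = a⁻¹ * a'⁻¹ := by
      rw [mul_inv_rev, S.hcomm a'⁻¹ (inv_mem ha') a⁻¹ (inv_mem ha)]
    rw [e] at h1
    have : a = a⁻¹ := mul_right_cancel h1
    rw [pow_two]
    nth_rewrite 2 [this]
    rw [mul_inv_cancel]

lemma subset_AA_iff (a a' : G) (ha : a ∈ S.A) (ha' : a' ∈ S.A) (C₃ : ConjClasses G) :
    C₃.carrier ⊆ (ConjClasses.mk a).carrier * (ConjClasses.mk a').carrier ↔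
      C₃ = ConjClasses.mk (a * a') ∨ C₃ = ConjClasses.mk (a * a'⁻¹) := by
  rw [S.carrier_mkA a ha, S.carrier_mkA a' ha']
  constructor
  · intro h
    obtain ⟨x, hx⟩ := C₃.exists_rep
    have hx1 : x ∈ C₃.carrier := ConjClasses.mem_carrier_iff_mk_eq.2 hx
    obtain ⟨u, hu, v, hv, huv⟩ := Set.mem_mul.1 (h hx1)
    subst hx
    simp only [Set.mem_insert_iff, Set.mem_singleton_iff] at hu hv
    rcases hu with hu | hu <;> rcases hv with hv | hv <;> rw [hu, hv] at huv
    · left; rw [← huv]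
    · right; rw [← huv]
    · right
      rw [← huv]
      have e : a⁻¹ * a' = (a * a'⁻¹)⁻¹ := by
        rw [mul_inv_rev, inv_inv]
        exact S.hcomm a⁻¹ (inv_mem ha) a' ha'
      rw [e]
      exact (ConjClasses.mk_eq_mk_iff_isConj.2
        (S.isConj_inv _ (mul_mem ha (inv_mem ha')))).symm
    · left
      rw [← huv]
      have e : a⁻¹ * a'⁻¹ = (a * a')⁻¹ := by
        rw [mul_inv_rev]
        exact S.hcomm a⁻¹ (inv_mem ha) a'⁻¹ (inv_mem ha')
      rw [e]
      exact (ConjClasses.mk_eq_mk_iff_isConj.2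
        (S.isConj_inv _ (mul_mem ha ha'))).symm
  · intro h
    have key : ∀ c, c ∈ S.A → c = a * a' ∨ c = a * a'⁻¹ →
        (ConjClasses.mk c).carrier ⊆ ({a, a⁻¹} : Set G) * {a', a'⁻¹} := by
      intro c hc hcs
      rw [S.carrier_mkA c hc]
      rintro x (rfl | rfl)
      · rcases hcs with rfl | rfl
        · exact Set.mem_mul.2 ⟨a, by simp, a', by simp, rfl⟩
        · exact Set.mem_mul.2 ⟨a, by simp, a'⁻¹, by simp, rfl⟩
      · rcases hcs with rfl | rfl
        · refine Set.mem_mul.2 ⟨a⁻¹, by simp, a'⁻¹, by simp, ?_⟩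
          rw [← mul_inv_rev, S.hcomm a' ha' a ha]
        · refine Set.mem_mul.2 ⟨a⁻¹, by simp, a', by simp, ?_⟩
          rw [(by group : (a * a'⁻¹)⁻¹ = a' * a⁻¹), S.hcomm a' ha' a⁻¹ (inv_mem ha)]
    rcases h with rfl | rfl
    · exact key _ (mul_mem ha ha') (Or.inl rfl)
    · exact key _ (mul_mem ha (inv_mem ha')) (Or.inr rfl)

lemma prod_AB (a a' : G) (ha : a ∈ S.A) (ha' : a' ∈ S.A) :
    (ConjClasses.mk a).carrier * (ConjClasses.mk (S.b * a')).carrier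
      = (ConjClasses.mk (S.b * (a' * a))).carrier := by
  rw [S.carrier_mkA a ha, S.carrier_mkB a' ha', S.carrier_mkB (a' * a) (mul_mem ha' ha)]
  ext x
  constructor
  · intro hx
    obtain ⟨u, hu, v, ⟨z, hz, rfl⟩, huv⟩ := Set.mem_mul.1 hx
    simp only [Set.mem_insert_iff, Set.mem_singleton_iff] at hu
    rcases hu with hu | hu <;> rw [hu] at huv
    · refine ⟨(a⁻¹) ^ 2 * z, mul_mem (S.sq_mem_A2 _ (inv_mem ha)) hz, ?_⟩
      rw [← huv]
      have h1 : a * S.b = S.b * a⁻¹ := S.mul_b a ha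
      calc a * (S.b * (a' * z)) = (a * S.b) * (a' * z) := by group
        _ = S.b * ((a⁻¹ * a') * z) := by rw [h1]; group
        _ = S.b * ((a' * a⁻¹) * z) := by rw [S.hcomm a⁻¹ (inv_mem ha) a' ha']
        _ = S.b * (a' * a * ((a⁻¹) ^ 2 * z)) := by rw [pow_two]; group
    · refine ⟨z, hz, ?_⟩
      rw [← huv]
      have h1 : a⁻¹ * S.b = S.b * a := by
        have := S.mul_b a⁻¹ (inv_mem ha); rwa [inv_inv] at this
      calc a⁻¹ * (S.b * (a' * z)) = (a⁻¹ * S.b) * (a' * z) := by group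
        _ = S.b * ((a * a') * z) := by rw [h1]; group
        _ = S.b * (a' * a * z) := by rw [S.hcomm a ha a' ha']
  · rintro ⟨z, hz, rfl⟩
    refine Set.mem_mul.2 ⟨a⁻¹, by simp, S.b * (a' * z), ⟨z, hz, rfl⟩, ?_⟩
    have h1 : a⁻¹ * S.b = S.b * a := by
      have := S.mul_b a⁻¹ (inv_mem ha); rwa [inv_inv] at this
    calc a⁻¹ * (S.b * (a' * z)) = (a⁻¹ * S.b) * (a' * z) := by group
      _ = S.b * ((a * a') * z) := by rw [h1]; group
      _ = S.b * (a' * a * z) := by rw [S.hcomm a ha a' ha']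

lemma prod_BA (a a' : G) (ha : a ∈ S.A) (ha' : a' ∈ S.A) :
    (ConjClasses.mk (S.b * a')).carrier * (ConjClasses.mk a).carrier
      = (ConjClasses.mk (S.b * (a' * a))).carrier := by
  rw [S.carrier_mkA a ha, S.carrier_mkB a' ha', S.carrier_mkB (a' * a) (mul_mem ha' ha)]
  ext x
  constructor
  · intro hx
    obtain ⟨v, ⟨z, hz, rfl⟩, u, hu, huv⟩ := Set.mem_mul.1 hx
    simp only [Set.mem_insert_iff, Set.mem_singleton_iff] at hu
    rcases hu with hu | hu <;> rw [hu] at huv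
    · refine ⟨z, hz, ?_⟩
      rw [← huv]
      have h2 : z * a = a * z := S.hcomm z (S.hA2A hz) a ha
      calc S.b * (a' * z) * a = S.b * (a' * (z * a)) := by group
        _ = S.b * (a' * a * z) := by rw [h2]; group
    · refine ⟨(a⁻¹) ^ 2 * z, mul_mem (S.sq_mem_A2 _ (inv_mem ha)) hz, ?_⟩
      rw [← huv]
      have h2 : z * a⁻¹ = a⁻¹ * z := S.hcomm z (S.hA2A hz) a⁻¹ (inv_mem ha)
      calc S.b * (a' * z) * a⁻¹ = S.b * (a' * (z * a⁻¹)) := by group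
        _ = S.b * (a' * (a⁻¹ * z)) := by rw [h2]
        _ = S.b * (a' * a * ((a⁻¹) ^ 2 * z)) := by rw [pow_two]; group
  · rintro ⟨z, hz, rfl⟩
    refine Set.mem_mul.2 ⟨S.b * (a' * z), ⟨z, hz, rfl⟩, a, by simp, ?_⟩
    have h2 : z * a = a * z := S.hcomm z (S.hA2A hz) a ha
    calc S.b * (a' * z) * a = S.b * (a' * (z * a)) := by group
      _ = S.b * (a' * a * z) := by rw [h2]; group

lemma refl_mul_refl (a a' z z' : G) (ha : a ∈ S.A) (ha' : a' ∈ S.A)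
    (hz : z ∈ S.A2) (hz' : z' ∈ S.A2) :
    (S.b * (a * z)) * (S.b * (a' * z')) = (a⁻¹ * a') * (z⁻¹ * z') := by
  have h1 : (a * z) * S.b = S.b * (a * z)⁻¹ := S.mul_b _ (mul_mem ha (S.hA2A hz))
  have h2 : z⁻¹ * (a⁻¹ * a') = (a⁻¹ * a') * z⁻¹ :=
    S.hcomm z⁻¹ (inv_mem (S.hA2A hz)) (a⁻¹ * a') (mul_mem (inv_mem ha) ha')
  calc (S.b * (a * z)) * (S.b * (a' * z')) = S.b * ((a * z) * S.b) * (a' * z') := by group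
    _ = (S.b * S.b) * ((a * z)⁻¹ * (a' * z')) := by rw [h1]; group
    _ = (a * z)⁻¹ * (a' * z') := by rw [S.bb, one_mul]
    _ = z⁻¹ * (a⁻¹ * a') * z' := by group
    _ = (a⁻¹ * a') * z⁻¹ * z' := by rw [h2]
    _ = (a⁻¹ * a') * (z⁻¹ * z') := by group

lemma prod_BB (a a' : G) (ha : a ∈ S.A) (ha' : a' ∈ S.A) :
    (ConjClasses.mk (S.b * a)).carrier * (ConjClasses.mk (S.b * a')).carrier
      = {x | ∃ z ∈ S.A2, x = (a⁻¹ * a') * z} := by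
  rw [S.carrier_mkB a ha, S.carrier_mkB a' ha']
  ext x
  constructor
  · intro hx
    obtain ⟨u, ⟨z, hz, rfl⟩, v, ⟨z', hz', rfl⟩, huv⟩ := Set.mem_mul.1 hx
    exact ⟨z⁻¹ * z', mul_mem (inv_mem hz) hz',
      by rw [← huv, S.refl_mul_refl a a' z z' ha ha' hz hz']⟩
  · rintro ⟨z, hz, rfl⟩
    refine Set.mem_mul.2 ⟨S.b * (a * 1), ⟨1, one_mem _, rfl⟩,
      S.b * (a' * z), ⟨z, hz, rfl⟩, ?_⟩
    rw [S.refl_mul_refl a a' 1 z ha ha' (one_mem _) hz, inv_one, one_mul]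

lemma subset_AB_iff (a a' : G) (ha : a ∈ S.A) (ha' : a' ∈ S.A) (C₃ : ConjClasses G) :
    C₃.carrier ⊆ (ConjClasses.mk a).carrier * (ConjClasses.mk (S.b * a')).carrier ↔
      C₃ = ConjClasses.mk (S.b * (a' * a)) := by
  rw [S.prod_AB a a' ha ha', carrier_subset_iff]

lemma subset_BA_iff (a a' : G) (ha : a ∈ S.A) (ha' : a' ∈ S.A) (C₃ : ConjClasses G) :
    C₃.carrier ⊆ (ConjClasses.mk (S.b * a')).carrier * (ConjClasses.mk a).carrier ↔
      C₃ = ConjClasses.mk (S.b * (a' * a)) := by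
  rw [S.prod_BA a a' ha ha', carrier_subset_iff]

lemma subset_BB_iff (a a' : G) (ha : a ∈ S.A) (ha' : a' ∈ S.A) (C₃ : ConjClasses G) :
    C₃.carrier ⊆ (ConjClasses.mk (S.b * a)).carrier * (ConjClasses.mk (S.b * a')).carrier ↔
      ∃ c, c ∈ S.A ∧ C₃ = ConjClasses.mk c ∧ ∃ z ∈ S.A2, c = (a⁻¹ * a') * z := by
  rw [S.prod_BB a a' ha ha']
  constructor
  · intro h
    obtain ⟨x, hx⟩ := C₃.exists_rep
    have hx1 : x ∈ C₃.carrier := ConjClasses.mem_carrier_iff_mk_eq.2 hx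
    obtain ⟨z, hz, hxe⟩ := h hx1
    refine ⟨x, ?_, hx.symm, z, hz, hxe⟩
    rw [hxe]
    exact mul_mem (mul_mem (inv_mem ha) ha') (S.hA2A hz)
  · rintro ⟨c, hcA, rfl, z, hz, rfl⟩
    rw [S.carrier_mkA _ (mul_mem (mul_mem (inv_mem ha) ha') (S.hA2A hz))]
    rintro x (rfl | rfl)
    · exact ⟨z, hz, rfl⟩
    · refine ⟨z * ((a⁻¹ * a' * z)⁻¹) ^ 2,
        mul_mem hz (S.sq_mem_A2 _ (inv_mem (mul_mem (mul_mem (inv_mem ha) ha') (S.hA2A hz)))), ?_⟩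
      rw [pow_two]
      group

lemma pNS_imp_pA (C : ConjClasses G) (h : S.pNS C) : S.pA C := by
  obtain ⟨a, ha, he, _⟩ := h; exact ⟨a, ha, he⟩

lemma card_split {α : Type*} [Finite α] (p q : α → Prop) :
    Nat.card {x // p x} = Nat.card {x // p x ∧ q x} + Nat.card {x // p x ∧ ¬ q x} := by
  classical
  rw [← Nat.card_sum]
  apply Nat.card_congr
  apply Equiv.symm
  refine Equiv.ofBijective
    (Sum.elim (fun y => ⟨y.1, y.2.1⟩) (fun y => ⟨y.1, y.2.1⟩) :
      {x // p x ∧ q x} ⊕ {x // p x ∧ ¬ q x} → {x // p x}) ⟨?_, ?_⟩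
  · rintro (⟨x, hx⟩ | ⟨x, hx⟩) (⟨y, hy⟩ | ⟨y, hy⟩) h <;>
      simp only [Sum.elim_inl, Sum.elim_inr, Subtype.mk.injEq] at h
    · simp [h]
    · exact absurd (h ▸ hy.2) (fun c => c hx.2)
    · exact absurd (h ▸ hy.2) (fun c => hx.2 c)
    · simp [h]
  · rintro ⟨x, hx⟩
    by_cases hq : q x
    · exact ⟨Sum.inl ⟨x, hx, hq⟩, rfl⟩
    · exact ⟨Sum.inr ⟨x, hx, hq⟩, rfl⟩

/-- A chosen representative in `A` for a class satisfying `pA`. -/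
noncomputable def repA (C : {C : ConjClasses G // S.pA C}) : G := C.2.choose

lemma repA_spec (C : {C : ConjClasses G // S.pA C}) :
    S.repA C ∈ S.A ∧ C.1 = ConjClasses.mk (S.repA C) :=
  ⟨C.2.choose_spec.1, C.2.choose_spec.2⟩

/-- A chosen representative for a reflection class. -/
noncomputable def repB (C : {C : ConjClasses G // S.pB C}) : G := C.2.choose

lemma repB_spec (C : {C : ConjClasses G // S.pB C}) :
    S.repB C ∈ S.A ∧ C.1 = ConjClasses.mk (S.b * S.repB C) :=
  ⟨C.2.choose_spec.1, C.2.choose_spec.2⟩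

/-- Squaring as a monoid hom on the abelian subgroup `A`. -/
def sqHom : ↥S.A →* ↥S.A where
  toFun a := a * a
  map_one' := by simp
  map_mul' x y := by
    apply Subtype.ext
    simp only [Subgroup.coe_mul]
    have h : (y : G) * x = x * y := S.hcomm y y.2 x x.2
    calc ((x : G) * y) * ((x : G) * y) = (x : G) * ((y * x) * y) := by group
      _ = (x : G) * ((x * y) * y) := by rw [h]
      _ = ((x : G) * x) * ((y : G) * y) := by group

lemma range_sqHom : S.sqHom.range = S.A2.subgroupOf S.A := by
  ext x
  rw [Subgroup.mem_subgroupOf, MonoidHom.mem_range]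
  constructor
  · rintro ⟨y, rfl⟩
    exact (S.mem_A2_iff _).2 ⟨y, y.2, by rw [pow_two]; rfl⟩
  · intro hx
    obtain ⟨c, hcA, hc2⟩ := (S.mem_A2_iff _).1 hx
    exact ⟨⟨c, hcA⟩, Subtype.ext (by rw [← hc2, pow_two]; rfl)⟩

lemma card_ker [Finite G] : Nat.card S.sqHom.ker = S.A2.relIndex S.A := by
  have h1 : Nat.card ↥S.A = Nat.card (↥S.A ⧸ S.sqHom.ker) * Nat.card S.sqHom.ker :=
    Subgroup.card_eq_card_quotient_mul_card_subgroup _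
  have h2 : Nat.card (↥S.A ⧸ S.sqHom.ker) = Nat.card S.sqHom.range :=
    Nat.card_congr (QuotientGroup.quotientKerEquivRange _).toEquiv
  have h3 : Nat.card ↥S.A = S.sqHom.range.index * Nat.card S.sqHom.range :=
    (Subgroup.index_mul_card _).symm
  have h4 : S.A2.relIndex S.A = S.sqHom.range.index := by
    rw [Subgroup.relIndex, S.range_sqHom]
  have hpos : 0 < Nat.card S.sqHom.range := Nat.card_pos
  rw [h4]
  have key : Nat.card S.sqHom.range * Nat.card S.sqHom.ker
      = Nat.card S.sqHom.range * S.sqHom.range.index := by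
    calc Nat.card S.sqHom.range * Nat.card S.sqHom.ker
        = Nat.card (↥S.A ⧸ S.sqHom.ker) * Nat.card S.sqHom.ker := by rw [h2]
      _ = Nat.card ↥S.A := h1.symm
      _ = S.sqHom.range.index * Nat.card S.sqHom.range := h3
      _ = Nat.card S.sqHom.range * S.sqHom.range.index := mul_comm _ _
  exact Nat.eq_of_mul_eq_mul_left hpos key

lemma card_pS [Finite G] :
    Nat.card {C : ConjClasses G // S.pS C} = S.A2.relIndex S.A := by
  rw [← S.card_ker]
  apply Nat.card_congr
  apply Equiv.symm
  refine Equiv.ofBijective (fun x => ⟨ConjClasses.mk ((x : ↥S.A) : G),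
    ((x : ↥S.A) : G), (x : ↥S.A).2, rfl, ?_⟩) ⟨?_, ?_⟩
  · have hx : (x : ↥S.A) * (x : ↥S.A) = 1 := x.2
    have : ((x : ↥S.A) : G) * ((x : ↥S.A) : G) = 1 := by
      rw [← Subgroup.coe_mul, hx]; rfl
    rw [pow_two]; exact this
  · rintro ⟨⟨x, hxA⟩, hxk⟩ ⟨⟨y, hyA⟩, hyk⟩ h
    simp only [Subtype.mk.injEq] at h
    have hx2 : (x : G) * x = 1 := by
      have := congrArg (Subtype.val) (hxk : S.sqHom ⟨x, hxA⟩ = 1)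
      exact this
    rcases (S.mkA_eq_iff _ _ hxA).1 (congrArg Subtype.val h : ConjClasses.mk x = ConjClasses.mk y) with he | he
    · exact Subtype.ext (Subtype.ext he.symm)
    · have hinv : (x : G)⁻¹ = x := by rw [inv_eq_iff_mul_eq_one, hx2]
      have : x = y := by rw [he, hinv]
      exact Subtype.ext (Subtype.ext this)
  · rintro ⟨C, a, haA, rfl, h2⟩
    refine ⟨⟨⟨a, haA⟩, ?_⟩, rfl⟩
    have : (⟨a, haA⟩ : ↥S.A) * ⟨a, haA⟩ = 1 := by
      apply Subtype.ext
      rw [Subgroup.coe_mul, ← pow_two]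
      exact h2
    exact this

lemma card_pB [Finite G] :
    Nat.card {C : ConjClasses G // S.pB C} = S.A2.relIndex S.A := by
  rw [Subgroup.relIndex, Subgroup.index_eq_card]
  apply Nat.card_congr
  refine Equiv.ofBijective (fun C => QuotientGroup.mk
    (⟨S.repB C, (S.repB_spec C).1⟩ : ↥S.A)) ⟨?_, ?_⟩
  · intro C C' h
    rw [QuotientGroup.eq] at h
    rw [Subgroup.mem_subgroupOf] at h
    have h' : (S.repB C)⁻¹ * S.repB C' ∈ S.A2 := h
    have := (S.mkB_eq_iff _ _ (S.repB_spec C).1 (S.repB_spec C').1).2 h'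
    apply Subtype.ext
    rw [(S.repB_spec C).2, (S.repB_spec C').2, this]
  · intro x
    obtain ⟨a, rfl⟩ := QuotientGroup.mk_surjective x
    refine ⟨⟨ConjClasses.mk (S.b * a), a, a.2, rfl⟩, ?_⟩
    set C : {C : ConjClasses G // S.pB C} := ⟨ConjClasses.mk (S.b * a), a, a.2, rfl⟩
    have hspec := S.repB_spec C
    have : ConjClasses.mk (S.b * S.repB C) = ConjClasses.mk (S.b * (a : G)) := by
      rw [← hspec.2]
    have hmem : (S.repB C)⁻¹ * (a : G) ∈ S.A2 := (S.mkB_eq_iff _ _ hspec.1 a.2).1 this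
    rw [QuotientGroup.eq]
    rw [Subgroup.mem_subgroupOf]
    exact hmem

lemma card_A_eq [Finite G] :
    Nat.card ↥S.A
      = Nat.card {C : ConjClasses G // S.pA C} + Nat.card {C : ConjClasses G // S.pNS C} := by
  classical
  rw [← Nat.card_sum]
  apply Nat.card_congr
  refine Equiv.ofBijective (fun a =>
    if h : ((a : G)) = S.repA ⟨ConjClasses.mk ((a : G)), ⟨(a : G), a.2, rfl⟩⟩
    then Sum.inl ⟨ConjClasses.mk ((a : G)), (a : G), a.2, rfl⟩
    else Sum.inr ⟨ConjClasses.mk ((a : G)), (a : G), a.2, rfl, by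
      intro hsq
      apply h
      have hspec := S.repA_spec ⟨ConjClasses.mk ((a : G)), ⟨(a : G), a.2, rfl⟩⟩
      rcases (S.mkA_eq_iff ((a : G)) _ a.2).1 hspec.2 with he | he
      · exact he.symm
      · rw [he, inv_eq_of_sq _ hsq]⟩) ⟨?_, ?_⟩
  · intro x y hxy
    dsimp only at hxy
    by_cases hx : ((x : G)) = S.repA ⟨ConjClasses.mk ((x : G)), ⟨(x : G), x.2, rfl⟩⟩ <;>
      by_cases hy : ((y : G)) = S.repA ⟨ConjClasses.mk ((y : G)), ⟨(y : G), y.2, rfl⟩⟩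
    · rw [dif_pos hx, dif_pos hy] at hxy
      have h1 : ConjClasses.mk ((x : G)) = ConjClasses.mk ((y : G)) :=
        congrArg Subtype.val (Sum.inl.inj hxy)
      have h2 : (⟨ConjClasses.mk ((x : G)), ⟨(x : G), x.2, rfl⟩⟩ : {C : ConjClasses G // S.pA C})
          = ⟨ConjClasses.mk ((y : G)), ⟨(y : G), y.2, rfl⟩⟩ := Subtype.ext h1
      have h3 := congrArg S.repA h2
      exact Subtype.ext (hx.trans (h3.trans hy.symm))
    · rw [dif_pos hx, dif_neg hy] at hxy
      exact absurd hxy (by simp)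
    · rw [dif_neg hx, dif_pos hy] at hxy
      exact absurd hxy (by simp)
    · rw [dif_neg hx, dif_neg hy] at hxy
      have h1 : ConjClasses.mk ((x : G)) = ConjClasses.mk ((y : G)) :=
        congrArg Subtype.val (Sum.inr.inj hxy)
      have h2 : (⟨ConjClasses.mk ((x : G)), ⟨(x : G), x.2, rfl⟩⟩ : {C : ConjClasses G // S.pA C})
          = ⟨ConjClasses.mk ((y : G)), ⟨(y : G), y.2, rfl⟩⟩ := Subtype.ext h1
      have h3 := congrArg S.repA h2
      have hspecx := S.repA_spec ⟨ConjClasses.mk ((x : G)), ⟨(x : G), x.2, rfl⟩⟩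
      have hspecy := S.repA_spec ⟨ConjClasses.mk ((y : G)), ⟨(y : G), y.2, rfl⟩⟩
      have hex : S.repA ⟨ConjClasses.mk ((x : G)), ⟨(x : G), x.2, rfl⟩⟩ = ((x : G))⁻¹ := by
        rcases (S.mkA_eq_iff ((x : G)) _ x.2).1 hspecx.2 with he | he
        · exact absurd he.symm hx
        · exact he
      have hey : S.repA ⟨ConjClasses.mk ((y : G)), ⟨(y : G), y.2, rfl⟩⟩ = ((y : G))⁻¹ := by
        rcases (S.mkA_eq_iff ((y : G)) _ y.2).1 hspecy.2 with he | he
        · exact absurd he.symm hy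
        · exact he
      have : ((x : G))⁻¹ = ((y : G))⁻¹ := by rw [← hex, ← hey, h3]
      exact Subtype.ext (inv_injective this)
  · rintro (⟨C, hC⟩ | ⟨C, hC⟩)
    · have hspec := S.repA_spec ⟨C, hC⟩
      refine ⟨⟨S.repA ⟨C, hC⟩, hspec.1⟩, ?_⟩
      have harg : (⟨ConjClasses.mk (S.repA ⟨C, hC⟩), ⟨S.repA ⟨C, hC⟩, hspec.1, rfl⟩⟩ :
          {C : ConjClasses G // S.pA C}) = ⟨C, hC⟩ := Subtype.ext hspec.2.symm
      have hcond : (S.repA ⟨C, hC⟩ : G)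
          = S.repA ⟨ConjClasses.mk (S.repA ⟨C, hC⟩), ⟨S.repA ⟨C, hC⟩, hspec.1, rfl⟩⟩ :=
        congrArg S.repA harg.symm
      dsimp only
      rw [dif_pos hcond]
      exact congrArg Sum.inl (Subtype.ext hspec.2.symm)
    · have hCA : S.pA C := S.pNS_imp_pA C hC
      have hspec := S.repA_spec ⟨C, hCA⟩
      have hrsq : (S.repA ⟨C, hCA⟩) ^ 2 ≠ 1 := by
        obtain ⟨a₀, ha₀, hCe, hsq⟩ := hC
        have : ConjClasses.mk a₀ = ConjClasses.mk (S.repA ⟨C, hCA⟩) := by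
          rw [← hCe, ← hspec.2]
        intro hone
        exact hsq ((S.sq_eq_one_congr a₀ _ ha₀ this).2 hone)
      refine ⟨⟨(S.repA ⟨C, hCA⟩)⁻¹, inv_mem hspec.1⟩, ?_⟩
      have hmk : ConjClasses.mk ((S.repA ⟨C, hCA⟩)⁻¹) = C := by
        have h2 : C = ConjClasses.mk (S.repA ⟨C, hCA⟩) := hspec.2
        exact (h2.trans (ConjClasses.mk_eq_mk_iff_isConj.2 (S.isConj_inv _ hspec.1))).symm
      have harg : (⟨ConjClasses.mk ((S.repA ⟨C, hCA⟩)⁻¹),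
          ⟨(S.repA ⟨C, hCA⟩)⁻¹, inv_mem hspec.1, rfl⟩⟩ :
          {C : ConjClasses G // S.pA C}) = ⟨C, hCA⟩ := Subtype.ext hmk
      have hcond : ¬ ((S.repA ⟨C, hCA⟩)⁻¹
          = S.repA ⟨ConjClasses.mk ((S.repA ⟨C, hCA⟩)⁻¹),
            ⟨(S.repA ⟨C, hCA⟩)⁻¹, inv_mem hspec.1, rfl⟩⟩) := by
        rw [congrArg S.repA harg]
        intro he
        apply hrsq
        rw [pow_two]
        nth_rewrite 1 [← he]
        rw [inv_mul_cancel]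
      dsimp only
      rw [dif_neg hcond]
      exact congrArg Sum.inr (Subtype.ext hmk)

lemma card_AB [Finite G] :
    Nat.card {T : ConjClasses G × ConjClasses G × ConjClasses G //
        (T.2.2.carrier ⊆ T.1.carrier * T.2.1.carrier ∧ S.pA T.1) ∧ S.pB T.2.1}
      = Nat.card {C : ConjClasses G // S.pA C} * Nat.card {C : ConjClasses G // S.pB C} := by
  rw [← Nat.card_prod]
  apply Nat.card_congr
  refine Equiv.ofBijective (fun T => (⟨T.1.1, T.2.1.2⟩, ⟨T.1.2.1, T.2.2⟩)) ⟨?_, ?_⟩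
  · intro T T' h
    have e1 : T.1.1 = T'.1.1 := congrArg (fun p => (p.1 : ConjClasses G)) h
    have e2 : T.1.2.1 = T'.1.2.1 := congrArg (fun p => (p.2 : ConjClasses G)) h
    obtain ⟨a, ha, he₁⟩ := T.2.1.2
    obtain ⟨a', ha', he₂⟩ := T.2.2
    have hP := T.2.1.1
    rw [he₁, he₂] at hP
    have hP' := T'.2.1.1
    rw [← e1, ← e2, he₁, he₂] at hP'
    have e3 : T.1.2.2 = T'.1.2.2 := by
      rw [(S.subset_AB_iff a a' ha ha' _).1 hP, (S.subset_AB_iff a a' ha ha' _).1 hP']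
    exact Subtype.ext (Prod.ext e1 (Prod.ext e2 e3))
  · rintro ⟨⟨C₁, h1⟩, ⟨C₂, h2⟩⟩
    obtain ⟨a, ha, rfl⟩ := h1
    obtain ⟨a', ha', rfl⟩ := h2
    exact ⟨⟨(ConjClasses.mk a, ConjClasses.mk (S.b * a'), ConjClasses.mk (S.b * (a' * a))),
      ⟨(S.subset_AB_iff a a' ha ha' _).2 rfl, ⟨a, ha, rfl⟩⟩, ⟨a', ha', rfl⟩⟩, rfl⟩

lemma card_BA [Finite G] :
    Nat.card {T : ConjClasses G × ConjClasses G × ConjClasses G //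
        (T.2.2.carrier ⊆ T.1.carrier * T.2.1.carrier ∧ S.pB T.1) ∧ S.pA T.2.1}
      = Nat.card {C : ConjClasses G // S.pB C} * Nat.card {C : ConjClasses G // S.pA C} := by
  rw [← Nat.card_prod]
  apply Nat.card_congr
  refine Equiv.ofBijective (fun T => (⟨T.1.1, T.2.1.2⟩, ⟨T.1.2.1, T.2.2⟩)) ⟨?_, ?_⟩
  · intro T T' h
    have e1 : T.1.1 = T'.1.1 := congrArg (fun p => (p.1 : ConjClasses G)) h
    have e2 : T.1.2.1 = T'.1.2.1 := congrArg (fun p => (p.2 : ConjClasses G)) h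
    obtain ⟨a', ha', he₁⟩ := T.2.1.2
    obtain ⟨a, ha, he₂⟩ := T.2.2
    have hP := T.2.1.1
    rw [he₁, he₂] at hP
    have hP' := T'.2.1.1
    rw [← e1, ← e2, he₁, he₂] at hP'
    have e3 : T.1.2.2 = T'.1.2.2 := by
      rw [(S.subset_BA_iff a a' ha ha' _).1 hP, (S.subset_BA_iff a a' ha ha' _).1 hP']
    exact Subtype.ext (Prod.ext e1 (Prod.ext e2 e3))
  · rintro ⟨⟨C₁, h1⟩, ⟨C₂, h2⟩⟩
    obtain ⟨a', ha', rfl⟩ := h1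
    obtain ⟨a, ha, rfl⟩ := h2
    exact ⟨⟨(ConjClasses.mk (S.b * a'), ConjClasses.mk a, ConjClasses.mk (S.b * (a' * a))),
      ⟨(S.subset_BA_iff a a' ha ha' _).2 rfl, ⟨a', ha', rfl⟩⟩, ⟨a, ha, rfl⟩⟩, rfl⟩

lemma card_BB [Finite G] :
    Nat.card {T : ConjClasses G × ConjClasses G × ConjClasses G //
        (T.2.2.carrier ⊆ T.1.carrier * T.2.1.carrier ∧ S.pB T.1) ∧ S.pB T.2.1}
      = Nat.card {C : ConjClasses G // S.pB C} * Nat.card {C : ConjClasses G // S.pA C} := by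
  rw [← Nat.card_prod]
  apply Nat.card_congr
  refine Equiv.ofBijective (fun T => (⟨T.1.1, T.2.1.2⟩, ⟨T.1.2.2, by
    obtain ⟨a₁, ha₁, he₁⟩ := T.2.1.2
    obtain ⟨a₂, ha₂, he₂⟩ := T.2.2
    have hP := T.2.1.1
    rw [he₁, he₂] at hP
    obtain ⟨c, hc, he₃, _⟩ := (S.subset_BB_iff a₁ a₂ ha₁ ha₂ _).1 hP
    exact ⟨c, hc, he₃⟩⟩)) ⟨?_, ?_⟩
  · intro T T' h
    have e1 : T.1.1 = T'.1.1 := congrArg (fun p => (p.1 : ConjClasses G)) h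
    have e3 : T.1.2.2 = T'.1.2.2 := congrArg (fun p => (p.2 : ConjClasses G)) h
    obtain ⟨a₁, ha₁, he₁⟩ := T.2.1.2
    obtain ⟨a₂, ha₂, he₂⟩ := T.2.2
    obtain ⟨a₂', ha₂', he₂'⟩ := T'.2.2
    have hP := T.2.1.1
    rw [he₁, he₂] at hP
    have hP' := T'.2.1.1
    rw [← e1, ← e3, he₁, he₂'] at hP'
    obtain ⟨c, hc, hC₃, z, hz, hcz⟩ := (S.subset_BB_iff a₁ a₂ ha₁ ha₂ _).1 hP
    obtain ⟨c', hc', hC₃', z', hz', hcz'⟩ := (S.subset_BB_iff a₁ a₂' ha₁ ha₂' _).1 hP'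
    have hcc : ConjClasses.mk c = ConjClasses.mk c' := by rw [← hC₃, ← hC₃']
    have hmem : a₂⁻¹ * a₂' ∈ S.A2 := by
      rcases (S.mkA_eq_iff c c' hc).1 hcc with he | he
      · -- c' = c
        have e : (a₁⁻¹ * a₂') * z' = (a₁⁻¹ * a₂) * z := by rw [← hcz, ← hcz', he]
        have h6 : a₂' * z' = a₂ * z := by
          calc a₂' * z' = a₁ * ((a₁⁻¹ * a₂') * z') := by group
            _ = a₁ * ((a₁⁻¹ * a₂) * z) := by rw [e]
            _ = a₂ * z := by group
        have h5 : a₂⁻¹ * a₂' = z * z'⁻¹ := by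
          calc a₂⁻¹ * a₂' = a₂⁻¹ * ((a₂' * z') * z'⁻¹) := by group
            _ = a₂⁻¹ * ((a₂ * z) * z'⁻¹) := by rw [h6]
            _ = z * z'⁻¹ := by group
        rw [h5]
        exact mul_mem hz (inv_mem hz')
      · -- c' = c⁻¹
        have e : (a₁⁻¹ * a₂') * z' = ((a₁⁻¹ * a₂) * z)⁻¹ := by rw [← hcz, ← hcz', he]
        have h6 : a₂' = a₁ * z⁻¹ * a₂⁻¹ * a₁ * z'⁻¹ := by
          calc a₂' = a₁ * ((a₁⁻¹ * a₂') * z') * z'⁻¹ := by group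
            _ = a₁ * (((a₁⁻¹ * a₂) * z)⁻¹) * z'⁻¹ := by rw [e]
            _ = a₁ * z⁻¹ * a₂⁻¹ * a₁ * z'⁻¹ := by group
        have hcw : z⁻¹ * (a₂⁻¹ * a₁) = (a₂⁻¹ * a₁) * z⁻¹ :=
          S.hcomm z⁻¹ (inv_mem (S.hA2A hz)) (a₂⁻¹ * a₁) (mul_mem (inv_mem ha₂) ha₁)
        have h7 : a₂⁻¹ * a₂' = (a₂⁻¹ * a₁) ^ 2 * (z' * z)⁻¹ := by
          rw [h6]
          calc a₂⁻¹ * (a₁ * z⁻¹ * a₂⁻¹ * a₁ * z'⁻¹)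
              = (a₂⁻¹ * a₁) * (z⁻¹ * (a₂⁻¹ * a₁)) * z'⁻¹ := by group
            _ = (a₂⁻¹ * a₁) * ((a₂⁻¹ * a₁) * z⁻¹) * z'⁻¹ := by rw [hcw]
            _ = (a₂⁻¹ * a₁) ^ 2 * (z' * z)⁻¹ := by rw [pow_two]; group
        rw [h7]
        exact mul_mem (S.sq_mem_A2 _ (mul_mem (inv_mem ha₂) ha₁)) (inv_mem (mul_mem hz' hz))
    have e2 : T.1.2.1 = T'.1.2.1 := by
      rw [he₂, he₂']
      exact (S.mkB_eq_iff a₂ a₂' ha₂ ha₂').2 hmem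
    exact Subtype.ext (Prod.ext e1 (Prod.ext e2 e3))
  · rintro ⟨⟨C₁, h1⟩, ⟨C₃, h3⟩⟩
    obtain ⟨a₁, ha₁, rfl⟩ := h1
    obtain ⟨c, hc, rfl⟩ := h3
    refine ⟨⟨(ConjClasses.mk (S.b * a₁), ConjClasses.mk (S.b * (a₁ * c)), ConjClasses.mk c),
      ⟨(S.subset_BB_iff a₁ (a₁ * c) ha₁ (mul_mem ha₁ hc) _).2
        ⟨c, hc, rfl, 1, one_mem _, by group⟩, ⟨a₁, ha₁, rfl⟩⟩,
      ⟨a₁ * c, mul_mem ha₁ hc, rfl⟩⟩, rfl⟩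

lemma card_AA_rest [Finite G] :
    Nat.card {T : ConjClasses G × ConjClasses G × ConjClasses G //
        ((T.2.2.carrier ⊆ T.1.carrier * T.2.1.carrier ∧ S.pA T.1) ∧ S.pA T.2.1)
          ∧ ¬(S.pNS T.1 ∧ S.pNS T.2.1)}
      = Nat.card {p : ConjClasses G × ConjClasses G //
          (S.pA p.1 ∧ S.pA p.2) ∧ ¬(S.pNS p.1 ∧ S.pNS p.2)} := by
  apply Nat.card_congr
  refine Equiv.ofBijective
    (fun T => ⟨(T.1.1, T.1.2.1), ⟨T.2.1.1.2, T.2.1.2⟩, T.2.2⟩) ⟨?_, ?_⟩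
  · intro T T' h
    have e1 : T.1.1 = T'.1.1 := congrArg (fun p => p.1.1) h
    have e2 : T.1.2.1 = T'.1.2.1 := congrArg (fun p => p.1.2) h
    obtain ⟨a₁, ha₁, he₁⟩ := T.2.1.1.2
    obtain ⟨a₂, ha₂, he₂⟩ := T.2.1.2
    have hns := T.2.2
    have hsq : a₁ ^ 2 = 1 ∨ a₂ ^ 2 = 1 := by
      by_contra hcon
      push_neg at hcon
      exact hns ⟨⟨a₁, ha₁, he₁, hcon.1⟩, ⟨a₂, ha₂, he₂, hcon.2⟩⟩
    have hXX : ConjClasses.mk (a₁ * a₂) = ConjClasses.mk (a₁ * a₂⁻¹) :=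
      S.mk_eq_of_sq _ _ ha₁ ha₂ hsq
    have hP := T.2.1.1.1
    rw [he₁, he₂] at hP
    have hP' := T'.2.1.1.1
    rw [← e1, ← e2, he₁, he₂] at hP'
    have key : ∀ C₃ : ConjClasses G,
        C₃ = ConjClasses.mk (a₁ * a₂) ∨ C₃ = ConjClasses.mk (a₁ * a₂⁻¹) →
        C₃ = ConjClasses.mk (a₁ * a₂) := by
      rintro C₃ (rfl | rfl)
      · rfl
      · exact hXX.symm
    have e3 : T.1.2.2 = T'.1.2.2 := by
      rw [key _ ((S.subset_AA_iff a₁ a₂ ha₁ ha₂ _).1 hP),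
        key _ ((S.subset_AA_iff a₁ a₂ ha₁ ha₂ _).1 hP')]
    exact Subtype.ext (Prod.ext e1 (Prod.ext e2 e3))
  · rintro ⟨⟨C₁, C₂⟩, ⟨h1, h2⟩, hns⟩
    obtain ⟨a₁, ha₁, he₁⟩ := h1
    obtain ⟨a₂, ha₂, he₂⟩ := h2
    refine ⟨⟨(C₁, C₂, ConjClasses.mk (a₁ * a₂)),
      ⟨⟨?_, ⟨a₁, ha₁, he₁⟩⟩, ⟨a₂, ha₂, he₂⟩⟩, hns⟩, rfl⟩
    rw [congrArg ConjClasses.carrier he₁, congrArg ConjClasses.carrier he₂]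
    exact (S.subset_AA_iff a₁ a₂ ha₁ ha₂ _).2 (Or.inl rfl)

open scoped Classical in
lemma card_AA_ns [Finite G] :
    Nat.card {T : ConjClasses G × ConjClasses G × ConjClasses G //
        ((T.2.2.carrier ⊆ T.1.carrier * T.2.1.carrier ∧ S.pA T.1) ∧ S.pA T.2.1)
          ∧ (S.pNS T.1 ∧ S.pNS T.2.1)}
      = (Nat.card {C : ConjClasses G // S.pNS C}
          * Nat.card {C : ConjClasses G // S.pNS C}) * 2 := by
  have hcard : (Nat.card {C : ConjClasses G // S.pNS C}
        * Nat.card {C : ConjClasses G // S.pNS C}) * 2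
      = Nat.card (({C : ConjClasses G // S.pNS C}
          × {C : ConjClasses G // S.pNS C}) × Bool) := by
    rw [Nat.card_prod, Nat.card_prod]
    simp [Nat.card_eq_fintype_card]
  rw [hcard]
  apply Nat.card_congr
  refine Equiv.ofBijective (fun T =>
    ((⟨T.1.1, T.2.2.1⟩, ⟨T.1.2.1, T.2.2.2⟩),
      if T.1.2.2 = ConjClasses.mk (S.repA ⟨T.1.1, S.pNS_imp_pA _ T.2.2.1⟩
          * S.repA ⟨T.1.2.1, S.pNS_imp_pA _ T.2.2.2⟩) then true else false)) ⟨?_, ?_⟩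
  · intro T T' h
    have e1 : T.1.1 = T'.1.1 := congrArg (fun p => p.1.1.1) h
    have e2 : T.1.2.1 = T'.1.2.1 := congrArg (fun p => p.1.2.1) h
    have eb := congrArg Prod.snd h
    dsimp only at eb
    have harg1 : (⟨T.1.1, S.pNS_imp_pA _ T.2.2.1⟩ : {C : ConjClasses G // S.pA C})
        = ⟨T'.1.1, S.pNS_imp_pA _ T'.2.2.1⟩ := Subtype.ext e1
    have harg2 : (⟨T.1.2.1, S.pNS_imp_pA _ T.2.2.2⟩ : {C : ConjClasses G // S.pA C})
        = ⟨T'.1.2.1, S.pNS_imp_pA _ T'.2.2.2⟩ := Subtype.ext e2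
    have hr1 := congrArg S.repA harg1
    have hr2 := congrArg S.repA harg2
    have hs1 := S.repA_spec ⟨T.1.1, S.pNS_imp_pA _ T.2.2.1⟩
    have hs2 := S.repA_spec ⟨T.1.2.1, S.pNS_imp_pA _ T.2.2.2⟩
    have hs1' := S.repA_spec ⟨T'.1.1, S.pNS_imp_pA _ T'.2.2.1⟩
    have hs2' := S.repA_spec ⟨T'.1.2.1, S.pNS_imp_pA _ T'.2.2.2⟩
    have hm1 : T.1.1 = ConjClasses.mk (S.repA ⟨T.1.1, S.pNS_imp_pA _ T.2.2.1⟩) := hs1.2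
    have hm2 : T.1.2.1 = ConjClasses.mk (S.repA ⟨T.1.2.1, S.pNS_imp_pA _ T.2.2.2⟩) := hs2.2
    have hm1' : T'.1.1 = ConjClasses.mk (S.repA ⟨T.1.1, S.pNS_imp_pA _ T.2.2.1⟩) := by
      rw [hr1]; exact hs1'.2
    have hm2' : T'.1.2.1 = ConjClasses.mk (S.repA ⟨T.1.2.1, S.pNS_imp_pA _ T.2.2.2⟩) := by
      rw [hr2]; exact hs2'.2
    have hP := subset_prod_congr hm1 hm2 T.2.1.1.1
    have hor := (S.subset_AA_iff _ _ hs1.1 hs2.1 _).1 hP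
    have hP' := subset_prod_congr hm1' hm2' T'.2.1.1.1
    have hor' := (S.subset_AA_iff _ _ hs1.1 hs2.1 _).1 hP'
    rw [← hr1, ← hr2] at eb
    have e3 : T.1.2.2 = T'.1.2.2 := by
      by_cases hc : T.1.2.2 = ConjClasses.mk (S.repA ⟨T.1.1, S.pNS_imp_pA _ T.2.2.1⟩
          * S.repA ⟨T.1.2.1, S.pNS_imp_pA _ T.2.2.2⟩) <;>
        by_cases hc' : T'.1.2.2 = ConjClasses.mk (S.repA ⟨T.1.1, S.pNS_imp_pA _ T.2.2.1⟩
          * S.repA ⟨T.1.2.1, S.pNS_imp_pA _ T.2.2.2⟩)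
      · exact hc.trans hc'.symm
      · rw [if_pos hc, if_neg hc'] at eb
        exact absurd eb (by simp)
      · rw [if_neg hc, if_pos hc'] at eb
        exact absurd eb (by simp)
      · rw [hor.resolve_left hc, hor'.resolve_left hc']
    exact Subtype.ext (Prod.ext e1 (Prod.ext e2 e3))
  · rintro ⟨⟨⟨C₁, h1⟩, ⟨C₂, h2⟩⟩, bb⟩
    have hs1 := S.repA_spec ⟨C₁, S.pNS_imp_pA _ h1⟩
    have hs2 := S.repA_spec ⟨C₂, S.pNS_imp_pA _ h2⟩
    have hm1 : C₁ = ConjClasses.mk (S.repA ⟨C₁, S.pNS_imp_pA _ h1⟩) := hs1.2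
    have hm2 : C₂ = ConjClasses.mk (S.repA ⟨C₂, S.pNS_imp_pA _ h2⟩) := hs2.2
    have hsq1 : (S.repA ⟨C₁, S.pNS_imp_pA _ h1⟩) ^ 2 ≠ 1 := by
      have hcopy := h1
      obtain ⟨a₀, ha₀, he₀, hne₀⟩ := hcopy
      have hmk : ConjClasses.mk a₀ = ConjClasses.mk (S.repA ⟨C₁, S.pNS_imp_pA _ h1⟩) := by
        rw [← he₀]; exact hm1
      intro hone
      exact hne₀ ((S.sq_eq_one_congr a₀ _ ha₀ hmk).2 hone)
    have hsq2 : (S.repA ⟨C₂, S.pNS_imp_pA _ h2⟩) ^ 2 ≠ 1 := by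
      have hcopy := h2
      obtain ⟨a₀, ha₀, he₀, hne₀⟩ := hcopy
      have hmk : ConjClasses.mk a₀ = ConjClasses.mk (S.repA ⟨C₂, S.pNS_imp_pA _ h2⟩) := by
        rw [← he₀]; exact hm2
      intro hone
      exact hne₀ ((S.sq_eq_one_congr a₀ _ ha₀ hmk).2 hone)
    have hcar1 : C₁.carrier = (ConjClasses.mk (S.repA ⟨C₁, S.pNS_imp_pA _ h1⟩)).carrier :=
      congrArg ConjClasses.carrier hm1
    have hcar2 : C₂.carrier = (ConjClasses.mk (S.repA ⟨C₂, S.pNS_imp_pA _ h2⟩)).carrier :=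
      congrArg ConjClasses.carrier hm2
    cases bb
    · -- bb = false
      refine ⟨⟨(C₁, C₂, ConjClasses.mk (S.repA ⟨C₁, S.pNS_imp_pA _ h1⟩
          * (S.repA ⟨C₂, S.pNS_imp_pA _ h2⟩)⁻¹)),
        ⟨⟨?_, S.pNS_imp_pA _ h1⟩, S.pNS_imp_pA _ h2⟩, h1, h2⟩, ?_⟩
      · rw [hcar1, hcar2]
        exact (S.subset_AA_iff _ _ hs1.1 hs2.1 _).2 (Or.inr rfl)
      · dsimp only
        rw [if_neg (Ne.symm (S.mk_ne_of_sq _ _ hs1.1 hs2.1 hsq1 hsq2))]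
    · -- bb = true
      refine ⟨⟨(C₁, C₂, ConjClasses.mk (S.repA ⟨C₁, S.pNS_imp_pA _ h1⟩
          * S.repA ⟨C₂, S.pNS_imp_pA _ h2⟩)),
        ⟨⟨?_, S.pNS_imp_pA _ h1⟩, S.pNS_imp_pA _ h2⟩, h1, h2⟩, ?_⟩
      · rw [hcar1, hcar2]
        exact (S.subset_AA_iff _ _ hs1.1 hs2.1 _).2 (Or.inl rfl)
      · dsimp only
        rw [if_pos rfl]

lemma pS_imp_pA (C : ConjClasses G) (h : S.pS C) : S.pA C := by
  obtain ⟨a, ha, he, _⟩ := h; exact ⟨a, ha, he⟩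

lemma pB_iff_not_pA (C : ConjClasses G) : S.pB C ↔ ¬ S.pA C :=
  ⟨fun hB hA => S.not_pA_pB C hA hB, fun h => (S.pA_or_pB C).resolve_left h⟩

lemma card_pA_split [Finite G] :
    Nat.card {C : ConjClasses G // S.pA C}
      = Nat.card {C : ConjClasses G // S.pS C} + Nat.card {C : ConjClasses G // S.pNS C} := by
  rw [card_split (fun C => S.pA C) S.pS]
  congr 1
  · exact Nat.card_congr (Equiv.subtypeEquivRight fun C =>
      ⟨fun h => h.2, fun h => ⟨S.pS_imp_pA C h, h⟩⟩)
  · refine Nat.card_congr (Equiv.subtypeEquivRight fun C => ⟨?_, ?_⟩)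
    · rintro ⟨⟨a, ha, he⟩, hnq⟩
      exact ⟨a, ha, he, fun hone => hnq ⟨a, ha, he, hone⟩⟩
    · rintro ⟨a, ha, he, hne⟩
      refine ⟨⟨a, ha, he⟩, ?_⟩
      rintro ⟨a₁, ha₁, he₁, hone₁⟩
      have hmm : ConjClasses.mk a = ConjClasses.mk a₁ := by rw [← he, ← he₁]
      exact hne ((S.sq_eq_one_congr a a₁ ha hmm).2 hone₁)

lemma card_pairs [Finite G] :
    Nat.card {p : ConjClasses G × ConjClasses G // S.pA p.1 ∧ S.pA p.2}
      = Nat.card {C : ConjClasses G // S.pA C} * Nat.card {C : ConjClasses G // S.pA C} := by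
  rw [← Nat.card_prod]
  exact Nat.card_congr Equiv.subtypeProdEquivProd

lemma card_pairs_ns [Finite G] :
    Nat.card {p : ConjClasses G × ConjClasses G //
        (S.pA p.1 ∧ S.pA p.2) ∧ (S.pNS p.1 ∧ S.pNS p.2)}
      = Nat.card {C : ConjClasses G // S.pNS C} * Nat.card {C : ConjClasses G // S.pNS C} := by
  rw [← Nat.card_prod]
  refine Nat.card_congr ((Equiv.subtypeEquivRight ?_).trans Equiv.subtypeProdEquivProd)
  intro p
  exact ⟨fun h => h.2, fun h => ⟨⟨S.pNS_imp_pA _ h.1, S.pNS_imp_pA _ h.2⟩, h⟩⟩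

end DihSetup

/-- Let `A` be a finite abelian group of order `n ≥ 3` whose exponent is greater than 2,
and let `G` be the generalized dihedral group of `A`: `G` contains `A` as a subgroup of
index 2 and there is `b ∈ G \ A` with `b² = 1` and `b * a * b⁻¹ = a⁻¹` for all `a ∈ A`.
Let `d = [A : A²]` where `A² = {a² : a ∈ A}`.  Then twice the number of ordered triples
`(C₁, C₂, C₃)` of conjugacy classes of `G` with `C₃ ⊆ C₁ * C₂` equals `n² + 3nd + 4d²`. -/
theorem stmt_10 {G : Type*} [Group G] [Finite G] (A : Subgroup G)
    (hcomm : ∀ x ∈ A, ∀ y ∈ A, x * y = y * x) (hidx : A.index = 2)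
    (n : ℕ) (hn : n = Nat.card A) (hn3 : 3 ≤ n) (hexp : 2 < Monoid.exponent A)
    (b : G) (hb : b ∉ A) (hb2 : b ^ 2 = 1) (hinv : ∀ a ∈ A, b * a * b⁻¹ = a⁻¹)
    (A2 : Subgroup G) (hA2 : (A2 : Set G) = {x : G | ∃ a ∈ A, a ^ 2 = x})
    (hA2A : A2 ≤ A)
    (d : ℕ) (hd : d = A2.relIndex A) :
    2 * Nat.card {T : ConjClasses G × ConjClasses G × ConjClasses G //
        T.2.2.carrier ⊆ T.1.carrier * T.2.1.carrier}
      = n ^ 2 + 3 * n * d + 4 * d ^ 2 := by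

  set S : DihSetup G := ⟨A, A2, b, hcomm, hidx, hb, hb2, hinv, hA2, hA2A⟩ with hS
  have hnA : n = Nat.card ↥S.A := hn
  have hdd : d = S.A2.relIndex S.A := hd
  -- abbreviations
  set cA := Nat.card {C : ConjClasses G // S.pA C} with hcAdef
  set cNS := Nat.card {C : ConjClasses G // S.pNS C} with hcNSdef
  set cS := Nat.card {C : ConjClasses G // S.pS C} with hcSdef
  set cB := Nat.card {C : ConjClasses G // S.pB C} with hcBdef
  -- basic counts
  have hcS : cS = d := by rw [hcSdef, S.card_pS, ← hdd]
  have hcB : cB = d := by rw [hcBdef, S.card_pB, ← hdd]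
  have hcA : cA = d + cNS := by rw [hcAdef, S.card_pA_split, ← hcSdef, ← hcNSdef, hcS]
  have hnn : n = cA + cNS := by rw [hnA, S.card_A_eq, ← hcAdef, ← hcNSdef]
  -- pairs
  set x' := Nat.card {p : ConjClasses G × ConjClasses G //
      (S.pA p.1 ∧ S.pA p.2) ∧ ¬(S.pNS p.1 ∧ S.pNS p.2)} with hx'def
  have hx : cA * cA = cNS * cNS + x' := by
    rw [hcAdef, ← S.card_pairs,
      DihSetup.card_split (fun p : ConjClasses G × ConjClasses G => S.pA p.1 ∧ S.pA p.2)
        (fun p => S.pNS p.1 ∧ S.pNS p.2),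
      S.card_pairs_ns, ← hcNSdef, ← hx'def]
  -- four-way split of the triple count
  have hsplit1 : Nat.card {T : ConjClasses G × ConjClasses G × ConjClasses G //
        T.2.2.carrier ⊆ T.1.carrier * T.2.1.carrier}
      = Nat.card {T : ConjClasses G × ConjClasses G × ConjClasses G //
          (T.2.2.carrier ⊆ T.1.carrier * T.2.1.carrier) ∧ S.pA T.1}
        + Nat.card {T : ConjClasses G × ConjClasses G × ConjClasses G //
          (T.2.2.carrier ⊆ T.1.carrier * T.2.1.carrier) ∧ S.pB T.1} := by
    rw [DihSetup.card_split (fun T : ConjClasses G × ConjClasses G × ConjClasses G =>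
      T.2.2.carrier ⊆ T.1.carrier * T.2.1.carrier) (fun T => S.pA T.1)]
    congr 1
    exact Nat.card_congr (Equiv.subtypeEquivRight fun T =>
      and_congr_right fun _ => (S.pB_iff_not_pA T.1).symm)
  have hsplitA : Nat.card {T : ConjClasses G × ConjClasses G × ConjClasses G //
        (T.2.2.carrier ⊆ T.1.carrier * T.2.1.carrier) ∧ S.pA T.1}
      = Nat.card {T : ConjClasses G × ConjClasses G × ConjClasses G //
          ((T.2.2.carrier ⊆ T.1.carrier * T.2.1.carrier) ∧ S.pA T.1) ∧ S.pA T.2.1}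
        + Nat.card {T : ConjClasses G × ConjClasses G × ConjClasses G //
          ((T.2.2.carrier ⊆ T.1.carrier * T.2.1.carrier) ∧ S.pA T.1) ∧ S.pB T.2.1} := by
    rw [DihSetup.card_split (fun T : ConjClasses G × ConjClasses G × ConjClasses G =>
      (T.2.2.carrier ⊆ T.1.carrier * T.2.1.carrier) ∧ S.pA T.1) (fun T => S.pA T.2.1)]
    congr 1
    exact Nat.card_congr (Equiv.subtypeEquivRight fun T =>
      and_congr_right fun _ => (S.pB_iff_not_pA T.2.1).symm)
  have hsplitB : Nat.card {T : ConjClasses G × ConjClasses G × ConjClasses G //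
        (T.2.2.carrier ⊆ T.1.carrier * T.2.1.carrier) ∧ S.pB T.1}
      = Nat.card {T : ConjClasses G × ConjClasses G × ConjClasses G //
          ((T.2.2.carrier ⊆ T.1.carrier * T.2.1.carrier) ∧ S.pB T.1) ∧ S.pA T.2.1}
        + Nat.card {T : ConjClasses G × ConjClasses G × ConjClasses G //
          ((T.2.2.carrier ⊆ T.1.carrier * T.2.1.carrier) ∧ S.pB T.1) ∧ S.pB T.2.1} := by
    rw [DihSetup.card_split (fun T : ConjClasses G × ConjClasses G × ConjClasses G =>
      (T.2.2.carrier ⊆ T.1.carrier * T.2.1.carrier) ∧ S.pB T.1) (fun T => S.pA T.2.1)]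
    congr 1
    exact Nat.card_congr (Equiv.subtypeEquivRight fun T =>
      and_congr_right fun _ => (S.pB_iff_not_pA T.2.1).symm)
  have hsplitAA : Nat.card {T : ConjClasses G × ConjClasses G × ConjClasses G //
        ((T.2.2.carrier ⊆ T.1.carrier * T.2.1.carrier) ∧ S.pA T.1) ∧ S.pA T.2.1}
      = (cNS * cNS) * 2 + x' := by
    rw [DihSetup.card_split (fun T : ConjClasses G × ConjClasses G × ConjClasses G =>
      ((T.2.2.carrier ⊆ T.1.carrier * T.2.1.carrier) ∧ S.pA T.1) ∧ S.pA T.2.1)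
      (fun T => S.pNS T.1 ∧ S.pNS T.2.1), S.card_AA_ns, S.card_AA_rest,
      ← hcNSdef, ← hx'def]
  have hN : Nat.card {T : ConjClasses G × ConjClasses G × ConjClasses G //
        T.2.2.carrier ⊆ T.1.carrier * T.2.1.carrier}
      = ((cNS * cNS) * 2 + x') + cA * cB + (cB * cA + cB * cA) := by
    rw [hsplit1, hsplitA, hsplitB, hsplitAA, S.card_AB, S.card_BA, S.card_BB,
      ← hcAdef, ← hcBdef]
  rw [hN, hcB, hnn, hcA]
  have hx' := hx
  rw [hcA] at hx'
  zify at hx' ⊢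
  linear_combination (-2 : ℤ) * hx'
end

section
/- Let A be a finite abelian group of order 2n with exponent greater than 2 containing a unique element y of order 2, and let G be the generalized dicyclic group Dic(A, b), i.e., G contains A as a subgroup of index 2 and there is b ∈ G \ A with b² = y and b·a·b⁻¹ = a⁻¹ for all a ∈ A. Then the number of ordered triples (C₁, C₂, C₃) of conjugacy classes of G with C₃ ⊆ C₁·C₂ (setwise product) equals 2n² + 6n + 8. -/
open scoped Pointwise

open ConjClasses

/-- Let `A` be a finite abelian group of order `2n` with exponent greater than 2
containing a unique element `y` of order 2, and let `G` be the generalized dicyclic group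
`Dic(A, b)`: `G` contains `A` as a subgroup of index 2 and there is `b ∈ G \ A` with
`b² = y` and `b * a * b⁻¹ = a⁻¹` for all `a ∈ A`.  Then the number of ordered triples
`(C₁, C₂, C₃)` of conjugacy classes of `G` with `C₃ ⊆ C₁ * C₂` equals `2n² + 6n + 8`. -/
theorem stmt_11 {G : Type*} [Group G] [Finite G] (A : Subgroup G)
    (hcomm : ∀ x ∈ A, ∀ y ∈ A, x * y = y * x) (hidx : A.index = 2)
    (n : ℕ) (hn : Nat.card A = 2 * n) (hexp : 2 < Monoid.exponent A)
    (y : G) (hy : y ∈ A) (hy2 : orderOf y = 2)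
    (hyuniq : ∀ z ∈ A, orderOf z = 2 → z = y)
    (b : G) (hb : b ∉ A) (hb2 : b ^ 2 = y) (hinv : ∀ a ∈ A, b * a * b⁻¹ = a⁻¹) :
    Nat.card {T : ConjClasses G × ConjClasses G × ConjClasses G //
        T.2.2.carrier ⊆ T.1.carrier * T.2.1.carrier}
      = 2 * n ^ 2 + 6 * n + 8 := by
  classical
  have hy1 : y ≠ 1 := by
    intro h; rw [h, orderOf_one] at hy2; omega
  have hyy : y ^ 2 = 1 := by
    rw [← hy2]; exact pow_orderOf_eq_one y
  -- squares of elements of A of order dividing 2 are 1 or y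
  have hsq1 : ∀ z ∈ A, z ^ 2 = 1 → z = 1 ∨ z = y := by
    intro z hz h2
    by_cases h1 : z = 1
    · exact Or.inl h1
    · exact Or.inr (hyuniq z hz (orderOf_eq_prime h2 h1))
  -- conjugation by any element outside A inverts A
  have hconj : ∀ g, g ∉ A → ∀ a ∈ A, g * a * g⁻¹ = a⁻¹ := by
    intro g hg a ha
    have hbg : b⁻¹ * g ∈ A := by
      rw [Subgroup.mul_mem_iff_of_index_two hidx]
      simp [hb, hg, A.inv_mem_iff]
    have hc : (b⁻¹ * g) * a * (b⁻¹ * g)⁻¹ = a := by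
      have := hcomm _ hbg a ha
      rw [this]; group
    have : g * a * g⁻¹ = b * ((b⁻¹ * g) * a * (b⁻¹ * g)⁻¹) * b⁻¹ := by group
    rw [this, hc]; exact hinv a ha
  -- carrier of a class of an element of A
  have hcarA : ∀ a ∈ A, (ConjClasses.mk a).carrier = ({a, a⁻¹} : Set G) := by
    intro a ha
    ext x
    rw [mem_carrier_iff_mk_eq, mk_eq_mk_iff_isConj]
    constructor
    · intro h
      obtain ⟨c, hc⟩ := isConj_iff.mp h.symm
      by_cases hcA : c ∈ A
      · left
        rw [← hc, hcomm c hcA a ha, mul_assoc, mul_inv_cancel, mul_one]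
      · right
        rw [← hc, hconj c hcA a ha]
        exact Set.mem_singleton _
    · rintro (rfl | rfl)
      · exact IsConj.refl x
      · exact (isConj_iff.mpr ⟨b, hinv a ha⟩).symm
  -- the subgroup of squares
  let sq : ↥A →* G := {
    toFun := fun a => (a : G) ^ 2
    map_one' := by simp
    map_mul' := fun u v => (Commute.mul_pow (hcomm u u.2 v v.2) 2) }
  let Q : Subgroup G := sq.range
  have hmemQ : ∀ x : G, x ∈ Q ↔ ∃ c ∈ A, c ^ 2 = x := by
    intro x
    constructor
    · rintro ⟨c, rfl⟩; exact ⟨c, c.2, rfl⟩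
    · rintro ⟨c, hc, rfl⟩; exact ⟨⟨c, hc⟩, rfl⟩
  have hQA : ∀ x ∈ Q, x ∈ A := by
    intro x hx
    obtain ⟨c, hc, rfl⟩ := (hmemQ x).mp hx
    exact pow_mem hc 2
  have hsqQ : ∀ x ∈ A, x ^ 2 ∈ Q := fun x hx => (hmemQ _).mpr ⟨x, hx, rfl⟩
  -- kernel of sq has exactly 2 elements
  have hker : (sq.ker : Set ↥A) = {1, ⟨y, hy⟩} := by
    ext a
    simp only [SetLike.mem_coe, MonoidHom.mem_ker, Set.mem_insert_iff, Set.mem_singleton_iff]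
    constructor
    · intro h
      have h' : (a : G) ^ 2 = 1 := h
      rcases hsq1 a a.2 h' with h1 | h1
      · left; exact Subtype.ext h1
      · right; exact Subtype.ext h1
    · rintro (rfl | rfl)
      · simp [sq]
      · exact hyy
  have hkercard : Nat.card sq.ker = 2 := by
    have : Nat.card sq.ker = (sq.ker : Set ↥A).ncard := rfl
    rw [this, hker, Set.ncard_pair]
    intro h
    exact hy1 (congrArg Subtype.val h).symm
  have hcardQ : Nat.card Q = n := by
    have h1 : Nat.card ↥A = Nat.card (↥A ⧸ sq.ker) * Nat.card sq.ker :=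
      Subgroup.card_eq_card_quotient_mul_card_subgroup sq.ker
    have h2 : Nat.card (↥A ⧸ sq.ker) = Nat.card Q :=
      Nat.card_congr (QuotientGroup.quotientKerEquivRange sq).toEquiv
    rw [h2, hkercard, hn] at h1
    omega
  have hn0 : 0 < n := by
    have : 0 < Nat.card ↥A := Nat.card_pos
    omega
  -- inverse lies in same coset of Q
  have hinvcoset : ∀ x ∈ A, x⁻¹ ∈ x • (Q : Set G) := by
    intro x hx
    refine ⟨(x⁻¹) ^ 2, hsqQ _ (A.inv_mem hx), ?_⟩
    simp [smul_eq_mul]; group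
  -- carrier of a class of an element outside A
  have hcarO : ∀ g, g ∉ A → (ConjClasses.mk g).carrier = g • (Q : Set G) := by
    intro g hg
    ext x
    rw [mem_carrier_iff_mk_eq, mk_eq_mk_iff_isConj]
    constructor
    · intro h
      obtain ⟨c, hc⟩ := isConj_iff.mp h.symm
      by_cases hcA : c ∈ A
      · refine ⟨(c⁻¹) ^ 2, hsqQ _ (A.inv_mem hcA), ?_⟩
        have h1 : g⁻¹ * c * g = c⁻¹ := by
          have := hconj g⁻¹ (fun hh => hg (by simpa using A.inv_mem hh)) c hcA
          rw [← this]; group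
        rw [← hc]
        show (g • (c⁻¹ ^ 2) : G) = c * g * c⁻¹
        rw [smul_eq_mul]
        symm
        calc c * g * c⁻¹ = g * (g⁻¹ * c * g) * c⁻¹ := by group
          _ = g * c⁻¹ * c⁻¹ := by rw [h1]
          _ = g * c⁻¹ ^ 2 := by rw [pow_two, mul_assoc]
      · have hcg : c * g⁻¹ ∈ A := by
          rw [Subgroup.mul_mem_iff_of_index_two hidx]
          simp [hcA, A.inv_mem_iff, hg]
        refine ⟨((c * g⁻¹)⁻¹) ^ 2, hsqQ _ (A.inv_mem hcg), ?_⟩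
        have h1 : g⁻¹ * (c * g⁻¹) * g = (c * g⁻¹)⁻¹ := by
          have := hconj g⁻¹ (fun hh => hg (by simpa using A.inv_mem hh)) _ hcg
          rw [← this]; group
        rw [← hc]
        show (g • ((c * g⁻¹)⁻¹ ^ 2) : G) = c * g * c⁻¹
        rw [smul_eq_mul]
        symm
        calc c * g * c⁻¹ = (c * g⁻¹) * g * (c * g⁻¹)⁻¹ := by group
          _ = g * (g⁻¹ * (c * g⁻¹) * g) * (c * g⁻¹)⁻¹ := by group
          _ = g * (c * g⁻¹)⁻¹ * (c * g⁻¹)⁻¹ := by rw [h1]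
          _ = g * (c * g⁻¹)⁻¹ ^ 2 := by rw [pow_two, mul_assoc]
    · rintro ⟨q, hq, rfl⟩
      obtain ⟨c, hcA, rfl⟩ := (hmemQ q).mp hq
      refine (isConj_iff.mpr ⟨c⁻¹, ?_⟩).symm
      have h1 : g⁻¹ * c⁻¹ * g = c := by
        have := hconj g⁻¹ (fun hh => hg (by simpa using A.inv_mem hh)) _ (A.inv_mem hcA)
        simpa using this
      show c⁻¹ * g * (c⁻¹)⁻¹ = (g • (c ^ 2) : G)
      rw [smul_eq_mul]
      calc c⁻¹ * g * (c⁻¹)⁻¹ = g * (g⁻¹ * c⁻¹ * g) * c := by group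
        _ = g * c * c := by rw [h1]
        _ = g * c ^ 2 := by rw [pow_two, mul_assoc]
  -- inverse has the same class (for elements of A)
  have hmkinv : ∀ x ∈ A, ConjClasses.mk x⁻¹ = ConjClasses.mk x := by
    intro x hx
    rw [mk_eq_mk_iff_isConj]
    exact (isConj_iff.mpr ⟨b, hinv x hx⟩).symm
  -- carrier nonempty / subset implies equal
  have hrep : ∀ c : ConjClasses G, ∃ x, ConjClasses.mk x = c ∧ x ∈ c.carrier := by
    intro c
    obtain ⟨x, hx⟩ := c.exists_rep
    exact ⟨x, hx, hx ▸ mem_carrier_mk⟩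
  have hsub_eq : ∀ c d : ConjClasses G, c.carrier ⊆ d.carrier → c = d := by
    intro c d hcd
    obtain ⟨x, hx, hx2⟩ := hrep c
    have := hcd hx2
    rw [mem_carrier_iff_mk_eq] at this
    rw [← hx, this]
  -- products of carriers
  have hmul_notMem : ∀ x ∈ A, ∀ g, g ∉ A → x * g ∉ A ∧ g * x ∉ A := by
    intro x hx g hg
    constructor
    · intro h; exact hg (by simpa using A.mul_mem (A.inv_mem hx) h)
    · intro h; exact hg (by simpa using A.mul_mem h (A.inv_mem hx))
  have hPOO : ∀ g, g ∉ A → ∀ h, h ∉ A →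
      (ConjClasses.mk g).carrier * (ConjClasses.mk h).carrier = (g * h) • (Q : Set G) := by
    intro g hg h hh
    rw [hcarO g hg, hcarO h hh]
    ext x
    constructor
    · rintro ⟨u, hu, v, hv, rfl⟩
      obtain ⟨q, hq, rfl⟩ := hu
      obtain ⟨q', hq', rfl⟩ := hv
      refine ⟨q⁻¹ * q', Q.mul_mem (Q.inv_mem hq) hq', ?_⟩
      have h1 : h⁻¹ * q * h = q⁻¹ := by
        have := hconj h⁻¹ (fun hh' => hh (by simpa using A.inv_mem hh')) q (hQA q hq)
        simpa using this
      simp only [smul_eq_mul]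
      calc g * h * (q⁻¹ * q') = g * h * q⁻¹ * q' := by group
        _ = g * (h * (h⁻¹ * q * h) * h⁻¹) * h * q' := by rw [h1]; group
        _ = (g * q) * (h * q') := by group
    · rintro ⟨q, hq, rfl⟩
      exact ⟨g * 1, ⟨1, Q.one_mem, rfl⟩, h * q, ⟨q, hq, rfl⟩, by simp [smul_eq_mul, mul_assoc]⟩
  have hPIO : ∀ a ∈ A, ∀ g, g ∉ A →
      (ConjClasses.mk a).carrier * (ConjClasses.mk g).carrier = (ConjClasses.mk (a * g)).carrier := by
    intro a ha g hg
    rw [hcarA a ha, hcarO g hg, hcarO (a * g) (hmul_notMem a ha g hg).1]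
    ext x
    constructor
    · rintro ⟨u, hu, v, hv, rfl⟩
      obtain ⟨q, hq, rfl⟩ := hv
      rcases hu with rfl | rfl
      · exact ⟨q, hq, by simp [smul_eq_mul, mul_assoc]⟩
      · refine ⟨a ^ 2 * q, Q.mul_mem (hsqQ a ha) hq, ?_⟩
        have h2 : g * a ^ 2 * g⁻¹ = a⁻¹ ^ 2 := by
          rw [hconj g hg (a ^ 2) (pow_mem ha 2)]; group
        show a * g * (a ^ 2 * q) = a⁻¹ * (g * q)
        calc a * g * (a ^ 2 * q) = a * (g * a ^ 2 * g⁻¹) * (g * q) := by group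
          _ = a * a⁻¹ ^ 2 * (g * q) := by rw [h2]
          _ = a⁻¹ * (g * q) := by group
    · rintro ⟨q, hq, rfl⟩
      exact ⟨a, Set.mem_insert _ _, g * q, ⟨q, hq, rfl⟩, by simp [smul_eq_mul, mul_assoc]⟩
  have hPOI : ∀ a ∈ A, ∀ g, g ∉ A →
      (ConjClasses.mk g).carrier * (ConjClasses.mk a).carrier = (ConjClasses.mk (g * a)).carrier := by
    intro a ha g hg
    rw [hcarA a ha, hcarO g hg, hcarO (g * a) (hmul_notMem a ha g hg).2]
    ext x
    constructor
    · rintro ⟨u, hu, v, hv, hx3⟩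
      obtain ⟨q, hq, rfl⟩ := hu
      rcases hv with h | h <;> rw [h] at hx3 <;> rw [← hx3]
      · refine ⟨q, hq, ?_⟩
        show g * a * q = g * q * a
        rw [mul_assoc, mul_assoc, hcomm a ha q (hQA q hq)]
      · refine ⟨a⁻¹ ^ 2 * q, Q.mul_mem (hsqQ a⁻¹ (A.inv_mem ha)) hq, ?_⟩
        show g * a * (a⁻¹ ^ 2 * q) = g * q * a⁻¹
        have h4 : a * (a⁻¹ ^ 2 * q) = a⁻¹ * q := by group
        rw [mul_assoc, h4, hcomm a⁻¹ (A.inv_mem ha) q (hQA q hq), ← mul_assoc]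
    · rintro ⟨q, hq, rfl⟩
      refine ⟨g * q, ⟨q, hq, rfl⟩, a, Set.mem_insert _ _, ?_⟩
      show g * q * a = g * a * q
      rw [mul_assoc, mul_assoc, hcomm q (hQA q hq) a ha]
  -- classes of products of two elements of A
  have hPII : ∀ a ∈ A, ∀ c ∈ A, ∀ c3 : ConjClasses G,
      c3.carrier ⊆ (ConjClasses.mk a).carrier * (ConjClasses.mk c).carrier ↔
        c3 = ConjClasses.mk (a * c) ∨ c3 = ConjClasses.mk (a * c⁻¹) := by
    intro a ha c hc c3
    rw [hcarA a ha, hcarA c hc]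
    constructor
    · intro hsub
      obtain ⟨x, hx, hx2⟩ := hrep c3
      obtain ⟨u, hu, v, hv, hx3⟩ := hsub hx2
      rcases hu with h1 | h1 <;> rcases hv with h2 | h2 <;> rw [h1, h2] at hx3
      · exact Or.inl (by rw [← hx, ← hx3])
      · exact Or.inr (by rw [← hx, ← hx3])
      · refine Or.inr ?_
        rw [← hx, ← hx3, ← hmkinv (a * c⁻¹) (A.mul_mem ha (A.inv_mem hc))]
        congr 1
        rw [mul_inv_rev, inv_inv, hcomm c hc a⁻¹ (A.inv_mem ha)]
      · refine Or.inl ?_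
        rw [← hx, ← hx3, ← hmkinv (a * c) (A.mul_mem ha hc)]
        congr 1
        rw [mul_inv_rev, hcomm c⁻¹ (A.inv_mem hc) a⁻¹ (A.inv_mem ha)]
    · have hs1 : (ConjClasses.mk (a * c)).carrier ⊆ ({a, a⁻¹} : Set G) * {c, c⁻¹} := by
        rw [hcarA (a * c) (A.mul_mem ha hc)]
        rintro x (rfl | rfl)
        · exact Set.mul_mem_mul (Set.mem_insert _ _) (Set.mem_insert _ _)
        · have : (a * c)⁻¹ = a⁻¹ * c⁻¹ := by
            rw [mul_inv_rev, hcomm c⁻¹ (A.inv_mem hc) a⁻¹ (A.inv_mem ha)]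
          rw [this]
          exact Set.mul_mem_mul (Set.mem_insert_of_mem _ rfl) (Set.mem_insert_of_mem _ rfl)
      have hs2 : (ConjClasses.mk (a * c⁻¹)).carrier ⊆ ({a, a⁻¹} : Set G) * {c, c⁻¹} := by
        rw [hcarA (a * c⁻¹) (A.mul_mem ha (A.inv_mem hc))]
        rintro x (rfl | rfl)
        · exact Set.mul_mem_mul (Set.mem_insert _ _) (Set.mem_insert_of_mem _ rfl)
        · have : (a * c⁻¹)⁻¹ = a⁻¹ * c := by
            rw [mul_inv_rev, inv_inv, hcomm c hc a⁻¹ (A.inv_mem ha)]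
          rw [this]
          exact Set.mul_mem_mul (Set.mem_insert_of_mem _ rfl) (Set.mem_insert _ _)
      rintro (rfl | rfl)
      · exact hs1
      · exact hs2
  -- when are the two product classes equal
  have hpair_eq : ∀ a ∈ A, ∀ c ∈ A,
      (ConjClasses.mk (a * c) = ConjClasses.mk (a * c⁻¹) ↔ a ^ 2 = 1 ∨ c ^ 2 = 1) := by
    intro a ha c hc
    constructor
    · intro h
      have : a * c ∈ (ConjClasses.mk (a * c⁻¹)).carrier := by
        rw [← h]; exact mem_carrier_mk
      rw [hcarA (a * c⁻¹) (A.mul_mem ha (A.inv_mem hc))] at this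
      rcases this with h1 | h1
      · right
        have h3 : c = c⁻¹ := mul_left_cancel h1
        rw [pow_two]
        nth_rewrite 2 [h3]
        simp
      · left
        have h2 : (a * c⁻¹)⁻¹ = a⁻¹ * c := by
          rw [mul_inv_rev, inv_inv, hcomm c hc a⁻¹ (A.inv_mem ha)]
        rw [h2] at h1
        have h3 : a = a⁻¹ := mul_right_cancel h1
        rw [pow_two]
        nth_rewrite 2 [h3]
        simp
    · rintro (h | h)
      · have ha1 : a⁻¹ = a := by
          rw [← mul_one a⁻¹, ← h, pow_two]; group
        rw [← hmkinv (a * c⁻¹) (A.mul_mem ha (A.inv_mem hc))]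
        congr 1
        rw [mul_inv_rev, inv_inv, hcomm c hc a⁻¹ (A.inv_mem ha), ha1]
      · have hc1 : c⁻¹ = c := by
          rw [← mul_one c⁻¹, ← h, pow_two]; group
        rw [hc1]
  letI : Fintype G := Fintype.ofFinite G
  letI : Fintype (ConjClasses G) := Fintype.ofFinite _
  -- inside classes
  have hIc : ∀ c : ConjClasses G, c.carrier ⊆ (A : Set G) ↔ ∃ a ∈ A, c = ConjClasses.mk a := by
    intro c
    constructor
    · intro h
      obtain ⟨x, hx, hx2⟩ := hrep c
      exact ⟨x, h hx2, hx.symm⟩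
    · rintro ⟨a, ha, rfl⟩
      rw [hcarA a ha]
      rintro z (rfl | rfl)
      · exact ha
      · exact A.inv_mem ha
  have hOc : ∀ c : ConjClasses G, ¬ c.carrier ⊆ (A : Set G) ↔ ∃ g, g ∉ A ∧ c = ConjClasses.mk g := by
    intro c
    constructor
    · intro h
      obtain ⟨x, hx, hx2⟩ := hrep c
      by_cases hxA : x ∈ A
      · exact absurd ((hIc c).mpr ⟨x, hxA, hx.symm⟩) h
      · exact ⟨x, hxA, hx.symm⟩
    · rintro ⟨g, hg, rfl⟩ h
      exact hg (h mem_carrier_mk)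
  set Ifin : Finset (ConjClasses G) :=
    Finset.univ.filter (fun c => c.carrier ⊆ (A : Set G)) with hIfin
  set Ofin : Finset (ConjClasses G) :=
    Finset.univ.filter (fun c => ¬ c.carrier ⊆ (A : Set G)) with hOfin
  set Tfin : Finset (ConjClasses G) :=
    ({ConjClasses.mk (1 : G), ConjClasses.mk y} : Finset (ConjClasses G)) with hTfin
  have hmemI : ∀ c : ConjClasses G, c ∈ Ifin ↔ ∃ a ∈ A, c = ConjClasses.mk a := by
    intro c; rw [hIfin, Finset.mem_filter]; simp [hIc c]
  have hmemO : ∀ c : ConjClasses G, c ∈ Ofin ↔ ∃ g, g ∉ A ∧ c = ConjClasses.mk g := by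
    intro c; rw [hOfin, Finset.mem_filter]; simp [← hOc c]
  have hT_ne : ConjClasses.mk (1 : G) ≠ ConjClasses.mk y := by
    intro h
    obtain ⟨u, hu⟩ := isConj_iff.mp (mk_eq_mk_iff_isConj.mp h)
    exact hy1 (by simpa using hu.symm)
  have hTcard : Tfin.card = 2 := by
    rw [hTfin, Finset.card_insert_of_notMem (by simpa using hT_ne), Finset.card_singleton]
  have hyinv : y⁻¹ = y := by
    rw [← mul_one y⁻¹, ← hyy, pow_two]; group
  have hTmem : ∀ a ∈ A, (ConjClasses.mk a ∈ Tfin ↔ a ^ 2 = 1) := by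
    intro a ha
    rw [hTfin]
    simp only [Finset.mem_insert, Finset.mem_singleton]
    constructor
    · rintro (h | h)
      · have : a ∈ (ConjClasses.mk (1:G)).carrier := by
          rw [mem_carrier_iff_mk_eq]; exact h
        rw [hcarA 1 A.one_mem] at this
        rcases this with rfl | h1
        · simp
        · simp only [Set.mem_singleton_iff] at h1
          rw [h1]; simp
      · have : a ∈ (ConjClasses.mk y).carrier := by
          rw [mem_carrier_iff_mk_eq]; exact h
        rw [hcarA y hy] at this
        rcases this with rfl | h1
        · exact hyy
        · simp only [Set.mem_singleton_iff, hyinv] at h1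
          rw [h1]; exact hyy
    · intro h
      rcases hsq1 a ha h with rfl | rfl
      · left; rfl
      · right; rfl
  have hTsubI : Tfin ⊆ Ifin := by
    intro c hc
    rw [hTfin] at hc
    simp only [Finset.mem_insert, Finset.mem_singleton] at hc
    rcases hc with rfl | rfl
    · exact (hmemI _).mpr ⟨1, A.one_mem, rfl⟩
    · exact (hmemI _).mpr ⟨y, hy, rfl⟩
  -- counting inside classes
  set Afin : Finset G := Finset.univ.filter (fun x => x ∈ A) with hAfin
  set Bfin : Finset G := Finset.univ.filter (fun x => x ∉ A) with hBfin
  have hAcard : Afin.card = 2 * n := by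
    rw [hAfin, ← Fintype.card_subtype, ← Nat.card_eq_fintype_card]
    exact hn
  have hGcard : Fintype.card G = 4 * n := by
    rw [← Nat.card_eq_fintype_card, ← A.card_mul_index, hidx, hn]
    ring
  have hBcard : Bfin.card = 2 * n := by
    have := Finset.card_filter_add_card_filter_not
      (s := Finset.univ) (p := fun x : G => x ∈ A)
    rw [Finset.card_univ, hGcard] at this
    rw [hBfin]
    rw [hAfin] at hAcard
    omega
  have cardI : Ifin.card = n + 1 := by
    have hmap : ∀ x ∈ Afin, ConjClasses.mk x ∈ Ifin := by
      intro x hx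
      rw [hAfin, Finset.mem_filter] at hx
      exact (hmemI _).mpr ⟨x, hx.2, rfl⟩
    have key := Finset.card_eq_sum_card_fiberwise hmap
    have hfib : ∀ c ∈ Ifin, (Afin.filter (fun a => ConjClasses.mk a = c)).card
        = (if c ∈ Tfin then 1 else 2) := by
      intro c hc
      obtain ⟨a₀, ha₀, rfl⟩ := (hmemI c).mp hc
      have : Afin.filter (fun a => ConjClasses.mk a = ConjClasses.mk a₀) = ({a₀, a₀⁻¹} : Finset G) := by
        ext x
        simp only [Finset.mem_filter, Finset.mem_insert, Finset.mem_singleton, hAfin,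
          Finset.mem_univ, true_and]
        constructor
        · rintro ⟨hx1, hx2⟩
          have : x ∈ (ConjClasses.mk a₀).carrier := by rw [mem_carrier_iff_mk_eq]; exact hx2
          rw [hcarA a₀ ha₀] at this
          simpa using this
        · rintro (rfl | rfl)
          · exact ⟨ha₀, rfl⟩
          · exact ⟨A.inv_mem ha₀, hmkinv a₀ ha₀⟩
      rw [this]
      by_cases h : a₀ ^ 2 = 1
      · rw [if_pos ((hTmem a₀ ha₀).mpr h)]
        have : a₀⁻¹ = a₀ := by rw [← mul_one a₀⁻¹, ← h, pow_two]; group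
        rw [this]
        simp
      · rw [if_neg (fun hc' => h ((hTmem a₀ ha₀).mp hc'))]
        refine Finset.card_pair ?_
        intro he
        apply h
        rw [pow_two]
        nth_rewrite 2 [he]
        simp
    rw [Finset.sum_congr rfl hfib, ← Finset.sum_sdiff hTsubI] at key
    have e1 : (∑ c ∈ Tfin, if c ∈ Tfin then (1:ℕ) else 2) = 2 := by
      rw [Finset.sum_congr rfl (fun c hc => if_pos hc), Finset.sum_const, hTcard]; rfl
    have e2 : (∑ c ∈ Ifin \ Tfin, if c ∈ Tfin then (1:ℕ) else 2) = (Ifin.card - 2) * 2 := by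
      rw [Finset.sum_congr rfl (fun c hc => if_neg (Finset.mem_sdiff.mp hc).2), Finset.sum_const,
        Finset.card_sdiff_of_subset hTsubI, hTcard, smul_eq_mul]
    have e3 : 2 ≤ Ifin.card := hTcard ▸ Finset.card_le_card hTsubI
    rw [e1, e2, hAcard] at key
    omega
  have cardO : Ofin.card = 2 := by
    have hmap : ∀ x ∈ Bfin, ConjClasses.mk x ∈ Ofin := by
      intro x hx
      rw [hBfin, Finset.mem_filter] at hx
      exact (hmemO _).mpr ⟨x, hx.2, rfl⟩
    have key := Finset.card_eq_sum_card_fiberwise hmap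
    have hfib : ∀ c ∈ Ofin, (Bfin.filter (fun x => ConjClasses.mk x = c)).card = n := by
      intro c hc
      obtain ⟨g, hg, rfl⟩ := (hmemO c).mp hc
      have himg : Bfin.filter (fun x => ConjClasses.mk x = ConjClasses.mk g)
          = Finset.image (fun q : ↥Q => g * (q : G)) Finset.univ := by
        ext x
        simp only [Finset.mem_filter, Finset.mem_image, Finset.mem_univ, true_and, hBfin]
        constructor
        · rintro ⟨hx1, hx2⟩
          have : x ∈ (ConjClasses.mk g).carrier := by rw [mem_carrier_iff_mk_eq]; exact hx2
          rw [hcarO g hg] at this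
          obtain ⟨q, hq, hq2⟩ := this
          exact ⟨⟨q, hq⟩, hq2⟩
        · rintro ⟨⟨q, hq⟩, rfl⟩
          refine ⟨(hmul_notMem q (hQA q hq) g hg).2, ?_⟩
          rw [← mem_carrier_iff_mk_eq, hcarO g hg]
          exact ⟨q, hq, rfl⟩
      rw [himg, Finset.card_image_of_injective _
        (fun q q' hqq => Subtype.ext (mul_left_cancel hqq)), Finset.card_univ,
        ← Nat.card_eq_fintype_card]
      exact hcardQ
    rw [Finset.sum_congr rfl hfib, Finset.sum_const, smul_eq_mul, hBcard] at key
    have : Ofin.card * n = 2 * n := key.symm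
    exact Nat.eq_of_mul_eq_mul_right hn0 this
  set N : ConjClasses G → ConjClasses G → ℕ := fun c1 c2 =>
    (Finset.univ.filter (fun c3 : ConjClasses G => c3.carrier ⊆ c1.carrier * c2.carrier)).card
    with hN
  have hNone : ∀ c1 c2 d : ConjClasses G, c1.carrier * c2.carrier = d.carrier → N c1 c2 = 1 := by
    intro c1 c2 d hd
    have he : Finset.univ.filter
        (fun c3 : ConjClasses G => c3.carrier ⊆ c1.carrier * c2.carrier) = {d} := by
      ext c3
      simp only [Finset.mem_filter, Finset.mem_univ, true_and, Finset.mem_singleton, hd]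
      exact ⟨fun h => hsub_eq c3 d h, fun h => h ▸ subset_rfl⟩
    simp only [hN]
    rw [he, Finset.card_singleton]
  have hN_IO : ∀ c1 ∈ Ifin, ∀ c2 ∈ Ofin, N c1 c2 = 1 := by
    intro c1 hc1 c2 hc2
    obtain ⟨a, ha, rfl⟩ := (hmemI c1).mp hc1
    obtain ⟨g, hg, rfl⟩ := (hmemO c2).mp hc2
    exact hNone _ _ _ (hPIO a ha g hg)
  have hN_OI : ∀ c1 ∈ Ofin, ∀ c2 ∈ Ifin, N c1 c2 = 1 := by
    intro c1 hc1 c2 hc2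
    obtain ⟨g, hg, rfl⟩ := (hmemO c1).mp hc1
    obtain ⟨a, ha, rfl⟩ := (hmemI c2).mp hc2
    exact hNone _ _ _ (hPOI a ha g hg)
  have hN_II : ∀ a ∈ A, ∀ c ∈ A,
      N (ConjClasses.mk a) (ConjClasses.mk c) = if a ^ 2 = 1 ∨ c ^ 2 = 1 then 1 else 2 := by
    intro a ha c hc
    have he : Finset.univ.filter (fun c3 : ConjClasses G =>
        c3.carrier ⊆ (ConjClasses.mk a).carrier * (ConjClasses.mk c).carrier)
        = {ConjClasses.mk (a * c), ConjClasses.mk (a * c⁻¹)} := by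
      ext c3
      simp only [Finset.mem_filter, Finset.mem_univ, true_and, Finset.mem_insert,
        Finset.mem_singleton]
      exact hPII a ha c hc c3
    simp only [hN]
    rw [he]
    by_cases h : a ^ 2 = 1 ∨ c ^ 2 = 1
    · rw [if_pos h, ← (hpair_eq a ha c hc).mpr h]
      simp
    · rw [if_neg h]
      exact Finset.card_pair (fun he' => h ((hpair_eq a ha c hc).mp he'))
  have hN_OO_sum : ∀ c1 ∈ Ofin, (∑ c2 ∈ Ofin, N c1 c2) = Ifin.card := by
    intro c1 hc1
    obtain ⟨g, hg, rfl⟩ := (hmemO c1).mp hc1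
    have hginv : g⁻¹ ∉ A := fun h => hg (by simpa using A.inv_mem h)
    have hdisj : ∀ c2 ∈ Ofin, ∀ c2' ∈ Ofin, c2 ≠ c2' →
        Disjoint (Finset.univ.filter (fun c3 : ConjClasses G =>
            c3.carrier ⊆ (ConjClasses.mk g).carrier * c2.carrier))
          (Finset.univ.filter (fun c3 : ConjClasses G =>
            c3.carrier ⊆ (ConjClasses.mk g).carrier * c2'.carrier)) := by
      intro c2 hc2 c2' hc2' hne
      obtain ⟨h, hh, rfl⟩ := (hmemO c2).mp hc2
      obtain ⟨h', hh', rfl⟩ := (hmemO c2').mp hc2'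
      rw [Finset.disjoint_left]
      intro c3 hc3 hc3'
      simp only [Finset.mem_filter, Finset.mem_univ, true_and] at hc3 hc3'
      rw [hPOO g hg h hh] at hc3
      rw [hPOO g hg h' hh'] at hc3'
      obtain ⟨x, hx, hx2⟩ := hrep c3
      obtain ⟨q, hq, hq2⟩ := hc3 hx2
      obtain ⟨q', hq', hq2'⟩ := hc3' hx2
      apply hne
      have heq : h' = h * (q * q'⁻¹) := by
        have h5 : g * h * q = g * h' * q' := by
          have h6 : ((g * h) • q : G) = (g * h') • q' := hq2.trans hq2'.symm
          simpa only [smul_eq_mul, ← mul_assoc] using h6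
        calc h' = g⁻¹ * (g * h' * q') * q'⁻¹ := by group
          _ = g⁻¹ * (g * h * q) * q'⁻¹ := by rw [h5]
          _ = h * (q * q'⁻¹) := by group
      have hmem : h' ∈ (ConjClasses.mk h).carrier := by
        rw [hcarO h hh]
        exact ⟨q * q'⁻¹, Q.mul_mem hq (Q.inv_mem hq'), heq.symm⟩
      exact (mem_carrier_iff_mk_eq.mp hmem).symm
    have hcover : Ofin.biUnion (fun c2 => Finset.univ.filter (fun c3 : ConjClasses G =>
        c3.carrier ⊆ (ConjClasses.mk g).carrier * c2.carrier)) = Ifin := by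
      ext c3
      rw [Finset.mem_biUnion]
      constructor
      · rintro ⟨c2, hc2, hc3⟩
        obtain ⟨h, hh, rfl⟩ := (hmemO c2).mp hc2
        simp only [Finset.mem_filter, Finset.mem_univ, true_and] at hc3
        rw [hPOO g hg h hh] at hc3
        rw [hmemI]
        obtain ⟨x, hx, hx2⟩ := hrep c3
        refine ⟨x, ?_, hx.symm⟩
        obtain ⟨q, hq, hq2⟩ := hc3 hx2
        rw [← hq2]
        show g * h * q ∈ (A : Set G)
        have hghA : g * h ∈ A := by
          rw [Subgroup.mul_mem_iff_of_index_two hidx]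
          simp [hg, hh]
        exact A.mul_mem hghA (hQA q hq)
      · intro hc3
        obtain ⟨x, hx, rfl⟩ := (hmemI c3).mp hc3
        refine ⟨ConjClasses.mk (g⁻¹ * x), (hmemO _).mpr
          ⟨g⁻¹ * x, (hmul_notMem x hx g⁻¹ hginv).2, rfl⟩, ?_⟩
        simp only [Finset.mem_filter, Finset.mem_univ, true_and]
        rw [hPOO g hg (g⁻¹ * x) (hmul_notMem x hx g⁻¹ hginv).2, ← mul_assoc,
          mul_inv_cancel, one_mul, hcarA x hx]
        rintro z (rfl | rfl)
        · exact ⟨1, Q.one_mem, by simp [smul_eq_mul]⟩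
        · exact hinvcoset x hx
    rw [← hcover, Finset.card_biUnion hdisj]
  -- inner sums
  have S2 : ∀ c1 ∈ Ifin, (∑ c2 ∈ Ofin, N c1 c2) = 2 := by
    intro c1 hc1
    rw [Finset.sum_congr rfl (fun c2 hc2 => hN_IO c1 hc1 c2 hc2), Finset.sum_const, cardO]
    rfl
  have S3 : ∀ c1 ∈ Ofin, (∑ c2 ∈ Ifin, N c1 c2) = n + 1 := by
    intro c1 hc1
    rw [Finset.sum_congr rfl (fun c2 hc2 => hN_OI c1 hc1 c2 hc2), Finset.sum_const, cardI]
    simp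
  have S4 : ∀ c1 ∈ Ofin, (∑ c2 ∈ Ofin, N c1 c2) = n + 1 := by
    intro c1 hc1
    rw [hN_OO_sum c1 hc1, cardI]
  have S1 : ∀ c1 ∈ Ifin, (∑ c2 ∈ Ifin, N c1 c2) = (if c1 ∈ Tfin then n + 1 else 2 * n) := by
    intro c1 hc1
    obtain ⟨a, ha, rfl⟩ := (hmemI c1).mp hc1
    by_cases h1 : a ^ 2 = 1
    · rw [if_pos ((hTmem a ha).mpr h1)]
      have : ∀ c2 ∈ Ifin, N (ConjClasses.mk a) c2 = 1 := by
        intro c2 hc2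
        obtain ⟨c, hc, rfl⟩ := (hmemI c2).mp hc2
        rw [hN_II a ha c hc, if_pos (Or.inl h1)]
      rw [Finset.sum_congr rfl this, Finset.sum_const, cardI]
      simp
    · rw [if_neg (fun hc' => h1 ((hTmem a ha).mp hc'))]
      rw [← Finset.sum_sdiff hTsubI]
      have e1 : (∑ c2 ∈ Tfin, N (ConjClasses.mk a) c2) = 2 := by
        rw [hTfin, Finset.sum_pair hT_ne, hN_II a ha 1 A.one_mem, hN_II a ha y hy,
          if_pos (Or.inr (by simp)), if_pos (Or.inr hyy)]
      have e2 : (∑ c2 ∈ Ifin \ Tfin, N (ConjClasses.mk a) c2) = (Ifin.card - 2) * 2 := by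
        have : ∀ c2 ∈ Ifin \ Tfin, N (ConjClasses.mk a) c2 = 2 := by
          intro c2 hc2
          rw [Finset.mem_sdiff] at hc2
          obtain ⟨c, hc, rfl⟩ := (hmemI c2).mp hc2.1
          rw [hN_II a ha c hc, if_neg]
          rintro (h | h)
          · exact h1 h
          · exact hc2.2 ((hTmem c hc).mpr h)
        rw [Finset.sum_congr rfl this, Finset.sum_const, Finset.card_sdiff_of_subset hTsubI, hTcard,
          smul_eq_mul]
      rw [e1, e2, cardI]
      have : 2 ≤ n + 1 := by omega
      omega
  -- assembling the total count
  have htot : Nat.card {T : ConjClasses G × ConjClasses G × ConjClasses G //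
      T.2.2.carrier ⊆ T.1.carrier * T.2.1.carrier}
      = ∑ c1 : ConjClasses G, ∑ c2 : ConjClasses G, N c1 c2 := by
    rw [Nat.card_eq_fintype_card, Fintype.card_subtype]
    rw [Finset.card_filter, Fintype.sum_prod_type]
    apply Finset.sum_congr rfl
    intro c1 _
    rw [Fintype.sum_prod_type]
    apply Finset.sum_congr rfl
    intro c2 _
    rw [hN, ← Finset.card_filter]
  rw [htot]
  have hsplit1 : (∑ c1 : ConjClasses G, ∑ c2 : ConjClasses G, N c1 c2)
      = (∑ c1 ∈ Ifin, ∑ c2 : ConjClasses G, N c1 c2)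
        + (∑ c1 ∈ Ofin, ∑ c2 : ConjClasses G, N c1 c2) := by
    rw [hIfin, hOfin]
    exact (Finset.sum_filter_add_sum_filter_not Finset.univ _ _).symm
  have hsplit2 : ∀ c1 : ConjClasses G, (∑ c2 : ConjClasses G, N c1 c2)
      = (∑ c2 ∈ Ifin, N c1 c2) + (∑ c2 ∈ Ofin, N c1 c2) := by
    intro c1
    rw [hIfin, hOfin]
    exact (Finset.sum_filter_add_sum_filter_not Finset.univ _ _).symm
  rw [hsplit1]
  have hI_part : (∑ c1 ∈ Ifin, ∑ c2 : ConjClasses G, N c1 c2) = 2 * n ^ 2 + 2 * n + 4 := by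
    have : ∀ c1 ∈ Ifin, (∑ c2 : ConjClasses G, N c1 c2)
        = (if c1 ∈ Tfin then n + 1 else 2 * n) + 2 := by
      intro c1 hc1
      rw [hsplit2 c1, S1 c1 hc1, S2 c1 hc1]
    rw [Finset.sum_congr rfl this, ← Finset.sum_sdiff hTsubI]
    have e1 : (∑ c1 ∈ Tfin, ((if c1 ∈ Tfin then n + 1 else 2 * n) + 2)) = 2 * (n + 3) := by
      rw [Finset.sum_congr rfl (fun c hc => by rw [if_pos hc]), Finset.sum_const, hTcard,
        smul_eq_mul]
    have e2 : (∑ c1 ∈ Ifin \ Tfin, ((if c1 ∈ Tfin then n + 1 else 2 * n) + 2))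
        = (n + 1 - 2) * (2 * n + 2) := by
      rw [Finset.sum_congr rfl
        (fun c hc => by rw [if_neg (Finset.mem_sdiff.mp hc).2]), Finset.sum_const,
        Finset.card_sdiff_of_subset hTsubI, hTcard, cardI, smul_eq_mul]
    obtain ⟨m, rfl⟩ : ∃ m, n = m + 1 := ⟨n - 1, by omega⟩
    rw [e1, e2]
    have hm : m + 1 + 1 - 2 = m := by omega
    rw [hm]
    ring
  have hO_part : (∑ c1 ∈ Ofin, ∑ c2 : ConjClasses G, N c1 c2) = 4 * n + 4 := by
    have : ∀ c1 ∈ Ofin, (∑ c2 : ConjClasses G, N c1 c2) = 2 * n + 2 := by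
      intro c1 hc1
      rw [hsplit2 c1, S3 c1 hc1, S4 c1 hc1]
      ring
    rw [Finset.sum_congr rfl this, Finset.sum_const, cardO, smul_eq_mul]
    ring
  rw [hI_part, hO_part]
  ring
end

section
/- Let G be a finite group, A an abelian subgroup of G of index 2, and b an element of G not in A. Let a, a' ∈ A with b·a·b⁻¹ ≠ a and b·a'·b⁻¹ ≠ a'. Then the setwise product Cl(a)·Cl(a') of the conjugacy classes of a and a' equals Cl(a·a') ∪ Cl(a·(b·a'·b⁻¹)), and moreover Cl(a·a') ≠ Cl(a·(b·a'·b⁻¹)). -/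
open scoped Pointwise

/-- Let `G` be a finite group, `A` an abelian subgroup of `G` of index 2, and `b ∈ G \ A`.
Let `a, a' ∈ A` with `b * a * b⁻¹ ≠ a` and `b * a' * b⁻¹ ≠ a'`.  Then the setwise product
`Cl(a) * Cl(a')` of the conjugacy classes of `a` and `a'` equals
`Cl(a * a') ∪ Cl(a * (b * a' * b⁻¹))`, and moreover these two classes are distinct. -/
theorem stmt_12 {G : Type*} [Group G] [Finite G] (A : Subgroup G)
    (hcomm : ∀ x ∈ A, ∀ y ∈ A, x * y = y * x) (hidx : A.index = 2)
    (b : G) (hb : b ∉ A) (a a' : G) (ha : a ∈ A) (ha' : a' ∈ A)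
    (hmove : b * a * b⁻¹ ≠ a) (hmove' : b * a' * b⁻¹ ≠ a') :
    conjugatesOf a * conjugatesOf a'
        = conjugatesOf (a * a') ∪ conjugatesOf (a * (b * a' * b⁻¹)) ∧
      conjugatesOf (a * a') ≠ conjugatesOf (a * (b * a' * b⁻¹)) := by
  -- A is normal (index 2), b² ∈ A
  have hb2 : b * b ∈ A := Subgroup.mul_self_mem_of_index_two hidx b
  have hconjA : ∀ x ∈ A, b * x * b⁻¹ ∈ A := by
    intro x hx
    have h1 : b * x ∉ A := by
      intro h
      exact hb (by simpa using A.mul_mem h (A.inv_mem hx))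
    have hbinv : b⁻¹ ∉ A := fun h => hb (by simpa using A.inv_mem h)
    have := (Subgroup.mul_mem_iff_of_index_two hidx (a := b * x) (b := b⁻¹)).2
      (iff_of_false h1 hbinv)
    simpa [mul_assoc] using this
  -- conjugation of an element of A by anything is either trivial or by b
  have key : ∀ x ∈ A, ∀ c : G, c * x * c⁻¹ = x ∨ c * x * c⁻¹ = b * x * b⁻¹ := by
    intro x hx c
    by_cases hc : c ∈ A
    · left
      have := hcomm c hc x hx
      rw [this]; group
    · right
      have hbc : b⁻¹ * c ∈ A := by
        have hbinv : b⁻¹ ∉ A := fun h => hb (by simpa using A.inv_mem h)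
        exact (Subgroup.mul_mem_iff_of_index_two hidx).2 (iff_of_false hbinv hc)
      have : c * x * c⁻¹ = b * ((b⁻¹ * c) * x * (b⁻¹ * c)⁻¹) * b⁻¹ := by group
      rw [this, hcomm _ hbc x hx]
      group
  -- thus conjugatesOf x = {x, b*x*b⁻¹} for x ∈ A
  have hcl : ∀ x ∈ A, conjugatesOf x = {x, b * x * b⁻¹} := by
    intro x hx
    ext y
    simp only [conjugatesOf, Set.mem_setOf_eq, isConj_iff, Set.mem_insert_iff,
      Set.mem_singleton_iff]
    constructor
    · rintro ⟨c, rfl⟩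
      exact key x hx c
    · rintro (rfl | rfl)
      · exact ⟨1, by group⟩
      · exact ⟨b, rfl⟩
  have haa' : a * a' ∈ A := A.mul_mem ha ha'
  have hca' : b * a' * b⁻¹ ∈ A := hconjA a' ha'
  have haca' : a * (b * a' * b⁻¹) ∈ A := A.mul_mem ha hca'
  -- b² commutes with a'
  have hbb : b * b * a' = a' * (b * b) := hcomm _ hb2 _ ha'
  have hconj2 : b * (a * (b * a' * b⁻¹)) * b⁻¹ = (b * a * b⁻¹) * a' := by
    have : b * (a * (b * a' * b⁻¹)) * b⁻¹
        = (b * a * b⁻¹) * ((b * b) * a' * (b * b)⁻¹) := by group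
    rw [this, hbb]; group
  have hconj1 : b * (a * a') * b⁻¹ = (b * a * b⁻¹) * (b * a' * b⁻¹) := by group
  constructor
  · rw [hcl a ha, hcl a' ha', hcl _ haa', hcl _ haca', hconj1, hconj2]
    ext x
    simp only [Set.mem_mul, Set.mem_insert_iff, Set.mem_singleton_iff, Set.mem_union]
    constructor
    · rintro ⟨y, (rfl | rfl), z, (rfl | rfl), rfl⟩ <;> tauto
    · rintro ((rfl | rfl) | (rfl | rfl))
      · exact ⟨a, Or.inl rfl, a', Or.inl rfl, rfl⟩
      · exact ⟨_, Or.inr rfl, _, Or.inr rfl, rfl⟩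
      · exact ⟨a, Or.inl rfl, _, Or.inr rfl, rfl⟩
      · exact ⟨_, Or.inr rfl, a', Or.inl rfl, rfl⟩
  · intro h
    rw [hcl _ haa', hcl _ haca', hconj1, hconj2] at h
    have : a * a' ∈ ({a * (b * a' * b⁻¹), (b * a * b⁻¹) * a'} : Set G) := by
      rw [← h]; exact Or.inl rfl
    rcases this with h1 | h1
    · exact hmove' (mul_left_cancel h1).symm
    · exact hmove (mul_right_cancel h1).symm
end
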